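/- arXiv:2206.04545 — 11 statements merged into one kernel-verified Lean document; each statement's English description precedes it below -/
import Mathlib

section
/- Let β > 1 and C_f, C_g > 0. Suppose f, g : ℝ → ℂ are measurable functions satisfying |f(μ)| ≤ C_f (1+|μ|)^{-(β+1)} and |g(μ)| ≤ C_g (1+|μ|)^{-(β+1)} for all μ ∈ ℝ. Then there exists a constant C > 0, depending only on β, such that for every λ ∈ ℝ one has ∫_ℝ |μ| |f(μ)| |g(μ−λ)| dμ ≤ C · C_f C_g (1+|λ|)^{-β}. -/
open MeasureTheory Real

/-- Convolution-decay estimate: if `f` and `g` decay like `(1+|μ|)^{-(β+1)}`, then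
`∫ |μ| |f(μ)| |g(μ-λ)| dμ` decays like `(1+|λ|)^{-β}`, with a constant depending only on `β`. -/
theorem stmt0 (β : ℝ) (hβ : 1 < β) :
    ∃ C > 0, ∀ (Cf Cg : ℝ), 0 < Cf → 0 < Cg → ∀ f g : ℝ → ℂ,
      Measurable f → Measurable g →
      (∀ μ : ℝ, ‖f μ‖ ≤ Cf * (1 + |μ|) ^ (-(β + 1))) →
      (∀ μ : ℝ, ‖g μ‖ ≤ Cg * (1 + |μ|) ^ (-(β + 1))) →
      ∀ lam : ℝ,
        (∫ μ : ℝ, |μ| * ‖f μ‖ * ‖g (μ - lam)‖) ≤ C * Cf * Cg * (1 + |lam|) ^ (-β) := by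
  have hI1int : Integrable (fun x : ℝ => (1 + |x|) ^ (-β)) := by
    have := integrable_one_add_norm (E := ℝ) (μ := volume) (r := β) (by simpa using hβ)
    simpa [Real.norm_eq_abs] using this
  have hI2int : Integrable (fun x : ℝ => (1 + |x|) ^ (-(β + 1))) := by
    have := integrable_one_add_norm (E := ℝ) (μ := volume) (r := β + 1)
      (by simp; linarith)
    simpa [Real.norm_eq_abs] using this
  set I1 := ∫ x : ℝ, (1 + |x|) ^ (-β) with hI1def
  set I2 := ∫ x : ℝ, (1 + |x|) ^ (-(β + 1)) with hI2def
  have hI1 : 0 ≤ I1 := integral_nonneg fun x => by positivity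
  have hI2 : 0 ≤ I2 := integral_nonneg fun x => by positivity
  have h2β : (0:ℝ) < 2 ^ β := Real.rpow_pos_of_pos two_pos β
  refine ⟨2 ^ β * (I1 + I2 + 1), by positivity, ?_⟩
  intro Cf Cg hCf hCg f g hf hg hfb hgb lam
  have hlam : (0:ℝ) < 1 + |lam| := by positivity
  set K := (1 + |lam|) ^ (-β) with hKdef
  have hK : 0 ≤ K := Real.rpow_nonneg hlam.le _
  -- key pointwise bound
  have core : ∀ μ : ℝ, (1 + |μ|) ^ (-β) * (1 + |μ - lam|) ^ (-(β + 1)) ≤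
      2 ^ β * K * ((1 + |μ|) ^ (-β) + (1 + |μ - lam|) ^ (-(β + 1))) := by
    intro μ
    have h1 : (0:ℝ) < 1 + |μ| := by positivity
    have h2 : (0:ℝ) < 1 + |μ - lam| := by positivity
    have htri : 1 + |lam| ≤ (1 + |μ|) + (1 + |μ - lam|) := by
      have h3 : |lam| ≤ |lam - μ| + |μ| := by simpa using abs_sub_le lam μ 0
      have h4 : |lam - μ| = |μ - lam| := abs_sub_comm lam μ
      linarith
    have hhalf : ((1 + |lam|) / 2) ^ (-β) = 2 ^ β * K := by
      rw [Real.div_rpow hlam.le (by norm_num),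
        Real.rpow_neg (by norm_num : (0:ℝ) ≤ 2) β, div_eq_mul_inv, inv_inv, hKdef]
      ring
    rcases le_total (1 + |μ - lam|) (1 + |μ|) with h | h
    · have hge : (1 + |lam|) / 2 ≤ 1 + |μ| := by linarith
      have hb : (1 + |μ|) ^ (-β) ≤ 2 ^ β * K := by
        rw [← hhalf]
        exact Real.rpow_le_rpow_of_nonpos (by linarith) hge (by linarith)
      calc (1 + |μ|) ^ (-β) * (1 + |μ - lam|) ^ (-(β + 1))
          ≤ 2 ^ β * K * (1 + |μ - lam|) ^ (-(β + 1)) := by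
            apply mul_le_mul_of_nonneg_right hb (Real.rpow_nonneg h2.le _)
        _ ≤ 2 ^ β * K * ((1 + |μ|) ^ (-β) + (1 + |μ - lam|) ^ (-(β + 1))) := by
            apply mul_le_mul_of_nonneg_left _ (by positivity)
            have : (0:ℝ) ≤ (1 + |μ|) ^ (-β) := Real.rpow_nonneg h1.le _
            linarith
    · have hge : (1 + |lam|) / 2 ≤ 1 + |μ - lam| := by linarith
      have hb : (1 + |μ - lam|) ^ (-(β + 1)) ≤ 2 ^ β * K := by
        have hb1 : (1 + |μ - lam|) ^ (-(β + 1)) ≤ (1 + |μ - lam|) ^ (-β) :=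
          Real.rpow_le_rpow_of_exponent_le (by linarith [abs_nonneg (μ - lam)])
            (by linarith)
        have hb2 : (1 + |μ - lam|) ^ (-β) ≤ 2 ^ β * K := by
          rw [← hhalf]
          exact Real.rpow_le_rpow_of_nonpos (by linarith) hge (by linarith)
        linarith
      calc (1 + |μ|) ^ (-β) * (1 + |μ - lam|) ^ (-(β + 1))
          ≤ (1 + |μ|) ^ (-β) * (2 ^ β * K) := by
            apply mul_le_mul_of_nonneg_left hb (Real.rpow_nonneg h1.le _)
        _ ≤ 2 ^ β * K * ((1 + |μ|) ^ (-β) + (1 + |μ - lam|) ^ (-(β + 1))) := by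
            have h3 : (0:ℝ) ≤ (1 + |μ - lam|) ^ (-(β + 1)) := Real.rpow_nonneg h2.le _
            nlinarith [Real.rpow_nonneg h1.le (-β), mul_nonneg h2β.le hK]
  have key : ∀ μ : ℝ, |μ| * ‖f μ‖ * ‖g (μ - lam)‖ ≤
      Cf * Cg * (2 ^ β * K) * ((1 + |μ|) ^ (-β) + (1 + |μ - lam|) ^ (-(β + 1))) := by
    intro μ
    have h1 : (0:ℝ) < 1 + |μ| := by positivity
    have h2 : (0:ℝ) < 1 + |μ - lam| := by positivity
    have step2 : |μ| * (1 + |μ|) ^ (-(β + 1)) ≤ (1 + |μ|) ^ (-β) := by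
      have hμ : |μ| ≤ 1 + |μ| := by linarith [abs_nonneg μ]
      calc |μ| * (1 + |μ|) ^ (-(β + 1))
          ≤ (1 + |μ|) * (1 + |μ|) ^ (-(β + 1)) := by
            apply mul_le_mul_of_nonneg_right hμ (Real.rpow_nonneg h1.le _)
        _ = (1 + |μ|) ^ (-β) := by
            rw [← Real.rpow_one_add' h1.le (by intro hc; linarith : 1 + -(β+1) ≠ 0)]
            norm_num
    calc |μ| * ‖f μ‖ * ‖g (μ - lam)‖
        ≤ |μ| * (Cf * (1 + |μ|) ^ (-(β + 1))) * (Cg * (1 + |μ - lam|) ^ (-(β + 1))) := by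
          apply mul_le_mul
          · exact mul_le_mul_of_nonneg_left (hfb μ) (abs_nonneg μ)
          · exact hgb (μ - lam)
          · exact norm_nonneg _
          · positivity
      _ = Cf * Cg * ((|μ| * (1 + |μ|) ^ (-(β + 1))) * (1 + |μ - lam|) ^ (-(β + 1))) := by
          ring
      _ ≤ Cf * Cg * ((1 + |μ|) ^ (-β) * (1 + |μ - lam|) ^ (-(β + 1))) := by
          apply mul_le_mul_of_nonneg_left _ (by positivity)
          exact mul_le_mul_of_nonneg_right step2 (Real.rpow_nonneg h2.le _)
      _ ≤ Cf * Cg * (2 ^ β * K * ((1 + |μ|) ^ (-β) + (1 + |μ - lam|) ^ (-(β + 1)))) := by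
          exact mul_le_mul_of_nonneg_left (core μ) (by positivity)
      _ = Cf * Cg * (2 ^ β * K) * ((1 + |μ|) ^ (-β) + (1 + |μ - lam|) ^ (-(β + 1))) := by
          ring
  have hshift : Integrable (fun μ : ℝ => (1 + |μ - lam|) ^ (-(β + 1))) :=
    hI2int.comp_sub_right lam
  have hbnd_int : Integrable (fun μ : ℝ =>
      Cf * Cg * (2 ^ β * K) * ((1 + |μ|) ^ (-β) + (1 + |μ - lam|) ^ (-(β + 1)))) :=
    (hI1int.add hshift).const_mul _
  have hmono := integral_mono_of_nonneg
    (Filter.Eventually.of_forall fun μ => by positivity) hbnd_int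
    (Filter.Eventually.of_forall key)
  have hcomp : (∫ μ : ℝ, Cf * Cg * (2 ^ β * K) *
      ((1 + |μ|) ^ (-β) + (1 + |μ - lam|) ^ (-(β + 1)))) =
      Cf * Cg * (2 ^ β * K) * (I1 + I2) := by
    rw [integral_const_mul, integral_add hI1int hshift,
      integral_sub_right_eq_self (fun x : ℝ => (1 + |x|) ^ (-(β + 1))) lam]
  calc (∫ μ : ℝ, |μ| * ‖f μ‖ * ‖g (μ - lam)‖)
      ≤ Cf * Cg * (2 ^ β * K) * (I1 + I2) := by rw [← hcomp]; exact hmono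
    _ ≤ Cf * Cg * (2 ^ β * K) * (I1 + I2 + 1) := by
        apply mul_le_mul_of_nonneg_left (by linarith) (by positivity)
    _ = 2 ^ β * (I1 + I2 + 1) * Cf * Cg * K := by ring
end

section
/- Assume the curve convention: a > 0 and y : [−a,a] → ℝ² is a C⁴ map such that for every θ ∈ [−a,a], writing θ⃗ = (cos θ, sin θ) and θ⃗⊥ = (−sin θ, cos θ), one has θ⃗·y′(θ) = 0, θ⃗⊥·y′(θ) < 0, and θ⃗·y″(θ) > 0. Suppose A₁ : [−a,a] → (−π/2, π/2) is a C¹ function with A₁(0) = 0 such that (cos A₁(θ), sin A₁(θ))·(y(θ) − y(0)) = 0 for all θ ∈ [−a,a]. Then A₁′(0) = 1/2, and there exist a′ ∈ (0,a] and constants 0 < c₁ ≤ c₂ < 1 such that c₁ ≤ A₁(θ)/θ ≤ c₂ for all θ ∈ [−a′,a′] \ {0} and c₁ ≤ A₁′(θ) ≤ c₂ for all θ ∈ [−a′,a′]. -/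
/-!
Differentiating the chord condition `⟨u(A θ), y θ - y 0⟩ = 0`, with `u α = (cos α, sin α)`,
gives `A'(θ) ⟨u⊥(A θ), y θ - y 0⟩ + ⟨u(A θ), y'(θ)⟩ = 0`. The first inner product vanishes at
`θ = 0`, so this sum can be differentiated once more at `0` knowing only that `A'` is continuous,
which yields `2 A'(0) ⟨u⊥(0), y'(0)⟩ + ⟨u(0), y''(0)⟩ = 0`. Differentiating the tangency condition
`⟨u(θ), y'(θ)⟩ = 0` gives `⟨u⊥(0), y'(0)⟩ + ⟨u(0), y''(0)⟩ = 0`, hence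
`(2 A'(0) - 1) ⟨u⊥(0), y'(0)⟩ = 0`, and `⟨u⊥(0), y'(0)⟩ < 0` forces `A'(0) = 1/2`.
The bounds, with `c₁ = 1/4` and `c₂ = 3/4`, follow from the continuity of `A'` and the mean
value theorem.
-/

open Real Set Filter Topology

/-- `dirDot α v = α⃗ · v` and `perpDot α v = α⃗⊥ · v`. -/
noncomputable def dirDot (α : ℝ) (v : ℝ × ℝ) : ℝ := cos α * v.1 + sin α * v.2

noncomputable def perpDot (α : ℝ) (v : ℝ × ℝ) : ℝ := -sin α * v.1 + cos α * v.2

@[simp]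
lemma dirDot_zero_right (α : ℝ) : dirDot α 0 = 0 := by simp [dirDot]

section Deriv

variable {α : ℝ → ℝ} {f : ℝ → ℝ × ℝ} {α' x : ℝ} {f' : ℝ × ℝ}

lemma HasDerivAt.dirDot (hα : HasDerivAt α α' x) (hf : HasDerivAt f f' x) :
    HasDerivAt (fun t => _root_.dirDot (α t) (f t))
      (α' * _root_.perpDot (α x) (f x) + _root_.dirDot (α x) f') x := by
  refine ((hα.cos.mul hf.fst).add (hα.sin.mul hf.snd)).congr_deriv ?_
  simp only [_root_.perpDot, _root_.dirDot]
  ring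

lemma HasDerivAt.perpDot (hα : HasDerivAt α α' x) (hf : HasDerivAt f f' x) :
    HasDerivAt (fun t => _root_.perpDot (α t) (f t))
      (-(α' * _root_.dirDot (α x) (f x)) + _root_.perpDot (α x) f') x := by
  refine ((hα.sin.neg.mul hf.fst).add (hα.cos.mul hf.snd)).congr_deriv ?_
  simp only [_root_.perpDot, _root_.dirDot, Pi.neg_apply]
  ring

end Deriv

lemma HasDerivAt.eq_zero_of_eventuallyEq_zero {f : ℝ → ℝ} {f' x : ℝ} (hf : HasDerivAt f f' x)
    (h : f =ᶠ[𝓝 x] 0) : f' = 0 :=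
  hf.unique ((hasDerivAt_const x 0).congr_of_eventuallyEq h)

lemma HasDerivAt.continuousAt_mul_of_eq_zero {v g : ℝ → ℝ} {g' x : ℝ} (hg : HasDerivAt g g' x)
    (hg0 : g x = 0) (hv : ContinuousAt v x) :
    HasDerivAt (fun t => v t * g t) (v x * g') x := by
  rw [hasDerivAt_iff_tendsto_slope] at hg ⊢
  refine ((hv.tendsto.mono_left nhdsWithin_le_nhds).mul hg).congr fun t => ?_
  simp only [slope_def_field, hg0, mul_zero]
  ring

lemma perpDot_deriv_add_dirDot_deriv_deriv_eq_zero {y : ℝ → ℝ × ℝ} {x : ℝ}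
    (hy : DifferentiableAt ℝ (deriv y) x) (htang : (fun t => dirDot t (deriv y t)) =ᶠ[𝓝 x] 0) :
    perpDot x (deriv y x) + dirDot x (deriv (deriv y) x) = 0 := by
  have h := (hasDerivAt_id x).dirDot hy.hasDerivAt
  rw [one_mul] at h
  exact h.eq_zero_of_eventuallyEq_zero htang

lemma two_mul_deriv_mul_perpDot_add_dirDot_eq_zero {y : ℝ → ℝ × ℝ} {A : ℝ → ℝ} {x : ℝ}
    (hy : ContDiff ℝ 2 y) (hA : ContDiff ℝ 1 A)
    (hortho : (fun t => dirDot (A t) (y t - y x)) =ᶠ[𝓝 x] 0) :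
    2 * deriv A x * perpDot (A x) (deriv y x) + dirDot (A x) (deriv (deriv y) x) = 0 := by
  have hyd : Differentiable ℝ y := hy.differentiable (by norm_num)
  have hy'd : Differentiable ℝ (deriv y) :=
    (hy.iterate_deriv' 1 1).differentiable (by norm_num)
  have hAd : ∀ t, HasDerivAt A (deriv A t) t :=
    fun t => (hA.differentiable one_ne_zero t).hasDerivAt
  have hchord : ∀ t, HasDerivAt (fun s => y s - y x) (deriv y t) t :=
    fun t => (hyd t).hasDerivAt.sub_const _
  have hderiv_chord : ∀ t, HasDerivAt (fun s => dirDot (A s) (y s - y x))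
      (deriv A t * perpDot (A t) (y t - y x) + dirDot (A t) (deriv y t)) t :=
    fun t => (hAd t).dirDot (hchord t)
  have hderiv_zero : (fun t => deriv A t * perpDot (A t) (y t - y x) + dirDot (A t) (deriv y t))
      =ᶠ[𝓝 x] 0 := by
    filter_upwards [hortho.deriv] with t ht
    rw [← (hderiv_chord t).deriv, ht]
    exact deriv_const t 0
  have hperp := ((hAd x).perpDot (hchord x))
  simp only [sub_self, dirDot_zero_right, mul_zero, neg_zero, zero_add] at hperp
  have h := (hperp.continuousAt_mul_of_eq_zero (by simp [perpDot])
    (hA.continuous_deriv le_rfl).continuousAt).add ((hAd x).dirDot (hy'd x).hasDerivAt)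
  linear_combination h.eq_zero_of_eventuallyEq_zero hderiv_zero

lemma div_mem_of_forall_deriv_mem {g : ℝ → ℝ} (hg : Differentiable ℝ g) (hg0 : g 0 = 0)
    {S : Set ℝ} {ε θ : ℝ} (hS : ∀ ξ ∈ Icc (-ε) ε, deriv g ξ ∈ S) (hθ : θ ∈ Icc (-ε) ε)
    (hθ0 : θ ≠ 0) : g θ / θ ∈ S := by
  rcases hθ0.lt_or_gt with hneg | hpos
  · obtain ⟨ξ, hξ, hslope⟩ :=
      exists_deriv_eq_slope g hneg hg.continuous.continuousOn hg.differentiableOn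
    rw [hg0, zero_sub, zero_sub, neg_div_neg_eq] at hslope
    exact hslope ▸ hS ξ (by constructor <;> linarith [hθ.1, hθ.2, hξ.1, hξ.2])
  · obtain ⟨ξ, hξ, hslope⟩ :=
      exists_deriv_eq_slope g hpos hg.continuous.continuousOn hg.differentiableOn
    rw [hg0, sub_zero, sub_zero] at hslope
    exact hslope ▸ hS ξ (by constructor <;> linarith [hθ.1, hθ.2, hξ.1, hξ.2])

lemma exists_forall_deriv_mem_Icc_and_div_mem_Icc {g : ℝ → ℝ} (hg : ContDiff ℝ 1 g)
    (hg0 : g 0 = 0) {c₁ c₂ : ℝ} (h₁ : c₁ < deriv g 0) (h₂ : deriv g 0 < c₂) :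
    ∃ ε > 0, ∀ θ ∈ Icc (-ε) ε, deriv g θ ∈ Icc c₁ c₂ ∧ (θ ≠ 0 → g θ / θ ∈ Icc c₁ c₂) := by
  have hnear : ∀ᶠ ξ in 𝓝 0, deriv g ξ ∈ Icc c₁ c₂ :=
    (hg.continuous_deriv le_rfl).continuousAt.eventually_mem (Icc_mem_nhds h₁ h₂)
  obtain ⟨ε, hε, hderiv⟩ := (nhds_basis_Icc_pos (0 : ℝ)).eventually_iff.mp hnear
  simp only [zero_sub, zero_add] at hderiv
  exact ⟨ε, hε, fun θ hθ => ⟨hderiv hθ,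
    div_mem_of_forall_deriv_mem (hg.differentiable one_ne_zero) hg0 (fun _ hξ => hderiv hξ) hθ⟩⟩

theorem stmt1_general (a : ℝ) (ha : 0 < a) (y : ℝ → ℝ × ℝ) (hy : ContDiff ℝ 4 y)
    (htang : ∀ θ ∈ Icc (-a) a,
      Real.cos θ * (deriv y θ).1 + Real.sin θ * (deriv y θ).2 = 0)
    (hperp : ∀ θ ∈ Icc (-a) a,
      -Real.sin θ * (deriv y θ).1 + Real.cos θ * (deriv y θ).2 < 0)
    (A₁ : ℝ → ℝ) (hA₁ : ContDiff ℝ 1 A₁)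
    (hA₁0 : A₁ 0 = 0)
    (hortho : ∀ θ ∈ Icc (-a) a,
      Real.cos (A₁ θ) * (y θ - y 0).1 + Real.sin (A₁ θ) * (y θ - y 0).2 = 0) :
    deriv A₁ 0 = 1 / 2 ∧
    ∃ a' ∈ Ioc 0 a, ∃ c₁ c₂ : ℝ, 0 < c₁ ∧ c₁ ≤ c₂ ∧ c₂ < 1 ∧
      (∀ θ ∈ Icc (-a') a', θ ≠ 0 → c₁ ≤ A₁ θ / θ ∧ A₁ θ / θ ≤ c₂) ∧
      (∀ θ ∈ Icc (-a') a', c₁ ≤ deriv A₁ θ ∧ deriv A₁ θ ≤ c₂) := by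
  have hy2 : ContDiff ℝ 2 y := hy.of_le (by norm_num)
  have hnhds : Icc (-a) a ∈ 𝓝 (0 : ℝ) := Icc_mem_nhds (by linarith) ha
  have hs : perpDot 0 (deriv y 0) < 0 := hperp 0 (mem_of_mem_nhds hnhds)
  have htang0 := perpDot_deriv_add_dirDot_deriv_deriv_eq_zero
    ((hy2.iterate_deriv' 1 1).differentiable (by norm_num) 0) (eventually_of_mem hnhds htang)
  have hchord0 := two_mul_deriv_mul_perpDot_add_dirDot_eq_zero hy2 hA₁
    (eventually_of_mem hnhds hortho)
  rw [hA₁0] at hchord0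
  have hL : deriv A₁ 0 = 1 / 2 := by
    have h : perpDot 0 (deriv y 0) * (2 * deriv A₁ 0 - 1) = 0 := by
      linear_combination hchord0 - htang0
    linarith [(mul_eq_zero.mp h).resolve_left hs.ne]
  obtain ⟨ε, hε, hbound⟩ := exists_forall_deriv_mem_Icc_and_div_mem_Icc hA₁ hA₁0
    (c₁ := 1 / 4) (c₂ := 3 / 4) (by rw [hL]; norm_num) (by rw [hL]; norm_num)
  have hsub : Icc (-min ε a) (min ε a) ⊆ Icc (-ε) ε :=
    Icc_subset_Icc (neg_le_neg (min_le_left _ _)) (min_le_left _ _)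
  exact ⟨hL, min ε a, ⟨lt_min hε ha, min_le_right _ _⟩, 1 / 4, 3 / 4, by norm_num, by norm_num,
    by norm_num, fun θ hθ hθ0 => (hbound θ (hsub hθ)).2 hθ0, fun θ hθ => (hbound θ (hsub hθ)).1⟩

/-- Under the curve convention (convex C⁴ curve parametrized by its normal angle),
the critical-direction function `A₁` (the angle whose direction is orthogonal to the
chord `y(θ) - y(0)`) satisfies `A₁'(0) = 1/2`, and `A₁(θ)/θ`, `A₁'(θ)` are bounded
between constants `0 < c₁ ≤ c₂ < 1` near `θ = 0`. -/
theorem stmt1 (a : ℝ) (ha : 0 < a) (y : ℝ → ℝ × ℝ) (hy : ContDiff ℝ 4 y)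
    (htang : ∀ θ ∈ Icc (-a) a,
      Real.cos θ * (deriv y θ).1 + Real.sin θ * (deriv y θ).2 = 0)
    (hperp : ∀ θ ∈ Icc (-a) a,
      -Real.sin θ * (deriv y θ).1 + Real.cos θ * (deriv y θ).2 < 0)
    (hcurv : ∀ θ ∈ Icc (-a) a,
      0 < Real.cos θ * (deriv (deriv y) θ).1 + Real.sin θ * (deriv (deriv y) θ).2)
    (A₁ : ℝ → ℝ) (hA₁ : ContDiff ℝ 1 A₁)
    (hA₁mem : ∀ θ ∈ Icc (-a) a, A₁ θ ∈ Ioo (-(π / 2)) (π / 2))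
    (hA₁0 : A₁ 0 = 0)
    (hortho : ∀ θ ∈ Icc (-a) a,
      Real.cos (A₁ θ) * (y θ - y 0).1 + Real.sin (A₁ θ) * (y θ - y 0).2 = 0) :
    deriv A₁ 0 = 1 / 2 ∧
    ∃ a' ∈ Ioc 0 a, ∃ c₁ c₂ : ℝ, 0 < c₁ ∧ c₁ ≤ c₂ ∧ c₂ < 1 ∧
      (∀ θ ∈ Icc (-a') a', θ ≠ 0 → c₁ ≤ A₁ θ / θ ∧ A₁ θ / θ ≤ c₂) ∧
      (∀ θ ∈ Icc (-a') a', c₁ ≤ deriv A₁ θ ∧ deriv A₁ θ ≤ c₂) :=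
  stmt1_general a ha y hy htang hperp A₁ hA₁ hA₁0 hortho
end

section
/- Assume the curve convention: a > 0 and y : [−a,a] → ℝ² is C⁴ with θ⃗·y′(θ) = 0, θ⃗⊥·y′(θ) < 0, θ⃗·y″(θ) > 0 for all θ ∈ [−a,a], where θ⃗ = (cos θ, sin θ), θ⃗⊥ = (−sin θ, cos θ). Let A₁ : [−a,a] → (−π/2, π/2) be C¹ with A₁(0) = 0 and (cos A₁(θ), sin A₁(θ))·(y(θ) − y(0)) = 0 for all θ. Define R₁(θ,α) := (cos α, sin α)·(y(θ) − y(0)). Then there exist a′ ∈ (0,a] and constants c₁, c₂ > 0 such that for all θ ∈ [−a′,a′] and all α ∈ [−π/2, π/2]: (i) R₁(θ,α) = 0 if and only if θ(A₁(θ) − α) = 0, and if θ(A₁(θ) − α) ≠ 0 then c₁ ≤ R₁(θ,α)/(θ(A₁(θ) − α)) ≤ c₂; (ii) if θ ≠ α then c₁ ≤ ((cos α, sin α)·y′(θ))/(θ − α) ≤ c₂; (iii) |(−sin α, cos α)·(y(θ) − y(0))| ≤ c₂ |θ|. -/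
/-!
The tangency condition says `y'(s) = r(s) • s⃗⊥` with `r(s) = s⃗⊥ · y'(s) < 0`, and the defining
property of `A₁` says `y(θ) - y(0) = ρ(θ) • A₁(θ)⃗⊥`. Hence `α⃗ · y'(θ) = -r(θ) sin(θ - α)` and
`R₁(θ, α) = -ρ(θ) sin(A₁(θ) - α)`, while the mean value theorem gives
`ρ(θ) = θ r(ξ) cos(A₁(θ) - ξ)` for some `ξ` between `0` and `θ`. Once `a'` is so small that
`|A₁|` and `|θ|` stay below `π / 6`, that cosine is at least `1 / 2`; `-r` is pinched between
positive constants by compactness, and `sin t / t ∈ [1 / π, 1]` for `|t| ≤ 2π / 3`.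
-/

open Real Set Filter Topology

noncomputable def dirComp (α : ℝ) (v : ℝ × ℝ) : ℝ := cos α * v.1 + sin α * v.2

noncomputable def perpComp (α : ℝ) (v : ℝ × ℝ) : ℝ := -sin α * v.1 + cos α * v.2

lemma perpComp_sub (α : ℝ) (v w : ℝ × ℝ) :
    perpComp α (v - w) = perpComp α v - perpComp α w := by
  simp only [perpComp, Prod.fst_sub, Prod.snd_sub]; ring

lemma dirComp_eq_of_dirComp_eq_zero {A : ℝ} {v : ℝ × ℝ} (h : dirComp A v = 0) (α : ℝ) :
    dirComp α v = -perpComp A v * sin (A - α) := by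
  simp only [dirComp, perpComp, sin_sub] at *
  linear_combination (cos A * cos α + sin A * sin α) * h -
    (cos α * v.1 + sin α * v.2) * sin_sq_add_cos_sq A

lemma perpComp_eq_of_dirComp_eq_zero {A : ℝ} {v : ℝ × ℝ} (h : dirComp A v = 0) (α : ℝ) :
    perpComp α v = perpComp A v * cos (α - A) := by
  simp only [dirComp, perpComp, cos_sub] at *
  linear_combination (sin A * cos α - cos A * sin α) * h -
    (-sin α * v.1 + cos α * v.2) * sin_sq_add_cos_sq A

lemma abs_perpComp_le_of_dirComp_eq_zero {A : ℝ} {v : ℝ × ℝ} (h : dirComp A v = 0) (α : ℝ) :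
    |perpComp α v| ≤ |perpComp A v| := by
  rw [perpComp_eq_of_dirComp_eq_zero h, abs_mul]
  exact mul_le_of_le_one_right (abs_nonneg _) (abs_cos_le_one _)

lemma HasDerivAt.perpComp {f : ℝ → ℝ × ℝ} {v : ℝ × ℝ} {x : ℝ} (hf : HasDerivAt f v x)
    (α : ℝ) : HasDerivAt (fun t => perpComp α (f t)) (perpComp α v) x :=
  ((hasFDerivAt_fst.comp_hasDerivAt x hf).const_mul _).add
    ((hasFDerivAt_snd.comp_hasDerivAt x hf).const_mul _)

lemma exists_mem_uIcc_sub_eq_mul {f f' : ℝ → ℝ} (hf : ∀ x, HasDerivAt f (f' x) x) (a b : ℝ) :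
    ∃ ξ ∈ uIcc a b, f b - f a = f' ξ * (b - a) := by
  wlog hab : a ≤ b generalizing a b
  · obtain ⟨ξ, hξ, h⟩ := this b a (le_of_not_ge hab)
    exact ⟨ξ, uIcc_comm a b ▸ hξ, by linear_combination -h⟩
  rcases hab.eq_or_lt with rfl | hlt
  · exact ⟨a, left_mem_uIcc, by simp⟩
  obtain ⟨ξ, hξ, h⟩ := exists_hasDerivAt_eq_slope f f' hlt
    (fun x _ => (hf x).continuousAt.continuousWithinAt) (fun x _ => hf x)
  refine ⟨ξ, uIcc_of_le hab ▸ Ioo_subset_Icc_self hξ, ?_⟩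
  rw [h, div_mul_cancel₀ _ (sub_ne_zero.2 hlt.ne')]

lemma sin_div_self_mem_Icc {t : ℝ} (ht0 : t ≠ 0) (ht : |t| ≤ 2 * π / 3) :
    sin t / t ∈ Icc (1 / π) 1 := by
  wlog htpos : 0 < t generalizing t
  · simpa [neg_div_neg_eq] using
      this (neg_ne_zero.2 ht0) (by rwa [abs_neg]) (neg_pos.2 (ht0.lt_or_gt.resolve_right htpos))
  rw [abs_of_pos htpos] at ht
  rw [mem_Icc, le_div_iff₀ htpos, div_le_one htpos]
  refine ⟨?_, sin_le htpos.le⟩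
  have hπ := pi_pos
  rcases le_or_gt t (π / 2) with h | h
  · calc 1 / π * t ≤ 2 / π * t := by gcongr; norm_num
      _ ≤ sin t := mul_le_sin htpos.le h
  · calc 1 / π * t ≤ 2 / π * (π - t) := by
          rw [div_mul_eq_mul_div, div_mul_eq_mul_div, div_le_div_iff_of_pos_right hπ]; linarith
      _ ≤ sin (π - t) := mul_le_sin (by linarith) (by linarith)
      _ = sin t := sin_pi_sub t

lemma one_half_le_cos {x : ℝ} (hx : |x| ≤ π / 3) : 1 / 2 ≤ cos x := by
  rw [← cos_abs, ← cos_pi_div_three]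
  exact cos_le_cos_of_nonneg_of_le_pi (abs_nonneg x) (by linarith [pi_pos]) hx

lemma mul_sin_div_self_mem_Icc {k m M t : ℝ} (hm : 0 ≤ m) (hk : k ∈ Icc m M) (ht0 : t ≠ 0)
    (ht : |t| ≤ 2 * π / 3) : k * sin t / t ∈ Icc (m / π) M := by
  obtain ⟨h₁, h₂⟩ := sin_div_self_mem_Icc ht0 ht
  rw [mul_div_assoc]
  constructor
  · calc m / π = m * (1 / π) := by ring
      _ ≤ k * (sin t / t) := mul_le_mul hk.1 h₁ (by positivity) (hm.trans hk.1)
  · calc k * (sin t / t) ≤ k * 1 := by gcongr; linarith [hk.1]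
      _ = k := mul_one k
      _ ≤ M := hk.2

lemma IsCompact.exists_pos_bounds {X : Type*} [TopologicalSpace X] {K : Set X}
    (hK : IsCompact K) (hne : K.Nonempty) {f : X → ℝ} (hf : ContinuousOn f K)
    (hpos : ∀ x ∈ K, 0 < f x) : ∃ m M, 0 < m ∧ m ≤ M ∧ ∀ x ∈ K, f x ∈ Icc m M := by
  obtain ⟨x₀, hx₀, hmin⟩ := hK.exists_isMinOn hne hf
  obtain ⟨x₁, -, hmax⟩ := hK.exists_isMaxOn hne hf
  exact ⟨f x₀, f x₁, hpos x₀ hx₀, hmax hx₀, fun x hx => ⟨hmin hx, hmax hx⟩⟩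

lemma exists_Icc_forall_of_eventually {p : ℝ → Prop} (h : ∀ᶠ x in 𝓝 0, p x) {a : ℝ}
    (ha : 0 < a) : ∃ a' ∈ Ioc 0 a, ∀ x ∈ Icc (-a') a', p x := by
  obtain ⟨ε, hε, hp⟩ := Metric.eventually_nhds_iff.1 h
  refine ⟨min a (ε / 2), ⟨by positivity, min_le_left _ _⟩, fun x hx => hp ?_⟩
  rw [Real.dist_0_eq_abs]
  exact (abs_le.2 hx).trans_lt ((min_le_right _ _).trans_lt (half_lt_self hε))

lemma Filter.Tendsto.eventually_abs_le {X : Type*} {l : Filter X} {f : X → ℝ}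
    (hf : Tendsto f l (𝓝 0)) {ε : ℝ} (hε : 0 < ε) : ∀ᶠ x in l, |f x| ≤ ε :=
  (Metric.tendsto_nhds.1 hf ε hε).mono fun x hx => by
    rw [Real.dist_0_eq_abs] at hx; exact hx.le

lemma exists_perpComp_sub_eq_mul {y : ℝ → ℝ × ℝ} {S : Set ℝ} {m M β θ : ℝ}
    (hy : Differentiable ℝ y) (htang : ∀ s ∈ S, dirComp s (deriv y s) = 0)
    (hr : ∀ s ∈ S, -perpComp s (deriv y s) ∈ Icc m M) (hm : 0 ≤ m) (hθ : uIcc 0 θ ⊆ S)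
    (hβ : ∀ ξ ∈ uIcc 0 θ, |β - ξ| ≤ π / 3) :
    ∃ k ∈ Icc (m / 2) M, perpComp β (y θ - y 0) = -(k * θ) := by
  obtain ⟨ξ, hξ, hmvt⟩ :=
    exists_mem_uIcc_sub_eq_mul (fun t => (hy t).hasDerivAt.perpComp β) 0 θ
  obtain ⟨hr₁, hr₂⟩ := hr ξ (hθ hξ)
  have hc₁ := one_half_le_cos (hβ ξ hξ)
  have hc₂ := cos_le_one (β - ξ)
  refine ⟨-perpComp ξ (deriv y ξ) * cos (β - ξ), ⟨by nlinarith, by nlinarith⟩, ?_⟩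
  rw [perpComp_sub, hmvt, perpComp_eq_of_dirComp_eq_zero (htang ξ (hθ hξ))]
  ring

lemma mul_mul_sin_eq_zero_iff_and_div_mem_Icc {k m M θ t : ℝ} (hm : 0 < m) (hk : k ∈ Icc m M)
    (ht : |t| ≤ 2 * π / 3) :
    (k * θ * sin t = 0 ↔ θ * t = 0) ∧
      (θ * t ≠ 0 → k * θ * sin t / (θ * t) ∈ Icc (m / π) M) := by
  obtain ⟨ht₁, ht₂⟩ := abs_le.1 ht
  have hπ := pi_pos
  have hsin : sin t = 0 ↔ t = 0 := sin_eq_zero_iff_of_lt_of_lt (by linarith) (by linarith)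
  refine ⟨by simp [(hm.trans_le hk.1).ne', hsin], fun hne => ?_⟩
  obtain ⟨hθ, ht0⟩ := mul_ne_zero_iff.1 hne
  rw [mul_right_comm, mul_comm θ, mul_div_mul_right _ _ hθ]
  exact mul_sin_div_self_mem_Icc hm.le hk ht0 ht

theorem stmt2_general (a : ℝ) (ha : 0 < a) (y : ℝ → ℝ × ℝ) (hy : ContDiff ℝ 4 y)
    (htang : ∀ θ ∈ Icc (-a) a,
      Real.cos θ * (deriv y θ).1 + Real.sin θ * (deriv y θ).2 = 0)
    (hperp : ∀ θ ∈ Icc (-a) a,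
      -Real.sin θ * (deriv y θ).1 + Real.cos θ * (deriv y θ).2 < 0)
    (A₁ : ℝ → ℝ) (hA₁ : ContDiff ℝ 1 A₁)
    (hA₁0 : A₁ 0 = 0)
    (hortho : ∀ θ ∈ Icc (-a) a,
      Real.cos (A₁ θ) * (y θ - y 0).1 + Real.sin (A₁ θ) * (y θ - y 0).2 = 0) :
    ∃ a' ∈ Ioc 0 a, ∃ c₁ c₂ : ℝ, 0 < c₁ ∧ 0 < c₂ ∧
      ∀ θ ∈ Icc (-a') a', ∀ α ∈ Icc (-(π / 2)) (π / 2),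
        ((Real.cos α * (y θ - y 0).1 + Real.sin α * (y θ - y 0).2 = 0 ↔
            θ * (A₁ θ - α) = 0) ∧
          (θ * (A₁ θ - α) ≠ 0 →
            c₁ ≤ (Real.cos α * (y θ - y 0).1 + Real.sin α * (y θ - y 0).2) /
                (θ * (A₁ θ - α)) ∧
            (Real.cos α * (y θ - y 0).1 + Real.sin α * (y θ - y 0).2) /
                (θ * (A₁ θ - α)) ≤ c₂)) ∧
        (θ ≠ α →
          c₁ ≤ (Real.cos α * (deriv y θ).1 + Real.sin α * (deriv y θ).2) / (θ - α) ∧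
          (Real.cos α * (deriv y θ).1 + Real.sin α * (deriv y θ).2) / (θ - α) ≤ c₂) ∧
        |(-Real.sin α) * (y θ - y 0).1 + Real.cos α * (y θ - y 0).2| ≤ c₂ * |θ| := by
  have hdy : Continuous (deriv y) := hy.continuous_deriv (by norm_num)
  obtain ⟨m, M, hm, hmM, hr⟩ :=
    isCompact_Icc.exists_pos_bounds (nonempty_Icc.2 (by linarith))
    (f := fun s => -perpComp s (deriv y s)) (by unfold perpComp; fun_prop)
    fun s hs => neg_pos.2 (hperp s hs)
  have hsmall_near : ∀ᶠ x in 𝓝 0, |A₁ x| ≤ π / 6 ∧ |x| ≤ π / 6 :=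
    ((hA₁.continuous.tendsto' 0 0 hA₁0).eventually_abs_le (by positivity)).and
      (tendsto_id.eventually_abs_le (by positivity))
  obtain ⟨a', ⟨ha', ha'a⟩, hsmall⟩ := exists_Icc_forall_of_eventually hsmall_near ha
  refine ⟨a', ⟨ha', ha'a⟩, m / 2 / π, M, by positivity, hm.trans_le hmM, fun θ hθ α hα => ?_⟩
  have hsub : Icc (-a') a' ⊆ Icc (-a) a := Icc_subset_Icc (neg_le_neg ha'a) ha'a
  have h0θ : uIcc 0 θ ⊆ Icc (-a') a' := uIcc_subset_Icc ⟨by linarith, ha'.le⟩ hθ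
  have hα' := abs_le.2 hα
  obtain ⟨hAθ, hθ'⟩ := hsmall θ hθ
  obtain ⟨k, hk, hchord⟩ := exists_perpComp_sub_eq_mul (hy.differentiable (by norm_num)) htang
    hr hm.le (h0θ.trans hsub) fun ξ hξ =>
      (abs_sub (A₁ θ) ξ).trans (by linarith [(hsmall ξ (h0θ hξ)).2])
  have hR : Real.cos α * (y θ - y 0).1 + Real.sin α * (y θ - y 0).2 =
      k * θ * sin (A₁ θ - α) := by
    rw [← dirComp, dirComp_eq_of_dirComp_eq_zero (hortho θ (hsub hθ)), hchord]; ring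
  refine ⟨?_, fun hne => ?_, ?_⟩
  · rw [hR]
    exact mul_mul_sin_eq_zero_iff_and_div_mem_Icc (half_pos hm) hk
      ((abs_sub (A₁ θ) α).trans (by linarith))
  · rw [← dirComp, dirComp_eq_of_dirComp_eq_zero (htang θ (hsub hθ))]
    exact mul_sin_div_self_mem_Icc (half_pos hm).le
      (Icc_subset_Icc_left (half_le_self hm.le) (hr θ (hsub hθ))) (sub_ne_zero.2 hne)
      ((abs_sub θ α).trans (by linarith))
  · refine (abs_perpComp_le_of_dirComp_eq_zero (hortho θ (hsub hθ)) α).trans ?_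
    rw [hchord, abs_neg, abs_mul, abs_of_nonneg (by linarith [hk.1] : 0 ≤ k)]
    exact mul_le_mul_of_nonneg_right hk.2 (abs_nonneg θ)

/-- Under the curve convention, the phase `R₁(θ,α) = (cos α, sin α)·(y(θ) - y(0))`
is comparable to `θ(A₁(θ) - α)`, its `θ`-derivative is comparable to `θ - α`, and its
`α`-derivative is `O(θ)`, uniformly for `θ` near `0` and `α ∈ [-π/2, π/2]`. -/
theorem stmt2 (a : ℝ) (ha : 0 < a) (y : ℝ → ℝ × ℝ) (hy : ContDiff ℝ 4 y)
    (htang : ∀ θ ∈ Icc (-a) a,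
      Real.cos θ * (deriv y θ).1 + Real.sin θ * (deriv y θ).2 = 0)
    (hperp : ∀ θ ∈ Icc (-a) a,
      -Real.sin θ * (deriv y θ).1 + Real.cos θ * (deriv y θ).2 < 0)
    (hcurv : ∀ θ ∈ Icc (-a) a,
      0 < Real.cos θ * (deriv (deriv y) θ).1 + Real.sin θ * (deriv (deriv y) θ).2)
    (A₁ : ℝ → ℝ) (hA₁ : ContDiff ℝ 1 A₁)
    (hA₁mem : ∀ θ ∈ Icc (-a) a, A₁ θ ∈ Ioo (-(π / 2)) (π / 2))
    (hA₁0 : A₁ 0 = 0)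
    (hortho : ∀ θ ∈ Icc (-a) a,
      Real.cos (A₁ θ) * (y θ - y 0).1 + Real.sin (A₁ θ) * (y θ - y 0).2 = 0) :
    ∃ a' ∈ Ioc 0 a, ∃ c₁ c₂ : ℝ, 0 < c₁ ∧ 0 < c₂ ∧
      ∀ θ ∈ Icc (-a') a', ∀ α ∈ Icc (-(π / 2)) (π / 2),
        ((Real.cos α * (y θ - y 0).1 + Real.sin α * (y θ - y 0).2 = 0 ↔
            θ * (A₁ θ - α) = 0) ∧
          (θ * (A₁ θ - α) ≠ 0 →
            c₁ ≤ (Real.cos α * (y θ - y 0).1 + Real.sin α * (y θ - y 0).2) /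
                (θ * (A₁ θ - α)) ∧
            (Real.cos α * (y θ - y 0).1 + Real.sin α * (y θ - y 0).2) /
                (θ * (A₁ θ - α)) ≤ c₂)) ∧
        (θ ≠ α →
          c₁ ≤ (Real.cos α * (deriv y θ).1 + Real.sin α * (deriv y θ).2) / (θ - α) ∧
          (Real.cos α * (deriv y θ).1 + Real.sin α * (deriv y θ).2) / (θ - α) ≤ c₂) ∧
        |(-Real.sin α) * (y θ - y 0).1 + Real.cos α * (y θ - y 0).2| ≤ c₂ * |θ| :=
  stmt2_general a ha y hy htang hperp A₁ hA₁ hA₁0 hortho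
end

section
/- Assume the curve convention: a > 0 and y : [−a,a] → ℝ² is C⁴ with θ⃗·y′(θ) = 0, θ⃗⊥·y′(θ) < 0, θ⃗·y″(θ) > 0 for all θ ∈ [−a,a]. Let A₁ : [−a,a] → (−π/2, π/2) be C¹ with A₁(0) = 0 and (cos A₁(θ), sin A₁(θ))·(y(θ) − y(0)) = 0 for all θ. Then there exist a′ ∈ (0,a], δ ∈ (0,1), and constants c₂ ≥ c₁ > 0 and c′ > 1 such that for every θ ∈ [−a′,a′] and every α ≠ 0 with |A₁(θ) − α| ≤ δ|α|, one has: θ/α ≥ c′; c₁ ≤ ((cos α, sin α)·y′(θ))/α ≤ c₂; and c₁ ≤ −((−sin α, cos α)·(y(θ) − y(0)))/θ ≤ c₂. -/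
/-!
Write `b = -y'₂(0) > 0`. The tangency condition gives `y'₁(θ) = -tan θ · y'₂(θ) ≈ bθ`, hence
`(y(θ) - y(0))₁ ≈ bθ²/2` and `(y(θ) - y(0))₂ ≈ -bθ`, and the orthogonality relation
`tan A₁(θ) = -(y(θ) - y(0))₁ / (y(θ) - y(0))₂` gives `A₁(θ) ≈ θ/2`.
Along the filter of pairs `(θ, α)` with `θ → 0` and `A₁(θ)/α → 1` one then has `θ/α → 2`,
`∂_θR₁/α → 2b - b = b` and `-∂_αR₁/θ → b`. An eventual statement along that filter holds for
all `|θ| < ε` and `|A₁(θ) - α| ≤ δ|α|` once `ε` and `δ` are small.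
-/

open Real Set Filter Topology

lemma hasDerivAt_zero_iff_tendsto_div {f : ℝ → ℝ} {c : ℝ} (hf : f 0 = 0) :
    HasDerivAt f c 0 ↔ Tendsto (fun t => f t / t) (𝓝[≠] 0) (𝓝 c) := by
  rw [hasDerivAt_iff_tendsto_slope]
  exact tendsto_congr fun t => by rw [slope_def_field, hf, sub_zero, sub_zero]

lemma tendsto_sin_div_self : Tendsto (fun t => sin t / t) (𝓝[≠] 0) (𝓝 1) := by
  simpa using (hasDerivAt_zero_iff_tendsto_div sin_zero).1 (hasDerivAt_sin 0)

lemma tendsto_div_self_of_cos_mul_add_sin_mul_eq_zero {f g : ℝ → ℝ} (hg : ContinuousAt g 0)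
    (hfg : ∀ᶠ t in 𝓝 0, cos t * f t + sin t * g t = 0) :
    Tendsto (fun t => f t / t) (𝓝[≠] 0) (𝓝 (-g 0)) := by
  have hcos : Tendsto cos (𝓝[≠] 0) (𝓝 1) := by
    simpa using continuous_cos.continuousAt.tendsto.mono_left (nhdsWithin_le_nhds (a := (0 : ℝ)))
  have hlim := (tendsto_sin_div_self.mul (hg.tendsto.mono_left nhdsWithin_le_nhds)).neg.div hcos
    one_ne_zero
  rw [one_mul, div_one] at hlim
  refine hlim.congr' ?_
  filter_upwards [nhdsWithin_le_nhds hfg, hcos.eventually_ne one_ne_zero,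
    self_mem_nhdsWithin] with t ht hct (ht0 : t ≠ 0)
  simp only [Pi.div_apply]
  field_simp
  linarith

lemma tendsto_div_sq_of_tendsto_deriv_div_self {f f' : ℝ → ℝ} {c : ℝ}
    (hf : ∀ᶠ t in 𝓝 0, HasDerivAt f (f' t) t) (hf0 : f 0 = 0)
    (hf' : Tendsto (fun t => f' t / t) (𝓝[≠] 0) (𝓝 c)) :
    Tendsto (fun t => f t / t ^ 2) (𝓝[≠] 0) (𝓝 (c / 2)) := by
  refine HasDerivAt.lhopital_zero_nhdsNE (nhdsWithin_le_nhds hf)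
    (Eventually.of_forall fun t => by simpa using hasDerivAt_pow 2 t) ?_ ?_ ?_ ?_
  · filter_upwards [self_mem_nhdsWithin] with t (ht : t ≠ 0)
    simpa using ht
  · simpa [hf0] using hf.self_of_nhds.continuousAt.tendsto.mono_left nhdsWithin_le_nhds
  · simpa using ((continuous_pow 2).tendsto (0 : ℝ)).mono_left nhdsWithin_le_nhds
  · simpa [div_div, mul_comm] using hf'.div_const 2

lemma tendsto_div_self_of_tan_eq {A u : ℝ → ℝ} {L : ℝ} (hu0 : u 0 = 0)
    (hu : Tendsto (fun t => u t / t) (𝓝[≠] 0) (𝓝 L))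
    (hA : ∀ᶠ t in 𝓝[≠] 0, A t ∈ Ioo (-(π / 2)) (π / 2) ∧ tan (A t) = u t) :
    Tendsto (fun t => A t / t) (𝓝[≠] 0) (𝓝 L) := by
  have harctan : HasDerivAt (fun t => arctan (u t)) L 0 := by
    simpa [hu0] using ((hasDerivAt_zero_iff_tendsto_div hu0).2 hu).arctan
  refine ((hasDerivAt_zero_iff_tendsto_div (by simp [hu0])).1 harctan).congr' ?_
  filter_upwards [hA] with t ⟨hmem, htan⟩
  rw [← htan, arctan_tan hmem.1 hmem.2]

section Curve

variable {y : ℝ → ℝ × ℝ}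

lemma tendsto_chord_div_self (hy : DifferentiableAt ℝ y 0) :
    Tendsto (fun t => t⁻¹ • (y t - y 0)) (𝓝[≠] 0) (𝓝 (deriv y 0)) := by
  refine hy.hasDerivAt.tendsto_slope.congr fun t => ?_
  rw [slope_def_module, sub_zero]

lemma tendsto_chord_fst_div_self (hy : DifferentiableAt ℝ y 0) :
    Tendsto (fun t => (y t - y 0).1 / t) (𝓝[≠] 0) (𝓝 (deriv y 0).1) := by
  simpa only [Prod.smul_fst, smul_eq_mul, inv_mul_eq_div] using
    (tendsto_chord_div_self hy).fst_nhds

lemma tendsto_chord_snd_div_self (hy : DifferentiableAt ℝ y 0) :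
    Tendsto (fun t => (y t - y 0).2 / t) (𝓝[≠] 0) (𝓝 (deriv y 0).2) := by
  simpa only [Prod.smul_snd, smul_eq_mul, inv_mul_eq_div] using
    (tendsto_chord_div_self hy).snd_nhds

lemma tendsto_deriv_fst_div_self (hy : ContDiff ℝ 1 y)
    (htang : ∀ᶠ t in 𝓝 0, cos t * (deriv y t).1 + sin t * (deriv y t).2 = 0) :
    Tendsto (fun t => (deriv y t).1 / t) (𝓝[≠] 0) (𝓝 (-(deriv y 0).2)) :=
  tendsto_div_self_of_cos_mul_add_sin_mul_eq_zero
    (continuous_snd.comp (hy.continuous_deriv le_rfl)).continuousAt htang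

lemma tendsto_chord_fst_div_sq (hy : ContDiff ℝ 1 y)
    (htang : ∀ᶠ t in 𝓝 0, cos t * (deriv y t).1 + sin t * (deriv y t).2 = 0) :
    Tendsto (fun t => (y t - y 0).1 / t ^ 2) (𝓝[≠] 0) (𝓝 (-(deriv y 0).2 / 2)) := by
  refine tendsto_div_sq_of_tendsto_deriv_div_self (Eventually.of_forall fun t => ?_) (by simp)
    (tendsto_deriv_fst_div_self hy htang)
  have hyt := ((hy.differentiable one_ne_zero t).hasDerivAt.sub_const (y 0)).hasFDerivAt.fst
  simpa using hyt.hasDerivAt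

lemma tendsto_critical_angle_div_self {A : ℝ → ℝ} (hy : ContDiff ℝ 1 y)
    (htang : ∀ᶠ t in 𝓝 0, cos t * (deriv y t).1 + sin t * (deriv y t).2 = 0)
    (hy0 : (deriv y 0).2 ≠ 0)
    (hA : ∀ᶠ t in 𝓝 0, A t ∈ Ioo (-(π / 2)) (π / 2) ∧
      cos (A t) * (y t - y 0).1 + sin (A t) * (y t - y 0).2 = 0) :
    Tendsto (fun t => A t / t) (𝓝[≠] 0) (𝓝 (1 / 2)) := by
  have hz₂ := tendsto_chord_snd_div_self (hy.differentiable one_ne_zero 0)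
  have hu : Tendsto (fun t => -((y t - y 0).1 / (y t - y 0).2) / t) (𝓝[≠] 0) (𝓝 (1 / 2)) := by
    have hlim := ((tendsto_chord_fst_div_sq hy htang).div hz₂ hy0).neg
    rw [show -(-(deriv y 0).2 / 2 / (deriv y 0).2) = 1 / 2 by field_simp] at hlim
    refine hlim.congr' ?_
    filter_upwards [self_mem_nhdsWithin] with t (ht : t ≠ 0)
    simp only [Pi.div_apply]
    field_simp
  refine tendsto_div_self_of_tan_eq (by simp) hu ?_
  filter_upwards [nhdsWithin_le_nhds hA, hz₂.eventually_ne hy0] with t ⟨hmem, horth⟩ hz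
  have hz₂t : (y t - y 0).2 ≠ 0 := fun h => hz (by rw [h, zero_div])
  refine ⟨hmem, ?_⟩
  rw [tan_eq_sin_div_cos, div_eq_iff (cos_pos_of_mem_Ioo hmem).ne']
  field_simp
  linarith

end Curve

noncomputable def nearCritical (A : ℝ → ℝ) : Filter (ℝ × ℝ) :=
  comap Prod.fst (𝓝[≠] 0) ⊓ comap (fun x => A x.1 / x.2) (𝓝 1)

section NearCritical

variable {A : ℝ → ℝ} {κ : ℝ}

lemma tendsto_fst_nearCritical : Tendsto Prod.fst (nearCritical A) (𝓝[≠] 0) :=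
  tendsto_comap.mono_left inf_le_left

lemma tendsto_div_nearCritical : Tendsto (fun x => A x.1 / x.2) (nearCritical A) (𝓝 1) :=
  tendsto_comap.mono_left inf_le_right

lemma eventually_snd_ne_zero_nearCritical : ∀ᶠ x in nearCritical A, x.2 ≠ 0 := by
  filter_upwards [tendsto_div_nearCritical.eventually_ne one_ne_zero] with x hx h
  exact hx (by rw [h, div_zero])

lemma tendsto_fst_div_snd_nearCritical (hA : Tendsto (fun t => A t / t) (𝓝[≠] 0) (𝓝 κ))
    (hκ : κ ≠ 0) : Tendsto (fun x => x.1 / x.2) (nearCritical A) (𝓝 κ⁻¹) := by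
  have hAθ := hA.comp (tendsto_fst_nearCritical (A := A))
  have hlim := tendsto_div_nearCritical.div hAθ hκ
  rw [one_div] at hlim
  refine hlim.congr' ?_
  filter_upwards [hAθ.eventually_ne hκ, eventually_snd_ne_zero_nearCritical,
    tendsto_fst_nearCritical self_mem_nhdsWithin] with x hx hα (hθ : x.1 ≠ 0)
  have hAx : A x.1 ≠ 0 := fun h => hx (by simp [h])
  simp only [Pi.div_apply, Function.comp_apply]
  field_simp

lemma tendsto_snd_nearCritical (hA : Tendsto (fun t => A t / t) (𝓝[≠] 0) (𝓝 κ))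
    (hκ : κ ≠ 0) : Tendsto Prod.snd (nearCritical A) (𝓝[≠] 0) := by
  refine tendsto_nhdsWithin_iff.2 ⟨?_, eventually_snd_ne_zero_nearCritical⟩
  have hlim := (tendsto_nhds_of_tendsto_nhdsWithin tendsto_fst_nearCritical).div
    (tendsto_fst_div_snd_nearCritical hA hκ) (inv_ne_zero hκ)
  rw [zero_div] at hlim
  refine hlim.congr' ?_
  filter_upwards [tendsto_fst_nearCritical self_mem_nhdsWithin] with x (hθ : x.1 ≠ 0)
  exact div_div_cancel₀ hθ

lemma tendsto_cos_mul_add_sin_mul_div_snd_nearCritical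
    (hA : Tendsto (fun t => A t / t) (𝓝[≠] 0) (𝓝 κ)) (hκ : κ ≠ 0) {f g : ℝ → ℝ} {p q : ℝ}
    (hf : Tendsto (fun t => f t / t) (𝓝[≠] 0) (𝓝 p)) (hg : Tendsto g (𝓝[≠] 0) (𝓝 q)) :
    Tendsto (fun x : ℝ × ℝ => (cos x.2 * f x.1 + sin x.2 * g x.1) / x.2) (nearCritical A)
      (𝓝 (p * κ⁻¹ + q)) := by
  have hα := tendsto_snd_nearCritical hA hκ
  have hcos : Tendsto (fun x : ℝ × ℝ => cos x.2) (nearCritical A) (𝓝 1) := by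
    simpa [Function.comp_def] using
      (continuous_cos.tendsto 0).comp (tendsto_nhds_of_tendsto_nhdsWithin hα)
  have hlim := ((hcos.mul (hf.comp tendsto_fst_nearCritical)).mul
    (tendsto_fst_div_snd_nearCritical hA hκ)).add
      ((tendsto_sin_div_self.comp hα).mul (hg.comp tendsto_fst_nearCritical))
  rw [one_mul, one_mul] at hlim
  refine hlim.congr' ?_
  filter_upwards [tendsto_fst_nearCritical self_mem_nhdsWithin] with x (hθ : x.1 ≠ 0)
  simp only [Function.comp_apply]
  field_simp

lemma tendsto_neg_sin_mul_add_cos_mul_div_fst_nearCritical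
    (hA : Tendsto (fun t => A t / t) (𝓝[≠] 0) (𝓝 κ)) (hκ : κ ≠ 0) {f g : ℝ → ℝ} {p q : ℝ}
    (hf : Tendsto (fun t => f t / t) (𝓝[≠] 0) (𝓝 p))
    (hg : Tendsto (fun t => g t / t) (𝓝[≠] 0) (𝓝 q)) :
    Tendsto (fun x : ℝ × ℝ => -((-sin x.2 * f x.1 + cos x.2 * g x.1) / x.1)) (nearCritical A)
      (𝓝 (-q)) := by
  have hα := tendsto_nhds_of_tendsto_nhdsWithin (tendsto_snd_nearCritical hA hκ)
  have hlim := (((continuous_sin.tendsto 0).comp hα).mul (hf.comp tendsto_fst_nearCritical)).sub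
    (((continuous_cos.tendsto 0).comp hα).mul (hg.comp tendsto_fst_nearCritical))
  rw [sin_zero, cos_zero, zero_mul, one_mul, zero_sub] at hlim
  refine hlim.congr fun x => ?_
  simp only [Function.comp_apply]
  ring

lemma exists_forall_of_eventually_nearCritical (hA0 : A 0 = 0) {P : ℝ × ℝ → Prop}
    (h : ∀ᶠ x in nearCritical A, P x) :
    ∃ ε > 0, ∃ δ ∈ Ioo (0 : ℝ) 1,
      ∀ θ, |θ| < ε → ∀ α, α ≠ 0 → |A θ - α| ≤ δ * |α| → P (θ, α) := by
  have hbasis :=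
    ((nhdsWithin_hasBasis (Metric.nhds_basis_ball (x := (0 : ℝ))) {0}ᶜ).comap Prod.fst).inf
      ((Metric.nhds_basis_ball (x := (1 : ℝ))).comap fun x : ℝ × ℝ => A x.1 / x.2)
  obtain ⟨⟨ε, η⟩, ⟨hε, hη⟩, hP⟩ := hbasis.eventually_iff.1 h
  have hδ : min (η / 2) (1 / 2) < 1 := (min_le_right _ _).trans_lt (by norm_num)
  refine ⟨ε, hε, min (η / 2) (1 / 2), ⟨by positivity, hδ⟩, fun θ hθ α hα hclose => ?_⟩
  have hα' : 0 < |α| := abs_pos.2 hα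
  have hθ0 : θ ≠ 0 := by
    rintro rfl
    rw [hA0, zero_sub, abs_neg] at hclose
    nlinarith
  refine hP (x := (θ, α)) ⟨⟨by simpa using hθ, hθ0⟩, ?_⟩
  show dist (A θ / α) 1 < η
  rw [dist_eq_norm, Real.norm_eq_abs, div_sub_one hα, abs_div, div_lt_iff₀ hα']
  nlinarith [min_le_left (η / 2) (1 / 2)]

end NearCritical

section CurveNearCritical

variable {y : ℝ → ℝ × ℝ} {A : ℝ → ℝ}

lemma tendsto_cos_mul_deriv_add_div_nearCritical (hy : ContDiff ℝ 1 y)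
    (htang : ∀ᶠ t in 𝓝 0, cos t * (deriv y t).1 + sin t * (deriv y t).2 = 0)
    (hA : Tendsto (fun t => A t / t) (𝓝[≠] 0) (𝓝 (1 / 2))) :
    Tendsto (fun x : ℝ × ℝ => (cos x.2 * (deriv y x.1).1 + sin x.2 * (deriv y x.1).2) / x.2)
      (nearCritical A) (𝓝 (-(deriv y 0).2)) := by
  have hy'₂ : Tendsto (fun t => (deriv y t).2) (𝓝[≠] 0) (𝓝 (deriv y 0).2) :=
    ((continuous_snd.comp (hy.continuous_deriv le_rfl)).tendsto 0).mono_left nhdsWithin_le_nhds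
  have hlim := tendsto_cos_mul_add_sin_mul_div_snd_nearCritical hA (by norm_num)
    (tendsto_deriv_fst_div_self hy htang) hy'₂
  rwa [show -(deriv y 0).2 * (1 / 2)⁻¹ + (deriv y 0).2 = -(deriv y 0).2 by ring] at hlim

lemma tendsto_neg_sin_mul_chord_add_div_nearCritical (hy : DifferentiableAt ℝ y 0)
    (hA : Tendsto (fun t => A t / t) (𝓝[≠] 0) (𝓝 (1 / 2))) :
    Tendsto (fun x : ℝ × ℝ => -((-sin x.2 * (y x.1 - y 0).1 + cos x.2 * (y x.1 - y 0).2) / x.1))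
      (nearCritical A) (𝓝 (-(deriv y 0).2)) :=
  tendsto_neg_sin_mul_add_cos_mul_div_fst_nearCritical hA (by norm_num)
    (tendsto_chord_fst_div_self hy) (tendsto_chord_snd_div_self hy)

end CurveNearCritical

theorem stmt3_general (a : ℝ) (ha : 0 < a) (y : ℝ → ℝ × ℝ) (hy : ContDiff ℝ 4 y)
    (htang : ∀ θ ∈ Icc (-a) a,
      Real.cos θ * (deriv y θ).1 + Real.sin θ * (deriv y θ).2 = 0)
    (hperp : ∀ θ ∈ Icc (-a) a,
      -Real.sin θ * (deriv y θ).1 + Real.cos θ * (deriv y θ).2 < 0)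
    (A₁ : ℝ → ℝ)
    (hA₁mem : ∀ θ ∈ Icc (-a) a, A₁ θ ∈ Ioo (-(π / 2)) (π / 2))
    (hA₁0 : A₁ 0 = 0)
    (hortho : ∀ θ ∈ Icc (-a) a,
      Real.cos (A₁ θ) * (y θ - y 0).1 + Real.sin (A₁ θ) * (y θ - y 0).2 = 0) :
    ∃ a' ∈ Ioc 0 a, ∃ δ ∈ Ioo (0 : ℝ) 1, ∃ c₁ c₂ c' : ℝ,
      0 < c₁ ∧ c₁ ≤ c₂ ∧ 1 < c' ∧
      ∀ θ ∈ Icc (-a') a', ∀ α : ℝ, α ≠ 0 → |A₁ θ - α| ≤ δ * |α| →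
        c' ≤ θ / α ∧
        (c₁ ≤ (Real.cos α * (deriv y θ).1 + Real.sin α * (deriv y θ).2) / α ∧
          (Real.cos α * (deriv y θ).1 + Real.sin α * (deriv y θ).2) / α ≤ c₂) ∧
        (c₁ ≤ -(((-Real.sin α) * (y θ - y 0).1 + Real.cos α * (y θ - y 0).2) / θ) ∧
          -(((-Real.sin α) * (y θ - y 0).1 + Real.cos α * (y θ - y 0).2) / θ) ≤ c₂) := by
  have hnear : ∀ᶠ t in 𝓝 0, t ∈ Icc (-a) a := Icc_mem_nhds (by linarith) ha
  have hb : 0 < -(deriv y 0).2 := by simpa using hperp 0 (mem_of_mem_nhds hnear)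
  have hy₁ : ContDiff ℝ 1 y := hy.of_le (by norm_num)
  have hA : Tendsto (fun t => A₁ t / t) (𝓝[≠] 0) (𝓝 (1 / 2)) :=
    tendsto_critical_angle_div_self hy₁ (hnear.mono htang) (neg_pos.1 hb).ne
      (hnear.mono fun t ht => ⟨hA₁mem t ht, hortho t ht⟩)
  have hIcc : Icc (-(deriv y 0).2 / 2) (2 * -(deriv y 0).2) ∈ 𝓝 (-(deriv y 0).2) :=
    Icc_mem_nhds (by linarith) (by linarith)
  obtain ⟨ε, hε, δ, hδ, hbounds⟩ := exists_forall_of_eventually_nearCritical hA₁0 <|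
    ((tendsto_fst_div_snd_nearCritical hA (by norm_num)).eventually_const_le
      (show 3 / 2 < (1 / 2 : ℝ)⁻¹ by norm_num)).and <|
    ((tendsto_cos_mul_deriv_add_div_nearCritical hy₁ (hnear.mono htang) hA).eventually hIcc).and
      ((tendsto_neg_sin_mul_chord_add_div_nearCritical (hy₁.differentiable one_ne_zero 0)
        hA).eventually hIcc)
  refine ⟨min (ε / 2) a, ⟨by positivity, min_le_right _ _⟩, δ, hδ, -(deriv y 0).2 / 2,
    2 * -(deriv y 0).2, 3 / 2, by positivity, by linarith, by norm_num,
    fun θ hθ α hα hclose => hbounds θ ?_ α hα hclose⟩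
  exact (abs_le.2 hθ).trans_lt ((min_le_left _ _).trans_lt (by linarith))

/-- Under the curve convention, near the critical direction (`|A₁(θ) - α| ≤ δ|α|`, `α ≠ 0`)
one has `θ/α ≥ c' > 1`, `∂_θ R₁(θ,α) ≍ α` and `∂_α R₁(θ,α) ≍ -θ`. -/
theorem stmt3 (a : ℝ) (ha : 0 < a) (y : ℝ → ℝ × ℝ) (hy : ContDiff ℝ 4 y)
    (htang : ∀ θ ∈ Icc (-a) a,
      Real.cos θ * (deriv y θ).1 + Real.sin θ * (deriv y θ).2 = 0)
    (hperp : ∀ θ ∈ Icc (-a) a,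
      -Real.sin θ * (deriv y θ).1 + Real.cos θ * (deriv y θ).2 < 0)
    (hcurv : ∀ θ ∈ Icc (-a) a,
      0 < Real.cos θ * (deriv (deriv y) θ).1 + Real.sin θ * (deriv (deriv y) θ).2)
    (A₁ : ℝ → ℝ) (hA₁ : ContDiff ℝ 1 A₁)
    (hA₁mem : ∀ θ ∈ Icc (-a) a, A₁ θ ∈ Ioo (-(π / 2)) (π / 2))
    (hA₁0 : A₁ 0 = 0)
    (hortho : ∀ θ ∈ Icc (-a) a,
      Real.cos (A₁ θ) * (y θ - y 0).1 + Real.sin (A₁ θ) * (y θ - y 0).2 = 0) :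
    ∃ a' ∈ Ioc 0 a, ∃ δ ∈ Ioo (0 : ℝ) 1, ∃ c₁ c₂ c' : ℝ,
      0 < c₁ ∧ c₁ ≤ c₂ ∧ 1 < c' ∧
      ∀ θ ∈ Icc (-a') a', ∀ α : ℝ, α ≠ 0 → |A₁ θ - α| ≤ δ * |α| →
        c' ≤ θ / α ∧
        (c₁ ≤ (Real.cos α * (deriv y θ).1 + Real.sin α * (deriv y θ).2) / α ∧
          (Real.cos α * (deriv y θ).1 + Real.sin α * (deriv y θ).2) / α ≤ c₂) ∧
        (c₁ ≤ -(((-Real.sin α) * (y θ - y 0).1 + Real.cos α * (y θ - y 0).2) / θ) ∧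
          -(((-Real.sin α) * (y θ - y 0).1 + Real.cos α * (y θ - y 0).2) / θ) ≤ c₂) :=
  stmt3_general a ha y hy htang hperp A₁ hA₁mem hA₁0 hortho
end

section
/- Let δ > 0, ρ > 0, L₀ ≥ 1, and L₁ > 0. Then there exists a constant C > 0 with the following property: for every set V ⊂ ℝ such that every interval J ⊂ ℝ of length |J| ≥ L₀ contains at most ρ·|J| points of V, and for all b ≥ 0 and 0 ≤ L ≤ L₁, one has ∫_b^{b+L} ( Σ_{v ∈ V, |v − t| ≤ δ} (1 + t²(v − t)²)^{-1} ) dt ≤ C/(1+b). -/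
/-!
All points of `V` within `δ` of `[b, b + L]` lie in one interval of length `L₀ + L₁ + 2δ`, so
there are at most `N = ρ (L₀ + L₁ + 2δ)` of them. For `t ≥ b ≥ 0` each summand is at most
`min 1 ((1 + b² (v - t)²)⁻¹)`, whose integral `I` satisfies `I ≤ L` and, by the arctangent
primitive, `b I ≤ π`; hence `(1 + b) I ≤ L₁ + π`, and `C = N (L₁ + π)` works.
-/

open MeasureTheory Set Real

theorem tsum_subtype_le_sum_of_subset {β α : Type*} [AddCommMonoid α] [PartialOrder α]
    [IsOrderedAddMonoid α] [TopologicalSpace α] [OrderClosedTopology α]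
    {f : β → α} {s : Set β} {F : Finset β} (hsF : s ⊆ F) (hf : ∀ x ∈ F, 0 ≤ f x) :
    ∑' x : s, f x ≤ ∑ x ∈ F, f x := by
  have : Finite s := (F.finite_toSet.subset hsF).to_subtype
  rw [← Finset.tsum_subtype]
  exact Summable.tsum_le_tsum_of_inj (inclusion hsF) (inclusion_injective hsF)
    (fun c _ => hf c c.2) (fun _ => le_rfl) .of_finite .of_finite

theorem intervalIntegral_mul_inv_one_add_sq_le_pi (c v a a' : ℝ) :
    ∫ t in a..a', c * (1 + (c * (t - v)) ^ 2)⁻¹ ≤ π := by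
  have hderiv : ∀ t ∈ uIcc a a', HasDerivAt (fun t => arctan (c * (t - v)))
      (c * (1 + (c * (t - v)) ^ 2)⁻¹) t := fun t _ => by
    convert (((hasDerivAt_id' t).sub_const v).const_mul c).arctan using 1
    rw [one_div, mul_one, mul_comm]
  have hcont : Continuous fun t => c * (1 + (c * (t - v)) ^ 2)⁻¹ :=
    continuous_const.mul <| Continuous.inv₀ (by fun_prop) fun t => by positivity
  rw [intervalIntegral.integral_eq_sub_of_hasDerivAt hderiv (hcont.intervalIntegrable _ _)]
  linarith [arctan_lt_pi_div_two (c * (a' - v)), neg_pi_div_two_lt_arctan (c * (a - v))]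

theorem setIntegral_Icc_inv_one_add_sq_mul_sq_le (v : ℝ) {b L : ℝ} (hb : 0 ≤ b) (hL : 0 ≤ L) :
    ∫ t in Icc b (b + L), (1 + t ^ 2 * (v - t) ^ 2)⁻¹ ≤ (L + π) / (1 + b) := by
  have hbL : b ≤ b + L := by linarith
  rw [integral_Icc_eq_integral_Ioc, ← intervalIntegral.integral_of_le hbL]
  have hcont : Continuous fun t : ℝ => (1 + t ^ 2 * (v - t) ^ 2)⁻¹ :=
    Continuous.inv₀ (by fun_prop) fun t => by positivity
  have hle_one : ∫ t in b..b + L, (1 + t ^ 2 * (v - t) ^ 2)⁻¹ ≤ L := by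
    have := intervalIntegral.integral_mono_on hbL (hcont.intervalIntegrable _ _)
      (intervalIntegrable_const (μ := volume)) fun t _ => inv_le_one_of_one_le₀ <|
        le_add_of_nonneg_right (by positivity : 0 ≤ t ^ 2 * (v - t) ^ 2)
    simpa using this
  have hle_pi : b * ∫ t in b..b + L, (1 + t ^ 2 * (v - t) ^ 2)⁻¹ ≤ π := by
    have hcont' : Continuous fun t => b * (1 + (b * (t - v)) ^ 2)⁻¹ :=
      continuous_const.mul <| Continuous.inv₀ (by fun_prop) fun t => by positivity
    calc b * ∫ t in b..b + L, (1 + t ^ 2 * (v - t) ^ 2)⁻¹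
        = ∫ t in b..b + L, b * (1 + t ^ 2 * (v - t) ^ 2)⁻¹ :=
          (intervalIntegral.integral_const_mul _ _).symm
      _ ≤ ∫ t in b..b + L, b * (1 + (b * (t - v)) ^ 2)⁻¹ := by
          refine intervalIntegral.integral_mono_on hbL
            ((continuous_const.mul hcont).intervalIntegrable _ _) (hcont'.intervalIntegrable _ _)
            fun t ht => mul_le_mul_of_nonneg_left (inv_anti₀ (by positivity) ?_) hb
          have hsq : b ^ 2 ≤ t ^ 2 := pow_le_pow_left₀ hb ht.1 2
          nlinarith [mul_le_mul_of_nonneg_right hsq (sq_nonneg (v - t))]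
      _ ≤ π := intervalIntegral_mul_inv_one_add_sq_le_pi b v b (b + L)
  rw [le_div_iff₀ (by linarith)]
  linarith

theorem setIntegral_tsum_near_le_card_mul {V : Set ℝ} {δ b L : ℝ} {F : Finset ℝ}
    (hb : 0 ≤ b) (hL : 0 ≤ L)
    (hF : ∀ t ∈ Icc b (b + L), {v | v ∈ V ∧ |v - t| ≤ δ} ⊆ F) :
    ∫ t in Icc b (b + L), ∑' v : {v : ℝ // v ∈ V ∧ |v - t| ≤ δ},
        (1 + t ^ 2 * ((v : ℝ) - t) ^ 2)⁻¹ ≤ F.card * ((L + π) / (1 + b)) := by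
  have hcont (v : ℝ) : Continuous fun t : ℝ => (1 + t ^ 2 * (v - t) ^ 2)⁻¹ :=
    Continuous.inv₀ (by fun_prop) fun t => by positivity
  calc _ ≤ ∫ t in Icc b (b + L), ∑ v ∈ F, (1 + t ^ 2 * (v - t) ^ 2)⁻¹ := by
        refine integral_mono_of_nonneg (.of_forall fun t => tsum_nonneg fun v => by positivity)
          (continuous_finsetSum _ fun v _ => hcont v).integrableOn_Icc ?_
        filter_upwards [ae_restrict_mem measurableSet_Icc] with t ht
        exact tsum_subtype_le_sum_of_subset (f := fun v => (1 + t ^ 2 * (v - t) ^ 2)⁻¹)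
          (hF t ht) fun v _ => by positivity
    _ = ∑ v ∈ F, ∫ t in Icc b (b + L), (1 + t ^ 2 * (v - t) ^ 2)⁻¹ :=
        integral_finsetSum F fun v _ => (hcont v).integrableOn_Icc
    _ ≤ ∑ _v ∈ F, (L + π) / (1 + b) :=
        Finset.sum_le_sum fun v _ => setIntegral_Icc_inv_one_add_sq_mul_sq_le v hb hL
    _ = F.card * ((L + π) / (1 + b)) := by rw [Finset.sum_const, nsmul_eq_mul]

/-- Summation-integration bound: if any interval `J` of length `≥ L₀` contains at most
`ρ|J|` points of `V`, then the integral over `[b, b+L]` of the local sum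
`Σ_{v ∈ V, |v-t| ≤ δ} (1 + t²(v-t)²)⁻¹` is `O((1+b)⁻¹)`, uniformly in `b ≥ 0` and
`0 ≤ L ≤ L₁`. -/
theorem stmt4 (δ ρ L₀ L₁ : ℝ) (hδ : 0 < δ) (hρ : 0 < ρ) (hL₀ : 1 ≤ L₀) (hL₁ : 0 < L₁) :
    ∃ C > 0, ∀ V : Set ℝ,
      (∀ x y : ℝ, L₀ ≤ y - x →
        (V ∩ Icc x y).Finite ∧ ((V ∩ Icc x y).ncard : ℝ) ≤ ρ * (y - x)) →
      ∀ b L : ℝ, 0 ≤ b → 0 ≤ L → L ≤ L₁ →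
        (∫ t in Icc b (b + L),
            ∑' v : {v : ℝ // v ∈ V ∧ |v - t| ≤ δ},
              (1 + t ^ 2 * ((v : ℝ) - t) ^ 2)⁻¹) ≤ C / (1 + b) := by
  set K := L₀ + L₁ + 2 * δ
  refine ⟨ρ * K * (L₁ + π), by positivity, fun V hV b L hb hL hLL₁ => ?_⟩
  obtain ⟨hfin, hcard⟩ := hV (b - δ) (b - δ + K) (by linarith)
  have hF : ∀ t ∈ Icc b (b + L), {v | v ∈ V ∧ |v - t| ≤ δ} ⊆ hfin.toFinset := by
    rintro t ⟨hbt, htL⟩ v ⟨hvV, hvt⟩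
    rw [abs_le] at hvt
    simpa using ⟨hvV, by linarith, by linarith⟩
  have hcardF : (hfin.toFinset.card : ℝ) ≤ ρ * K := by
    rw [← ncard_eq_toFinset_card _ hfin]
    simpa using hcard
  calc _ ≤ hfin.toFinset.card * ((L + π) / (1 + b)) :=
        setIntegral_tsum_near_le_card_mul hb hL hF
    _ ≤ ρ * K * ((L₁ + π) / (1 + b)) := by gcongr
    _ = ρ * K * (L₁ + π) / (1 + b) := by ring
end

section
/- Let 0 < c₁ ≤ c₂ < 1 and δ > 0, and let A : ℝ → ℝ be differentiable with A(0) = 0 and c₁ ≤ A′(t) ≤ c₂ for all t ∈ ℝ. Then there exist constants C > 0 and α₀ ≥ 1 such that for every α ∈ ℝ with |α| ≥ α₀: (i) ∫_{|t| ≤ δ} (1 + t²(A(t) − α)²)^{-1} dt ≤ C/|α|; (ii) ∫_{t ∈ ℝ : |A(t) − α| ≤ δ} (1 + t²(A(t) − α)²)^{-1} dt ≤ C/|α|; (iii) ∫_{t ∈ ℝ : |t| ≥ δ and |A(t) − α| ≥ δ} (1 + t²(A(t) − α)²)^{-1} dt ≤ C/α². -/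
open MeasureTheory Set Real

section helpers

lemma poisson_int (s : ℝ) (hs : 0 < s) (b : ℝ) :
    Integrable (fun t : ℝ => (1 + s ^ 2 * (t - b) ^ 2)⁻¹) := by
  have h1 : Integrable (fun t : ℝ => (1 + (s * t) ^ 2)⁻¹) :=
    integrable_inv_one_add_sq.comp_mul_left' hs.ne'
  have h2 := h1.comp_sub_right b
  refine h2.congr (ae_of_all _ fun t => ?_)
  simp [mul_pow]

lemma poisson_val (s : ℝ) (hs : 0 < s) (b : ℝ) :
    (∫ t : ℝ, (1 + s ^ 2 * (t - b) ^ 2)⁻¹) = π / s := by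
  have h0 : (fun t : ℝ => (1 + s ^ 2 * (t - b) ^ 2)⁻¹)
      = fun t : ℝ => (fun u : ℝ => (1 + (s * u) ^ 2)⁻¹) (t - b) := by
    funext t; simp [mul_pow]
  rw [h0, integral_sub_right_eq_self (fun u : ℝ => (1 + (s * u) ^ 2)⁻¹) b]
  have := MeasureTheory.Measure.integral_comp_mul_left (fun u : ℝ => (1 + u ^ 2)⁻¹) s
  rw [this, integral_univ_inv_one_add_sq, smul_eq_mul, abs_of_pos (inv_pos.2 hs)]
  ring

lemma rpow_eq_invsq {a : ℝ} (ha : 0 < a) : ∀ x ∈ Ioi a, x ^ (-2 : ℝ) = ((x : ℝ) ^ 2)⁻¹ := by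
  intro x hx
  have hx0 : (0:ℝ) ≤ x := (ha.trans hx).le
  rw [show (-2 : ℝ) = -((2:ℕ) : ℝ) by norm_num, Real.rpow_neg hx0, Real.rpow_natCast]

lemma invsq_Ioi_int {a : ℝ} (ha : 0 < a) :
    IntegrableOn (fun t : ℝ => (t ^ 2)⁻¹) (Ioi a) := by
  refine (integrableOn_Ioi_rpow_of_lt (by norm_num) ha).congr_fun
    (fun x hx => rpow_eq_invsq ha x hx) measurableSet_Ioi

lemma invsq_Ioi_val {a : ℝ} (ha : 0 < a) :
    (∫ t in Ioi a, (t ^ 2)⁻¹) = a⁻¹ := by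
  rw [← setIntegral_congr_fun measurableSet_Ioi (rpow_eq_invsq ha),
    integral_Ioi_rpow_of_lt (by norm_num) ha]
  norm_num
  rw [Real.rpow_neg_one]

lemma invsq_base (a : ℝ) (ha : 0 < a) :
    IntegrableOn (fun t : ℝ => (t ^ 2)⁻¹) {u : ℝ | a ≤ |u|} ∧
    (∫ t in {u : ℝ | a ≤ |u|}, (t ^ 2)⁻¹) = 2 / a := by
  have hset : {u : ℝ | a ≤ |u|} = Iic (-a) ∪ Ici a := by
    ext u
    simp only [mem_setOf_eq, mem_union, mem_Iic, mem_Ici, le_abs, le_neg]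
    tauto
  have hIci : IntegrableOn (fun t : ℝ => (t ^ 2)⁻¹) (Ici a) :=
    (integrableOn_Ici_iff_integrableOn_Ioi (by finiteness)).mpr (invsq_Ioi_int ha)
  have hIic : IntegrableOn (fun t : ℝ => (t ^ 2)⁻¹) (Iic (-a)) := by
    rw [← Measure.map_neg_eq_self (volume : Measure ℝ)]
    have m : MeasurableEmbedding fun x : ℝ => -x := (Homeomorph.neg ℝ).measurableEmbedding
    rw [m.integrableOn_map_iff]
    simp only [Function.comp_def, neg_sq]
    rw [show (fun x : ℝ => -x) ⁻¹' (Iic (-a)) = Ici a by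
      ext x; simp [neg_le]]
    exact hIci
  have hdisj : Disjoint (Iic (-a)) (Ici a) := by
    rw [Set.disjoint_left]
    intro x hx1 hx2
    simp only [mem_Iic, mem_Ici] at hx1 hx2
    linarith
  constructor
  · rw [hset]; exact hIic.union hIci
  · rw [hset, setIntegral_union hdisj measurableSet_Ici hIic hIci]
    have h1 : (∫ t in Iic (-a), ((t:ℝ) ^ 2)⁻¹) = a⁻¹ := by
      rw [← integral_comp_neg_Ioi a (fun t : ℝ => (t ^ 2)⁻¹)]
      simp only [neg_sq]
      rw [invsq_Ioi_val ha]
    rw [h1, integral_Ici_eq_integral_Ioi, invsq_Ioi_val ha]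
    ring

lemma invsq_shift (a b : ℝ) (ha : 0 < a) :
    IntegrableOn (fun t : ℝ => ((t - b) ^ 2)⁻¹) {t : ℝ | a ≤ |t - b|} ∧
    (∫ t in {t : ℝ | a ≤ |t - b|}, ((t - b) ^ 2)⁻¹) = 2 / a := by
  have hmp : MeasurePreserving (fun x : ℝ => x - b) volume volume :=
    measurePreserving_sub_right volume b
  have hemb : MeasurableEmbedding (fun x : ℝ => x - b) :=
    (Homeomorph.subRight b).measurableEmbedding
  have hpre : (fun x : ℝ => x - b) ⁻¹' {u : ℝ | a ≤ |u|} = {t : ℝ | a ≤ |t - b|} := rfl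
  have base := invsq_base a ha
  constructor
  · have h := (hmp.restrict_preimage_emb hemb {u : ℝ | a ≤ |u|}).integrable_comp_emb hemb
      (g := fun u : ℝ => (u ^ 2)⁻¹)
    rw [hpre] at h
    exact h.mpr base.1
  · have h := hmp.setIntegral_preimage_emb hemb (fun u : ℝ => (u ^ 2)⁻¹) {u : ℝ | a ≤ |u|}
    rw [hpre] at h
    rw [h, base.2]

lemma main_mono {f g : ℝ → ℝ} {S T : Set ℝ} (hST : S ⊆ T) (hS : MeasurableSet S)
    (hf : Continuous f) (hf0 : ∀ x, 0 ≤ f x) (hg0 : ∀ x, 0 ≤ g x)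
    (hgi : IntegrableOn g T) (hle : ∀ x ∈ S, f x ≤ g x) :
    (∫ x in S, f x) ≤ ∫ x in T, g x := by
  have hfi : IntegrableOn f S := by
    refine Integrable.mono (hgi.mono_set hST) hf.aestronglyMeasurable.restrict ?_
    filter_upwards [ae_restrict_mem hS] with x hx
    rw [Real.norm_eq_abs, Real.norm_eq_abs, abs_of_nonneg (hf0 x), abs_of_nonneg (hg0 x)]
    exact hle x hx
  calc (∫ x in S, f x) ≤ ∫ x in S, g x :=
        setIntegral_mono_on hfi (hgi.mono_set hST) hS hle
    _ ≤ ∫ x in T, g x :=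
        setIntegral_mono_set hgi (ae_of_all _ hg0) (HasSubset.Subset.eventuallyLE hST)

section lip
variable {c₁ c₂ : ℝ} {A : ℝ → ℝ}

lemma lip_lo (hA : Differentiable ℝ A) (hA' : ∀ t, c₁ ≤ deriv A t) :
    ∀ x y : ℝ, x ≤ y → c₁ * (y - x) ≤ A y - A x := by
  intro x y hxy
  have hmono : Monotone fun t => A t - c₁ * t := by
    refine monotone_of_deriv_nonneg (hA.sub (differentiable_id.const_mul c₁)) fun z => ?_
    have h : HasDerivAt (fun t => A t - c₁ * t) (deriv A z - c₁ * 1) z :=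
      ((hA z).hasDerivAt).sub ((hasDerivAt_id z).const_mul c₁)
    rw [h.deriv]
    have := hA' z
    linarith
  have := hmono hxy
  simp only at this
  nlinarith [this]

lemma lip_hi (hA : Differentiable ℝ A) (hA' : ∀ t, deriv A t ≤ c₂) :
    ∀ x y : ℝ, x ≤ y → A y - A x ≤ c₂ * (y - x) := by
  intro x y hxy
  have hmono : Monotone fun t => c₂ * t - A t := by
    refine monotone_of_deriv_nonneg ((differentiable_id.const_mul c₂).sub hA) fun z => ?_
    have h : HasDerivAt (fun t => c₂ * t - A t) (c₂ * 1 - deriv A z) z :=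
      ((hasDerivAt_id z).const_mul c₂).sub ((hA z).hasDerivAt)
    rw [h.deriv]
    have := hA' z
    linarith
  have := hmono hxy
  simp only at this
  nlinarith [this]

lemma lip_abs_lo (hc₁ : 0 < c₁) (hA : Differentiable ℝ A) (hA' : ∀ t, c₁ ≤ deriv A t) :
    ∀ x y : ℝ, c₁ * |x - y| ≤ |A x - A y| := by
  intro x y
  rcases le_total x y with h | h
  · have := lip_lo hA hA' x y h
    rw [abs_sub_comm x y, abs_sub_comm (A x) (A y), abs_of_nonneg (by linarith),
      abs_of_nonneg (by nlinarith)]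
    linarith
  · have := lip_lo hA hA' y x h
    rw [abs_of_nonneg (by linarith), abs_of_nonneg (by nlinarith)]
    linarith

lemma lip_abs_hi (hA : Differentiable ℝ A) (hA' : ∀ t, deriv A t ≤ c₂)
    (hlo : ∀ x y : ℝ, x ≤ y → 0 ≤ A y - A x) :
    ∀ x y : ℝ, |A x - A y| ≤ c₂ * |x - y| := by
  intro x y
  rcases le_total x y with h | h
  · have := lip_hi hA hA' x y h
    rw [abs_sub_comm x y, abs_sub_comm (A x) (A y), abs_of_nonneg (hlo x y h),
      abs_of_nonneg (by linarith : (0:ℝ) ≤ y - x)]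
    linarith
  · have := lip_hi hA hA' y x h
    rw [abs_of_nonneg (hlo y x h), abs_of_nonneg (by linarith : (0:ℝ) ≤ x - y)]
    linarith

lemma surj_A (hc₁ : 0 < c₁) (hA : Differentiable ℝ A) (hA' : ∀ t, c₁ ≤ deriv A t)
    (hA0 : A 0 = 0) (α : ℝ) : ∃ b : ℝ, A b = α := by
  set M := |α| / c₁ with hM
  have hM0 : 0 ≤ M := div_nonneg (abs_nonneg α) hc₁.le
  have h1 : c₁ * M ≤ A M - A 0 := by
    have := lip_lo hA hA' 0 M hM0
    simpa using this
  have h2 : c₁ * M ≤ A 0 - A (-M) := by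
    have := lip_lo hA hA' (-M) 0 (by linarith)
    simpa using this
  have hcM : c₁ * M = |α| := by
    rw [hM]; field_simp
  have hup : α ≤ A M := by
    rw [hA0] at h1; rw [hcM] at h1
    have := le_abs_self α
    linarith
  have hdown : A (-M) ≤ α := by
    rw [hA0] at h2; rw [hcM] at h2
    have := neg_abs_le α
    linarith
  have := intermediate_value_Icc (by linarith : -M ≤ M) (hA.continuous.continuousOn)
  obtain ⟨b, _, hb⟩ := this ⟨hdown, hup⟩
  exact ⟨b, hb⟩

end lip

end helpers

set_option maxHeartbeats 2000000 in
/-- Model integral estimates for `g₁, g₂ = O(|α|⁻¹)` and `g₃ = O(|α|⁻²)`: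
`A` models the rescaled critical-direction function (`A(0) = 0`, `c₁ ≤ A' ≤ c₂ < 1`). -/
theorem stmt5 (c₁ c₂ δ : ℝ) (hc₁ : 0 < c₁) (hc : c₁ ≤ c₂) (hc₂ : c₂ < 1) (hδ : 0 < δ)
    (A : ℝ → ℝ) (hA : Differentiable ℝ A) (hA0 : A 0 = 0)
    (hA' : ∀ t : ℝ, c₁ ≤ deriv A t ∧ deriv A t ≤ c₂) :
    ∃ C > 0, ∃ α₀ : ℝ, 1 ≤ α₀ ∧ ∀ α : ℝ, α₀ ≤ |α| →
      (∫ t in Icc (-δ) δ, (1 + t ^ 2 * (A t - α) ^ 2)⁻¹) ≤ C / |α| ∧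
      (∫ t in {t : ℝ | |A t - α| ≤ δ}, (1 + t ^ 2 * (A t - α) ^ 2)⁻¹) ≤ C / |α| ∧
      (∫ t in {t : ℝ | δ ≤ |t| ∧ δ ≤ |A t - α|}, (1 + t ^ 2 * (A t - α) ^ 2)⁻¹) ≤
        C / α ^ 2 := by
  have h0c2 : 0 < c₂ := lt_of_lt_of_le hc₁ hc
  have hAc : Continuous A := hA.continuous
  have hablo := lip_abs_lo hc₁ hA (fun t => (hA' t).1)
  have habhi := lip_abs_hi hA (fun t => (hA' t).2)
      (fun x y hxy => by have := lip_lo hA (fun t => (hA' t).1) x y hxy; nlinarith)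
  have habs : ∀ t : ℝ, |A t| ≤ c₂ * |t| := by
    intro t
    have := habhi t 0
    simpa [hA0, abs_sub_comm] using this
  set C : ℝ := 2 * π + 2 * π * c₂ / c₁ + 8 / δ + 8 * c₂ ^ 3 / (c₁ ^ 2 * δ) with hCdef
  have hπ : (0:ℝ) < π := Real.pi_pos
  have hCpos : 0 < C := by rw [hCdef]; positivity
  have hC1 : 2 * π ≤ C := by
    rw [hCdef]
    have h1 : (0:ℝ) ≤ 2 * π * c₂ / c₁ := by positivity
    have h2 : (0:ℝ) ≤ 8 / δ := by positivity
    have h3 : (0:ℝ) ≤ 8 * c₂ ^ 3 / (c₁ ^ 2 * δ) := by positivity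
    linarith
  have hC2 : 2 * π * c₂ / c₁ ≤ C := by
    rw [hCdef]
    have h1 : (0:ℝ) ≤ 2 * π := by positivity
    have h2 : (0:ℝ) ≤ 8 / δ := by positivity
    have h3 : (0:ℝ) ≤ 8 * c₂ ^ 3 / (c₁ ^ 2 * δ) := by positivity
    linarith
  have hC3 : 8 / δ + 8 * c₂ ^ 3 / (c₁ ^ 2 * δ) ≤ C := by
    rw [hCdef]
    have h1 : (0:ℝ) ≤ 2 * π := by positivity
    have h2 : (0:ℝ) ≤ 2 * π * c₂ / c₁ := by positivity
    linarith
  refine ⟨C, hCpos, 1 + 2 * δ, by linarith, fun α hα => ?_⟩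
  have hα1 : 1 ≤ |α| := le_trans (by linarith) hα
  have hα2δ : 2 * δ ≤ |α| := le_trans (by linarith) hα
  have hαpos : 0 < |α| := lt_of_lt_of_le one_pos hα1
  have hαne : α ≠ 0 := abs_pos.mp hαpos
  have hα2 : 0 < α ^ 2 := by
    have := sq_abs α
    nlinarith
  obtain ⟨b, hb⟩ := surj_A hc₁ hA (fun t => (hA' t).1) hA0 α
  have hden : ∀ t : ℝ, 0 < 1 + t ^ 2 * (A t - α) ^ 2 := fun t => by positivity
  have hfc : Continuous fun t : ℝ => (1 + t ^ 2 * (A t - α) ^ 2)⁻¹ :=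
    (continuous_const.add ((continuous_pow 2).mul
      ((hAc.sub continuous_const).pow 2))).inv₀ fun t => (hden t).ne'
  have hf0 : ∀ t : ℝ, 0 ≤ (1 + t ^ 2 * (A t - α) ^ 2)⁻¹ := fun t => inv_nonneg.2 (hden t).le
  -- a fact used repeatedly : |α| - |A t| ≤ |A t - α|
  have habl : ∀ t : ℝ, |α| - |A t| ≤ |A t - α| := by
    intro t
    rw [abs_sub_comm]
    exact abs_sub_abs_le_abs_sub α (A t)
  refine ⟨?_, ?_, ?_⟩
  -- Part (i)
  · set s : ℝ := |α| / 2 with hs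
    have hspos : 0 < s := by positivity
    have key : ∀ t ∈ Icc (-δ) δ,
        (1 + t ^ 2 * (A t - α) ^ 2)⁻¹ ≤ (1 + s ^ 2 * (t - 0) ^ 2)⁻¹ := by
      intro t ht
      apply inv_anti₀ (by positivity)
      have h1 : |t| ≤ δ := abs_le.mpr ⟨ht.1, ht.2⟩
      have h3 := habs t
      have h3b : c₂ * |t| ≤ c₂ * δ := mul_le_mul_of_nonneg_left h1 h0c2.le
      have h2 : s ≤ |A t - α| := by
        have h4 := habl t
        rw [hs]
        nlinarith
      have h5 : s ^ 2 ≤ (A t - α) ^ 2 := by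
        have := pow_le_pow_left₀ hspos.le h2 2
        rwa [sq_abs] at this
      have h6 : t ^ 2 * s ^ 2 ≤ t ^ 2 * (A t - α) ^ 2 :=
        mul_le_mul_of_nonneg_left h5 (sq_nonneg t)
      have h7 : s ^ 2 * (t - 0) ^ 2 = t ^ 2 * s ^ 2 := by ring
      linarith
    have step := main_mono (subset_univ _) measurableSet_Icc hfc hf0
      (fun t => inv_nonneg.2 (by positivity)) ((poisson_int s hspos 0).integrableOn) key
    rw [Measure.restrict_univ] at step
    rw [poisson_val s hspos 0] at step
    have heq : π / s = (2 * π) / |α| := by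
      rw [hs]; field_simp
    rw [heq] at step
    refine le_trans step ?_
    gcongr
  -- Part (ii)
  · set s : ℝ := c₁ * |α| / (2 * c₂) with hs
    have hspos : 0 < s := by positivity
    have hS : MeasurableSet {t : ℝ | |A t - α| ≤ δ} :=
      (isClosed_le ((hAc.sub continuous_const).abs) continuous_const).measurableSet
    have key : ∀ t ∈ {t : ℝ | |A t - α| ≤ δ},
        (1 + t ^ 2 * (A t - α) ^ 2)⁻¹ ≤ (1 + s ^ 2 * (t - b) ^ 2)⁻¹ := by
      intro t ht
      simp only [mem_setOf_eq] at ht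
      apply inv_anti₀ (by positivity)
      have hl : c₁ * |t - b| ≤ |A t - α| := by
        have := hablo t b
        rwa [hb] at this
      have ht2 : |α| / (2 * c₂) ≤ |t| := by
        have h4 := habl t
        have h5 := habs t
        rw [div_le_iff₀ (by positivity : (0:ℝ) < 2 * c₂)]
        nlinarith
      have hprod : s * |t - b| ≤ |t| * |A t - α| := by
        have hmm := mul_le_mul hl ht2 (by positivity) (abs_nonneg (A t - α))
        calc s * |t - b| = c₁ * |t - b| * (|α| / (2 * c₂)) := by rw [hs]; ring
          _ ≤ |A t - α| * |t| := hmm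
          _ = |t| * |A t - α| := by ring
      have hsq := pow_le_pow_left₀ (by positivity) hprod 2
      have h7 : (s * |t - b|) ^ 2 = s ^ 2 * (t - b) ^ 2 := by
        rw [mul_pow, sq_abs]
      have h8 : (|t| * |A t - α|) ^ 2 = t ^ 2 * (A t - α) ^ 2 := by
        rw [mul_pow, sq_abs, sq_abs]
      rw [h7, h8] at hsq
      linarith
    have step := main_mono (subset_univ _) hS hfc hf0
      (fun t => inv_nonneg.2 (by positivity)) ((poisson_int s hspos b).integrableOn) key
    rw [Measure.restrict_univ] at step
    rw [poisson_val s hspos b] at step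
    have heq : π / s = (2 * π * c₂ / c₁) / |α| := by
      rw [hs]; field_simp
    rw [heq] at step
    refine le_trans step ?_
    gcongr
  -- Part (iii)
  · set S : Set ℝ := {t : ℝ | δ ≤ |t| ∧ δ ≤ |A t - α|} with hSdef
    have hS : MeasurableSet S := by
      have h1 : IsClosed {t : ℝ | δ ≤ |t|} := isClosed_le continuous_const continuous_abs
      have h2 : IsClosed {t : ℝ | δ ≤ |A t - α|} :=
        isClosed_le continuous_const ((hAc.sub continuous_const).abs)
      exact (h1.inter h2).measurableSet
    set k₁ : ℝ := 4 / α ^ 2 with hk₁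
    set k₂ : ℝ := 4 * c₂ ^ 2 / (c₁ ^ 2 * α ^ 2) with hk₂
    have hk₁0 : 0 ≤ k₁ := by positivity
    have hk₂0 : 0 ≤ k₂ := by positivity
    have hsub1 : S ⊆ {u : ℝ | δ ≤ |u|} := fun t ht => ht.1
    have hsub2 : S ⊆ {t : ℝ | δ / c₂ ≤ |t - b|} := by
      intro t ht
      have h := habhi t b
      rw [hb] at h
      have h2 := ht.2
      simp only [mem_setOf_eq]
      rw [div_le_iff₀ h0c2]
      nlinarith
    have hint1' := (invsq_base δ hδ).1
    have hint2' := (invsq_shift (δ / c₂) b (by positivity)).1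
    have hint1 : IntegrableOn (fun t : ℝ => k₁ * (t ^ 2)⁻¹) S :=
      (hint1'.mono_set hsub1).const_mul k₁
    have hint2 : IntegrableOn (fun t : ℝ => k₂ * ((t - b) ^ 2)⁻¹) S :=
      (hint2'.mono_set hsub2).const_mul k₂
    have key : ∀ t ∈ S, (1 + t ^ 2 * (A t - α) ^ 2)⁻¹ ≤
        k₁ * (t ^ 2)⁻¹ + k₂ * ((t - b) ^ 2)⁻¹ := by
      intro t ht
      obtain ⟨ht1, ht2⟩ := ht
      have htpos : 0 < |t| := lt_of_lt_of_le hδ ht1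
      have htne : t ≠ 0 := abs_pos.mp htpos
      have ht2pos : 0 < t ^ 2 := by positivity
      have hApos : 0 < |A t - α| := lt_of_lt_of_le hδ ht2
      have hAne2 : A t - α ≠ 0 := abs_pos.mp hApos
      have hA2pos : 0 < (A t - α) ^ 2 := by positivity
      have hX : (1 + t ^ 2 * (A t - α) ^ 2)⁻¹ ≤ (t ^ 2 * (A t - α) ^ 2)⁻¹ :=
        inv_anti₀ (by positivity) (by linarith)
      rcases le_total (|t|) (|α| / (2 * c₂)) with hcase | hcase
      · -- small t : use the k₁ term
        have hcc : c₂ * (|α| / (2 * c₂)) = |α| / 2 := by field_simp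
        have h5 := habs t
        have h5b : c₂ * |t| ≤ |α| / 2 := by
          have := mul_le_mul_of_nonneg_left hcase h0c2.le
          rw [hcc] at this
          linarith
        have h6 : |α| / 2 ≤ |A t - α| := by
          have h4 := habl t
          linarith
        have h7 : α ^ 2 / 4 ≤ (A t - α) ^ 2 := by
          have hp := pow_le_pow_left₀ (by positivity) h6 2
          rw [sq_abs] at hp
          have heq2 : (|α| / 2) ^ 2 = α ^ 2 / 4 := by
            rw [div_pow, sq_abs]; norm_num
          linarith
        have h8 : (t ^ 2 * (A t - α) ^ 2)⁻¹ ≤ (t ^ 2 * (α ^ 2 / 4))⁻¹ := by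
          apply inv_anti₀ (by positivity)
          exact mul_le_mul_of_nonneg_left h7 (sq_nonneg t)
        have h9 : (t ^ 2 * (α ^ 2 / 4))⁻¹ = k₁ * (t ^ 2)⁻¹ := by
          rw [hk₁]
          field_simp
        have h10 : 0 ≤ k₂ * ((t - b) ^ 2)⁻¹ := by positivity
        rw [h9] at h8
        linarith
      · -- large t : use the k₂ term
        have hl : c₁ * |t - b| ≤ |A t - α| := by
          have := hablo t b
          rwa [hb] at this
        have hprod : (|α| / (2 * c₂)) * (c₁ * |t - b|) ≤ |t| * |A t - α| :=
          mul_le_mul hcase hl (by positivity) (abs_nonneg t)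
        have hsq := pow_le_pow_left₀ (by positivity) hprod 2
        have h7 : ((|α| / (2 * c₂)) * (c₁ * |t - b|)) ^ 2
            = c₁ ^ 2 * α ^ 2 / (4 * c₂ ^ 2) * (t - b) ^ 2 := by
          rw [mul_pow, mul_pow, div_pow, sq_abs, sq_abs]
          ring
        have h8 : (|t| * |A t - α|) ^ 2 = t ^ 2 * (A t - α) ^ 2 := by
          rw [mul_pow, sq_abs, sq_abs]
        rw [h7, h8] at hsq
        have h9 : 0 < |t - b| := by
          have h := habhi t b
          rw [hb] at h
          rcases (abs_nonneg (t - b)).lt_or_eq with hlt | heq0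
          · exact hlt
          · exfalso
            rw [← heq0] at h
            simp at h
            exact hAne2 h
        have htbne : t - b ≠ 0 := abs_pos.mp h9
        have htb : 0 < (t - b) ^ 2 := by positivity
        have h10 : (t ^ 2 * (A t - α) ^ 2)⁻¹ ≤ (c₁ ^ 2 * α ^ 2 / (4 * c₂ ^ 2) * (t - b) ^ 2)⁻¹ :=
          inv_anti₀ (by positivity) hsq
        have h11 : (c₁ ^ 2 * α ^ 2 / (4 * c₂ ^ 2) * (t - b) ^ 2)⁻¹ = k₂ * ((t - b) ^ 2)⁻¹ := by
          rw [hk₂]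
          field_simp
        have h12 : 0 ≤ k₁ * (t ^ 2)⁻¹ := by positivity
        rw [h11] at h10
        linarith
    have hgnn : ∀ t : ℝ, 0 ≤ k₁ * (t ^ 2)⁻¹ + k₂ * ((t - b) ^ 2)⁻¹ := fun t =>
      add_nonneg (mul_nonneg hk₁0 (by positivity)) (mul_nonneg hk₂0 (by positivity))
    have step1 := main_mono (g := fun t => k₁ * (t ^ 2)⁻¹ + k₂ * ((t - b) ^ 2)⁻¹)
      (subset_refl S) hS hfc hf0 hgnn (hint1.add hint2) key
    have step2 : (∫ t in S, (k₁ * (t ^ 2)⁻¹ + k₂ * ((t - b) ^ 2)⁻¹)) =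
        (∫ t in S, k₁ * (t ^ 2)⁻¹) + ∫ t in S, k₂ * ((t - b) ^ 2)⁻¹ :=
      integral_add hint1 hint2
    have step3 : (∫ t in S, k₁ * (t ^ 2)⁻¹) ≤ k₁ * (2 / δ) := by
      rw [integral_const_mul]
      apply mul_le_mul_of_nonneg_left _ hk₁0
      have hmono := setIntegral_mono_set hint1' (ae_of_all _ fun t => by positivity)
        (HasSubset.Subset.eventuallyLE hsub1)
      rw [(invsq_base δ hδ).2] at hmono
      exact hmono
    have step4 : (∫ t in S, k₂ * ((t - b) ^ 2)⁻¹) ≤ k₂ * (2 / (δ / c₂)) := by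
      rw [integral_const_mul]
      apply mul_le_mul_of_nonneg_left _ hk₂0
      have hmono := setIntegral_mono_set hint2' (ae_of_all _ fun t => by positivity)
        (HasSubset.Subset.eventuallyLE hsub2)
      rw [(invsq_shift (δ / c₂) b (by positivity)).2] at hmono
      exact hmono
    have hval : k₁ * (2 / δ) + k₂ * (2 / (δ / c₂)) =
        (8 / δ + 8 * c₂ ^ 3 / (c₁ ^ 2 * δ)) / α ^ 2 := by
      rw [hk₁, hk₂]
      field_simp
      ring
    have : (∫ t in S, (1 + t ^ 2 * (A t - α) ^ 2)⁻¹) ≤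
        (8 / δ + 8 * c₂ ^ 3 / (c₁ ^ 2 * δ)) / α ^ 2 := by
      rw [← hval]
      calc (∫ t in S, (1 + t ^ 2 * (A t - α) ^ 2)⁻¹)
          ≤ ∫ t in S, (k₁ * (t ^ 2)⁻¹ + k₂ * ((t - b) ^ 2)⁻¹) := step1
        _ = (∫ t in S, k₁ * (t ^ 2)⁻¹) + ∫ t in S, k₂ * ((t - b) ^ 2)⁻¹ := step2
        _ ≤ k₁ * (2 / δ) + k₂ * (2 / (δ / c₂)) := add_le_add step3 step4
    refine le_trans this ?_
    gcongr
end

section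
/- Let 0 < c₁ ≤ c₂ < 1 and δ > 0, and let A : ℝ → ℝ be differentiable with A(0) = 0 and c₁ ≤ A′(t) ≤ c₂ for all t ∈ ℝ. Then there exist constants C > 0 and α₀ ≥ 1 such that for every α ∈ ℝ with |α| ≥ α₀: (i) ∫_{|t| ≤ δ} |t| (1 + t²(A(t) − α)²)^{-1} dt ≤ C/|α|; (ii) ∫_{t ∈ ℝ : |t| ≥ δ and |A(t) − α| ≥ δ} |t| (1 + t²(A(t) − α)²)^{-1} dt ≤ C/|α|. -/
/-!
Since `|A'| ≤ 1` and `A 0 = 0`, we have `|A t| ≤ |t|`, hence `|A t - α| ≥ |α| / 2` as long as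
`|t| ≤ |α| / 2`. There `1 + x² ≥ 2x` bounds the integrand by `1 / |α|`, and by `4 / (δ |α|²)` when
also `|t| ≥ δ`. For `|t| > |α| / 2` and `|A t - α| ≥ δ` the integrand is at most a multiple, of
size `1 / (c₁ δ² |α|)`, of `A' t / (1 + (A t - α)²)`, whose integral over `ℝ` is at most `π` by the
substitution `u = A t - α`.
-/

open MeasureTheory Set

lemma abs_le_abs_of_abs_deriv_le_one {A : ℝ → ℝ} (hA : Differentiable ℝ A) (hA0 : A 0 = 0)
    (hA' : ∀ t, |deriv A t| ≤ 1) (t : ℝ) : |A t| ≤ |t| := by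
  have hLip : LipschitzWith 1 A :=
    lipschitzWith_of_nnnorm_deriv_le hA fun x => by
      rw [← NNReal.coe_le_coe, coe_nnnorm]; exact hA' x
  simpa [hA0, Real.dist_eq] using hLip.dist_le_mul t 0

lemma half_le_abs_sub_of_abs_le {a t α : ℝ} (ha : |a| ≤ |t|) (ht : |t| ≤ |α| / 2) :
    |α| / 2 ≤ |a - α| := by
  have := abs_sub_abs_le_abs_sub α a
  rw [abs_sub_comm] at this
  linarith

lemma abs_mul_inv_one_add_sq_mul_sq_le_inv {m g : ℝ} (hm : 0 < m) (hg : m / 2 ≤ |g|) (t : ℝ) :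
    |t| * (1 + t ^ 2 * g ^ 2)⁻¹ ≤ m⁻¹ := by
  rw [← div_eq_mul_inv, inv_eq_one_div, div_le_div_iff₀ (by positivity) hm]
  nlinarith [sq_nonneg (|t| * |g| - 1), mul_le_mul_of_nonneg_left hg (abs_nonneg t), sq_abs t,
    sq_abs g]

lemma abs_mul_inv_one_add_sq_mul_sq_le_inv_abs_mul_sq {t g : ℝ} (ht : t ≠ 0) (hg : g ≠ 0) :
    |t| * (1 + t ^ 2 * g ^ 2)⁻¹ ≤ (|t| * g ^ 2)⁻¹ := by
  have hpos : 0 < t ^ 2 * g ^ 2 := by positivity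
  calc |t| * (1 + t ^ 2 * g ^ 2)⁻¹ ≤ |t| * (t ^ 2 * g ^ 2)⁻¹ := by gcongr; linarith
    _ = (|t| * g ^ 2)⁻¹ := by
      rw [← sq_abs t]; field_simp

lemma abs_mul_inv_one_add_sq_mul_sq_le_of_le_abs {δ m t g : ℝ} (hδ : 0 < δ) (hm : 0 < m)
    (ht : δ ≤ |t|) (hg : m / 2 ≤ |g|) :
    |t| * (1 + t ^ 2 * g ^ 2)⁻¹ ≤ 4 / (δ * m ^ 2) := by
  have ht0 : t ≠ 0 := abs_pos.mp (hδ.trans_le ht)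
  have hg0 : g ≠ 0 := abs_pos.mp ((half_pos hm).trans_le hg)
  calc |t| * (1 + t ^ 2 * g ^ 2)⁻¹ ≤ (|t| * g ^ 2)⁻¹ :=
        abs_mul_inv_one_add_sq_mul_sq_le_inv_abs_mul_sq ht0 hg0
    _ ≤ (δ * (m / 2) ^ 2)⁻¹ := by
      rw [← sq_abs g]; gcongr
    _ = 4 / (δ * m ^ 2) := by field_simp; ring

lemma abs_mul_inv_one_add_sq_mul_sq_le_of_half_le_abs {δ m c a t g : ℝ} (hδ : 0 < δ)
    (hm : 0 < m) (hc : 0 < c) (ha : c ≤ a) (ht : m / 2 ≤ |t|) (hg : δ ≤ |g|) :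
    |t| * (1 + t ^ 2 * g ^ 2)⁻¹ ≤ 2 * (1 + δ⁻¹ ^ 2) / (c * m) * (a * (1 + g ^ 2)⁻¹) := by
  have ht0 : t ≠ 0 := abs_pos.mp ((half_pos hm).trans_le ht)
  have hg0 : g ≠ 0 := abs_pos.mp (hδ.trans_le hg)
  have hg2 : 1 + g ^ 2 ≤ (1 + δ⁻¹ ^ 2) * g ^ 2 := by
    have h1 : 1 ≤ (|g| / δ) ^ 2 := one_le_pow₀ ((one_le_div hδ).mpr hg)
    have h2 : (|g| / δ) ^ 2 = δ⁻¹ ^ 2 * g ^ 2 := by rw [div_pow, sq_abs]; ring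
    linarith
  calc |t| * (1 + t ^ 2 * g ^ 2)⁻¹ ≤ (|t| * g ^ 2)⁻¹ :=
        abs_mul_inv_one_add_sq_mul_sq_le_inv_abs_mul_sq ht0 hg0
    _ ≤ (m / 2 * g ^ 2)⁻¹ := by gcongr
    _ ≤ 2 * (1 + δ⁻¹ ^ 2) / (c * m) * (c * (1 + g ^ 2)⁻¹) := by
      rw [show 2 * (1 + δ⁻¹ ^ 2) / (c * m) * (c * (1 + g ^ 2)⁻¹)
          = 2 * (1 + δ⁻¹ ^ 2) / (m * (1 + g ^ 2)) by field_simp,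
        inv_eq_one_div, div_le_div_iff₀ (by positivity) (by positivity)]
      nlinarith [mul_le_mul_of_nonneg_left hg2 hm.le]
    _ ≤ 2 * (1 + δ⁻¹ ^ 2) / (c * m) * (a * (1 + g ^ 2)⁻¹) := by gcongr

lemma integrable_abs_deriv_mul_inv_one_add_sq {f f' : ℝ → ℝ} (hf : ∀ x, HasDerivAt f (f' x) x)
    (hinj : Function.Injective f) : Integrable fun x => |f' x| * (1 + f x ^ 2)⁻¹ := by
  have := (integrableOn_image_iff_integrableOn_abs_deriv_smul MeasurableSet.univ
    (fun x _ => (hf x).hasDerivWithinAt) hinj.injOn fun u => (1 + u ^ 2)⁻¹).mp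
    integrable_inv_one_add_sq.integrableOn
  simpa using this

lemma integral_abs_deriv_mul_inv_one_add_sq_le_pi {f f' : ℝ → ℝ}
    (hf : ∀ x, HasDerivAt f (f' x) x) (hinj : Function.Injective f) :
    ∫ x, |f' x| * (1 + f x ^ 2)⁻¹ ≤ Real.pi := by
  have hcov := integral_image_eq_integral_abs_deriv_smul MeasurableSet.univ
    (fun x _ => (hf x).hasDerivWithinAt) hinj.injOn fun u => (1 + u ^ 2)⁻¹
  simp only [Measure.restrict_univ, smul_eq_mul] at hcov
  rw [← hcov, ← integral_univ_inv_one_add_sq]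
  exact setIntegral_le_integral integrable_inv_one_add_sq (ae_of_all _ fun u => by positivity)

lemma setIntegral_Icc_abs_mul_inv_one_add_sq_le {A : ℝ → ℝ} {α δ : ℝ} (hA : ∀ t, |A t| ≤ |t|)
    (hδ : 0 ≤ δ) (hα : 2 * δ ≤ |α|) (hα0 : α ≠ 0) :
    ∫ t in Icc (-δ) δ, |t| * (1 + t ^ 2 * (A t - α) ^ 2)⁻¹ ≤ 2 * δ / |α| := by
  have hbound : ∀ t ∈ Icc (-δ) δ, |t| * (1 + t ^ 2 * (A t - α) ^ 2)⁻¹ ≤ |α|⁻¹ := fun t ht =>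
    abs_mul_inv_one_add_sq_mul_sq_le_inv (abs_pos.mpr hα0)
      (half_le_abs_sub_of_abs_le (hA t) (by linarith [abs_le.mpr ht])) t
  calc ∫ t in Icc (-δ) δ, |t| * (1 + t ^ 2 * (A t - α) ^ 2)⁻¹
      ≤ ∫ _ in Icc (-δ) δ, |α|⁻¹ :=
        integral_mono_of_nonneg (ae_of_all _ fun t => by positivity)
          (integrableOn_const measure_Icc_lt_top.ne)
          ((ae_restrict_iff' measurableSet_Icc).mpr (ae_of_all _ hbound))
    _ = 2 * δ / |α| := by
      rw [setIntegral_const, Real.volume_real_Icc_of_le (by linarith), smul_eq_mul]; ring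

lemma abs_mul_inv_one_add_sq_mul_sq_le_indicator_add {a a' c α δ t : ℝ} (ha : |a| ≤ |t|)
    (hc : 0 < c) (ha' : c ≤ a') (hδ : 0 < δ) (hα0 : α ≠ 0) (ht : δ ≤ |t|) (hg : δ ≤ |a - α|) :
    |t| * (1 + t ^ 2 * (a - α) ^ 2)⁻¹ ≤
      (Icc (-(|α| / 2)) (|α| / 2)).indicator (fun _ => 4 / (δ * |α| ^ 2)) t +
        2 * (1 + δ⁻¹ ^ 2) / (c * |α|) * (|a'| * (1 + (a - α) ^ 2)⁻¹) := by
  have hα : 0 < |α| := abs_pos.mpr hα0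
  rcases le_or_gt |t| (|α| / 2) with hnear | hfar
  · have hfar_term : 0 ≤ 2 * (1 + δ⁻¹ ^ 2) / (c * |α|) * (|a'| * (1 + (a - α) ^ 2)⁻¹) := by
      positivity
    rw [indicator_of_mem (show t ∈ Icc (-(|α| / 2)) (|α| / 2) from abs_le.mp hnear)]
    linarith [abs_mul_inv_one_add_sq_mul_sq_le_of_le_abs hδ hα ht
      (half_le_abs_sub_of_abs_le ha hnear)]
  · rw [indicator_of_notMem fun h : t ∈ Icc (-(|α| / 2)) (|α| / 2) => hfar.not_ge (abs_le.mpr h),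
      zero_add]
    exact abs_mul_inv_one_add_sq_mul_sq_le_of_half_le_abs hδ hα hc (ha'.trans (le_abs_self _))
      hfar.le hg

lemma setIntegral_abs_mul_inv_one_add_sq_le_of_away {A : ℝ → ℝ} {c α δ : ℝ}
    (hA : Differentiable ℝ A) (hA_le : ∀ t, |A t| ≤ |t|) (hc : 0 < c) (hA' : ∀ t, c ≤ deriv A t)
    (hδ : 0 < δ) (hα0 : α ≠ 0) :
    ∫ t in {t : ℝ | δ ≤ |t| ∧ δ ≤ |A t - α|}, |t| * (1 + t ^ 2 * (A t - α) ^ 2)⁻¹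
      ≤ (4 / δ + 2 * (1 + δ⁻¹ ^ 2) * Real.pi / c) / |α| := by
  set m := |α|
  have hm : 0 < m := abs_pos.mpr hα0
  set K := 2 * (1 + δ⁻¹ ^ 2) / (c * m)
  set I := (Icc (-(m / 2)) (m / 2)).indicator fun _ => 4 / (δ * m ^ 2)
  set G := fun t => |deriv A t| * (1 + (A t - α) ^ 2)⁻¹
  have hderiv : ∀ t, HasDerivAt (fun t => A t - α) (deriv A t) t :=
    fun t => (hA t).hasDerivAt.sub_const α
  have hinj : Function.Injective fun t => A t - α := fun x y hxy =>
    (strictMono_of_deriv_pos fun t => hc.trans_le (hA' t)).injective (sub_left_inj.mp hxy)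
  have hI : Integrable I :=
    (integrable_indicator_iff measurableSet_Icc).mpr (integrableOn_const measure_Icc_lt_top.ne)
  have hG : Integrable G := integrable_abs_deriv_mul_inv_one_add_sq hderiv hinj
  have hR : MeasurableSet {t : ℝ | δ ≤ |t| ∧ δ ≤ |A t - α|} :=
    (measurableSet_le measurable_const continuous_abs.measurable).inter
      (measurableSet_le measurable_const (hA.continuous.sub continuous_const).abs.measurable)
  have hbound : ∀ t ∈ {t : ℝ | δ ≤ |t| ∧ δ ≤ |A t - α|},
      |t| * (1 + t ^ 2 * (A t - α) ^ 2)⁻¹ ≤ I t + K * G t := fun t ⟨ht, hg⟩ =>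
    abs_mul_inv_one_add_sq_mul_sq_le_indicator_add (hA_le t) hc (hA' t) hδ hα0 ht hg
  calc ∫ t in {t : ℝ | δ ≤ |t| ∧ δ ≤ |A t - α|}, |t| * (1 + t ^ 2 * (A t - α) ^ 2)⁻¹
      ≤ ∫ t in {t : ℝ | δ ≤ |t| ∧ δ ≤ |A t - α|}, I t + K * G t :=
        integral_mono_of_nonneg (ae_of_all _ fun t => by positivity)
          (hI.add (hG.const_mul K)).integrableOn ((ae_restrict_iff' hR).mpr (ae_of_all _ hbound))
    _ ≤ ∫ t, I t + K * G t :=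
        setIntegral_le_integral (hI.add (hG.const_mul K)) (ae_of_all _ fun t =>
          add_nonneg (indicator_nonneg (fun _ _ => by positivity) t) (by positivity))
    _ = 4 / (δ * m ^ 2) * m + K * ∫ t, G t := by
      rw [integral_add hI (hG.const_mul K), integral_indicator_const _ measurableSet_Icc,
        integral_const_mul, Real.volume_real_Icc_of_le (by linarith), smul_eq_mul]
      ring
    _ ≤ 4 / (δ * m ^ 2) * m + K * Real.pi := by
      gcongr; exact integral_abs_deriv_mul_inv_one_add_sq_le_pi hderiv hinj
    _ = (4 / δ + 2 * (1 + δ⁻¹ ^ 2) * Real.pi / c) / m := by simp only [K]; field_simp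

theorem stmt6_general (c₁ c₂ δ : ℝ) (hc₁ : 0 < c₁) (hc₂ : c₂ < 1) (hδ : 0 < δ)
    (A : ℝ → ℝ) (hA : Differentiable ℝ A) (hA0 : A 0 = 0)
    (hA' : ∀ t : ℝ, c₁ ≤ deriv A t ∧ deriv A t ≤ c₂) :
    ∃ C > 0, ∃ α₀ : ℝ, 1 ≤ α₀ ∧ ∀ α : ℝ, α₀ ≤ |α| →
      (∫ t in Icc (-δ) δ, |t| * (1 + t ^ 2 * (A t - α) ^ 2)⁻¹) ≤ C / |α| ∧
      (∫ t in {t : ℝ | δ ≤ |t| ∧ δ ≤ |A t - α|},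
          |t| * (1 + t ^ 2 * (A t - α) ^ 2)⁻¹) ≤ C / |α| := by
  have hA_le : ∀ t, |A t| ≤ |t| := abs_le_abs_of_abs_deriv_le_one hA hA0 fun t =>
    abs_le.mpr ⟨by linarith [(hA' t).1], by linarith [(hA' t).2]⟩
  refine ⟨2 * δ + (4 / δ + 2 * (1 + δ⁻¹ ^ 2) * Real.pi / c₁), by positivity, max 1 (2 * δ),
    le_max_left _ _, fun α hα => ?_⟩
  have hα0 : α ≠ 0 := abs_pos.mp (by linarith [le_max_left 1 (2 * δ)])
  constructor
  · refine (setIntegral_Icc_abs_mul_inv_one_add_sq_le hA_le hδ.le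
      ((le_max_right _ _).trans hα) hα0).trans ?_
    exact div_le_div_of_nonneg_right (le_add_of_nonneg_right (by positivity)) (abs_nonneg α)
  · refine (setIntegral_abs_mul_inv_one_add_sq_le_of_away hA hA_le hc₁ (fun t => (hA' t).1) hδ
      hα0).trans ?_
    exact div_le_div_of_nonneg_right (le_add_of_nonneg_left (by positivity)) (abs_nonneg α)

/-- Model integral estimates for the derivative bounds `∂_α g₁, ∂_α g₃ = O(|α|⁻¹)`:
`A` models the rescaled critical-direction function (`A(0) = 0`, `c₁ ≤ A' ≤ c₂ < 1`). -/
theorem stmt6 (c₁ c₂ δ : ℝ) (hc₁ : 0 < c₁) (hc : c₁ ≤ c₂) (hc₂ : c₂ < 1) (hδ : 0 < δ)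
    (A : ℝ → ℝ) (hA : Differentiable ℝ A) (hA0 : A 0 = 0)
    (hA' : ∀ t : ℝ, c₁ ≤ deriv A t ∧ deriv A t ≤ c₂) :
    ∃ C > 0, ∃ α₀ : ℝ, 1 ≤ α₀ ∧ ∀ α : ℝ, α₀ ≤ |α| →
      (∫ t in Icc (-δ) δ, |t| * (1 + t ^ 2 * (A t - α) ^ 2)⁻¹) ≤ C / |α| ∧
      (∫ t in {t : ℝ | δ ≤ |t| ∧ δ ≤ |A t - α|},
          |t| * (1 + t ^ 2 * (A t - α) ^ 2)⁻¹) ≤ C / |α| :=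
  stmt6_general c₁ c₂ δ hc₁ hc₂ hδ A hA hA0 hA'
end

section
/- Assume the curve convention: a > 0 and y : [−a,a] → ℝ² is C⁴ with θ⃗·y′(θ) = 0, θ⃗⊥·y′(θ) < 0, θ⃗·y″(θ) > 0 for all θ ∈ [−a,a], where θ⃗ = (cos θ, sin θ), θ⃗⊥ = (−sin θ, cos θ). Let x₀ ∈ ℝ² with x₀ ≠ y(0), (1,0)·(y(0) − x₀) = 0, and (0,1)·(y(0) − x₀) < 0. Define A₁(θ) := arcsin( (1,0)·(y(θ) − x₀) / |y(θ) − x₀| ). Then there exist a′ ∈ (0,a] and constants c₂ ≥ c₁ > 0 such that for all θ ∈ [−a′,a′] \ {0}: c₁ ≤ A₁(θ)/θ² ≤ c₂ and c₁ ≤ A₁′(θ)/θ ≤ c₂. -/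
/-!
Where the chord `y(θ) - x₀ = (u, v)` points downwards, `A₁ = arctan (u / -v)`, whose derivative
is the Wronskian quotient `(u v' - u' v) / (u² + v²)`. Tangency (`u(0) = u'(0) = 0`) and
curvature (`u''(0) > 0`) give `A₁'(θ) / θ → u''(0) / |v(0)| > 0`, hence
`A₁(θ) / θ² → u''(0) / (2 |v(0)|)` by L'Hôpital; two positive limits bound both quotients from
above and below near `0`.
-/

open Real Set Filter Topology

/-- The critical direction angle `A₁(θ) = arcsin(e₁·(y(θ)-x₀)/|y(θ)-x₀|)`. -/
noncomputable def critAngle (y : ℝ → ℝ × ℝ) (x₀ : ℝ × ℝ) (θ : ℝ) : ℝ :=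
  Real.arcsin ((y θ - x₀).1 / Real.sqrt ((y θ - x₀).1 ^ 2 + (y θ - x₀).2 ^ 2))

theorem HasDerivAt.fst {f : ℝ → ℝ × ℝ} {f' : ℝ × ℝ} {x : ℝ} (h : HasDerivAt f f' x) :
    HasDerivAt (fun t => (f t).1) f'.1 x :=
  (hasFDerivAt_fst (𝕜 := ℝ) (p := f x)).comp_hasDerivAt x h

theorem HasDerivAt.snd {f : ℝ → ℝ × ℝ} {f' : ℝ × ℝ} {x : ℝ} (h : HasDerivAt f f' x) :
    HasDerivAt (fun t => (f t).2) f'.2 x :=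
  (hasFDerivAt_snd (𝕜 := ℝ) (p := f x)).comp_hasDerivAt x h

theorem arcsin_div_sqrt_eq_arctan {u v : ℝ} (hv : v < 0) :
    arcsin (u / √(u ^ 2 + v ^ 2)) = arctan (u / -v) := by
  have hsqrt : √(1 + (u / -v) ^ 2) = √(u ^ 2 + v ^ 2) / -v := by
    rw [show 1 + (u / -v) ^ 2 = (u ^ 2 + v ^ 2) / (-v) ^ 2 by field_simp [hv.ne]; ring,
      sqrt_div' _ (sq_nonneg _), sqrt_sq (by linarith)]
  rw [arctan_eq_arcsin, hsqrt, div_div_div_cancel_right₀ (by linarith)]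

theorem HasDerivAt.arctan_div_neg {u v : ℝ → ℝ} {u' v' t : ℝ} (hu : HasDerivAt u u' t)
    (hv : HasDerivAt v v' t) (ht : v t ≠ 0) :
    HasDerivAt (fun s => Real.arctan (u s / -v s))
      ((u t * v' - u' * v t) / (u t ^ 2 + v t ^ 2)) t := by
  have h : HasDerivAt (fun s => u s / -v s) ((u' * -v t - u t * -v') / (-v t) ^ 2) t :=
    hu.div hv.neg (neg_ne_zero.2 ht)
  refine h.arctan.congr_deriv ?_
  field_simp
  ring

theorem HasDerivAt.tendsto_div_of_apply_zero {f : ℝ → ℝ} {f' : ℝ} (hf : HasDerivAt f f' 0)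
    (hf0 : f 0 = 0) : Tendsto (fun t => f t / t) (𝓝[≠] 0) (𝓝 f') := by
  convert hasDerivAt_iff_tendsto_slope.mp hf using 2 with t
  simp [slope_def_field, hf0]

theorem tendsto_div_sq_of_tendsto_deriv_div {f f' : ℝ → ℝ} {L : ℝ}
    (hf : ∀ᶠ t in 𝓝 0, HasDerivAt f (f' t) t) (hf0 : f 0 = 0)
    (hL : Tendsto (fun t => f' t / t) (𝓝[≠] 0) (𝓝 L)) :
    Tendsto (fun t => f t / t ^ 2) (𝓝[≠] 0) (𝓝 (L / 2)) := by
  have hcont : Tendsto f (𝓝[≠] 0) (𝓝 0) := by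
    simpa [hf0] using hf.self_of_nhds.continuousAt.tendsto.mono_left nhdsWithin_le_nhds
  refine HasDerivAt.lhopital_zero_nhdsNE (eventually_nhdsWithin_of_eventually_nhds hf)
    (Eventually.of_forall fun t => by simpa using hasDerivAt_pow 2 t)
    (eventually_nhdsWithin_of_forall fun t ht => by simpa using ht) hcont ?_ ?_
  · simpa using ((continuous_pow 2).tendsto' (0 : ℝ) 0 (by simp)).mono_left nhdsWithin_le_nhds
  · refine (hL.div_const 2).congr' (eventually_nhdsWithin_of_forall fun t ht => ?_)
    field_simp

theorem tendsto_wronskian_div_sq_add_sq_div {u v u' v' : ℝ → ℝ} {u'' : ℝ}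
    (hu : HasDerivAt u 0 0) (hu0 : u 0 = 0) (hu' : HasDerivAt u' u'' 0) (hu'0 : u' 0 = 0)
    (hv : ContinuousAt v 0) (hv' : ContinuousAt v' 0) (hv0 : v 0 ≠ 0) :
    Tendsto (fun t => (u t * v' t - u' t * v t) / (u t ^ 2 + v t ^ 2) / t) (𝓝[≠] 0)
      (𝓝 (u'' / -v 0)) := by
  have hu_cont : Tendsto u (𝓝[≠] 0) (𝓝 0) := by
    simpa [hu0] using hu.continuousAt.tendsto.mono_left nhdsWithin_le_nhds
  have hlim := ((hu.tendsto_div_of_apply_zero hu0).mul (hv'.tendsto.mono_left nhdsWithin_le_nhds)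
    |>.sub ((hu'.tendsto_div_of_apply_zero hu'0).mul (hv.tendsto.mono_left nhdsWithin_le_nhds))
    |>.div ((hu_cont.pow 2).add ((hv.tendsto.mono_left nhdsWithin_le_nhds).pow 2))
      (by positivity))
  rw [show (0 * v' 0 - u'' * v 0) / (0 ^ 2 + v 0 ^ 2) = u'' / -v 0 by field_simp; ring] at hlim
  exact hlim.congr fun t => by simp only [Pi.div_apply]; ring

theorem exists_Icc_bounds_of_tendsto_pos {f g : ℝ → ℝ} {l m a : ℝ} (ha : 0 < a) (hl : 0 < l)
    (hm : 0 < m) (hf : Tendsto f (𝓝[≠] 0) (𝓝 l)) (hg : Tendsto g (𝓝[≠] 0) (𝓝 m)) :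
    ∃ a' ∈ Ioc 0 a, ∃ c₁ c₂ : ℝ, 0 < c₁ ∧ c₁ ≤ c₂ ∧ ∀ θ ∈ Icc (-a') a', θ ≠ 0 →
      (c₁ ≤ f θ ∧ f θ ≤ c₂) ∧ (c₁ ≤ g θ ∧ g θ ≤ c₂) := by
  have hmin : 0 < min l m := lt_min hl hm
  have hmem : ∀ x, min l m ≤ x → x ≤ max l m → Icc (min l m / 2) (2 * max l m) ∈ 𝓝 x :=
    fun x hmin_le hle_max => Icc_mem_nhds (by linarith) (by linarith)
  have hev : ∀ᶠ θ in 𝓝[≠] 0,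
      f θ ∈ Icc (min l m / 2) (2 * max l m) ∧ g θ ∈ Icc (min l m / 2) (2 * max l m) :=
    (hf.eventually_mem (hmem l (min_le_left _ _) (le_max_left _ _))).and
      (hg.eventually_mem (hmem m (min_le_right _ _) (le_max_right _ _)))
  obtain ⟨ε, hε, hball⟩ := Metric.eventually_nhds_iff.mp (eventually_nhdsWithin_iff.mp hev)
  refine ⟨min a (ε / 2), ⟨by positivity, min_le_left _ _⟩, min l m / 2, 2 * max l m,
    by positivity, by linarith [min_le_max (a := l) (b := m)], fun θ hθ hne => hball ?_ hne⟩
  rw [Real.dist_0_eq_abs, abs_lt]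
  constructor <;> linarith [hθ.1, hθ.2, min_le_right a (ε / 2)]

section critAngle

variable {y y' : ℝ → ℝ × ℝ} {x₀ : ℝ × ℝ}

theorem critAngle_eventuallyEq_arctan (hy : ContinuousAt y 0) (h : (y 0 - x₀).2 < 0) :
    critAngle y x₀ =ᶠ[𝓝 0] fun t => arctan ((y t - x₀).1 / -(y t - x₀).2) := by
  filter_upwards [(hy.sub continuousAt_const).snd.eventually_lt continuousAt_const h] with t ht
  exact arcsin_div_sqrt_eq_arctan ht

theorem eventually_hasDerivAt_critAngle (hy : ∀ t, HasDerivAt y (y' t) t)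
    (h : (y 0 - x₀).2 < 0) :
    ∀ᶠ t in 𝓝 0, HasDerivAt (critAngle y x₀)
      (((y t - x₀).1 * (y' t).2 - (y' t).1 * (y t - x₀).2) /
        ((y t - x₀).1 ^ 2 + (y t - x₀).2 ^ 2)) t := by
  have hy0 : ContinuousAt y 0 := (hy 0).continuousAt
  filter_upwards [(critAngle_eventuallyEq_arctan hy0 h).eventuallyEq_nhds,
    (hy0.sub continuousAt_const).snd.eventually_lt continuousAt_const h] with t heq ht
  exact (((hy t).sub_const x₀).fst.arctan_div_neg ((hy t).sub_const x₀).snd ht.ne)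
    |>.congr_of_eventuallyEq heq

end critAngle

theorem stmt10_general (a : ℝ) (ha : 0 < a) (y : ℝ → ℝ × ℝ) (hy : ContDiff ℝ 4 y)
    (htang : ∀ θ ∈ Icc (-a) a,
      Real.cos θ * (deriv y θ).1 + Real.sin θ * (deriv y θ).2 = 0)
    (hcurv : ∀ θ ∈ Icc (-a) a,
      0 < Real.cos θ * (deriv (deriv y) θ).1 + Real.sin θ * (deriv (deriv y) θ).2)
    (x₀ : ℝ × ℝ)
    (hx1 : (y 0 - x₀).1 = 0) (hx2 : (y 0 - x₀).2 < 0) :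
    ∃ a' ∈ Ioc 0 a, ∃ c₁ c₂ : ℝ, 0 < c₁ ∧ c₁ ≤ c₂ ∧
      ∀ θ ∈ Icc (-a') a', θ ≠ 0 →
        (c₁ ≤ critAngle y x₀ θ / θ ^ 2 ∧ critAngle y x₀ θ / θ ^ 2 ≤ c₂) ∧
        (c₁ ≤ deriv (critAngle y x₀) θ / θ ∧ deriv (critAngle y x₀) θ / θ ≤ c₂) := by
  have h0 : (0 : ℝ) ∈ Icc (-a) a := ⟨by linarith, ha.le⟩
  have hy' : ContDiff ℝ 3 (deriv y) := (contDiff_succ_iff_deriv (n := 3).mp hy).2.2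
  have hdy : ∀ t, HasDerivAt y (deriv y t) t :=
    fun t => (hy.differentiable (by norm_num) t).hasDerivAt
  have hddy : HasDerivAt (deriv y) (deriv (deriv y) 0) 0 :=
    (hy'.differentiable (by norm_num) 0).hasDerivAt
  have hU0 : (deriv y 0).1 = 0 := by simpa using htang 0 h0
  have hL : 0 < (deriv (deriv y) 0).1 := by simpa using hcurv 0 h0
  have hu : HasDerivAt (fun t => (y t - x₀).1) 0 0 := by
    have h := ((hdy 0).sub_const x₀).fst
    rwa [hU0] at h
  have hv : ContinuousAt (fun t => (y t - x₀).2) 0 :=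
    ((hdy 0).continuousAt.sub continuousAt_const).snd
  have hD := eventually_hasDerivAt_critAngle hdy hx2
  have hderiv_div := tendsto_wronskian_div_sq_add_sq_div hu hx1 hddy.fst hU0 hv
    hy'.continuous.snd.continuousAt hx2.ne
  have hval_div := tendsto_div_sq_of_tendsto_deriv_div hD (by simp [critAngle, hx1]) hderiv_div
  have hpos : 0 < (deriv (deriv y) 0).1 / -(y 0 - x₀).2 := div_pos hL (neg_pos.2 hx2)
  refine exists_Icc_bounds_of_tendsto_pos ha (half_pos hpos) hpos hval_div
    (hderiv_div.congr' (eventually_nhdsWithin_of_eventually_nhds ?_))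
  filter_upwards [hD] with t ht
  rw [ht.deriv]

/-- Tangent-point case: for `x₀` off the curve on the tangent line at `y(0)`, the
critical-direction angle `A₁` vanishes to second order: `A₁(θ) ≍ θ²` and `A₁'(θ) ≍ θ`
near `θ = 0`. -/
theorem stmt10 (a : ℝ) (ha : 0 < a) (y : ℝ → ℝ × ℝ) (hy : ContDiff ℝ 4 y)
    (htang : ∀ θ ∈ Icc (-a) a,
      Real.cos θ * (deriv y θ).1 + Real.sin θ * (deriv y θ).2 = 0)
    (hperp : ∀ θ ∈ Icc (-a) a,
      -Real.sin θ * (deriv y θ).1 + Real.cos θ * (deriv y θ).2 < 0)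
    (hcurv : ∀ θ ∈ Icc (-a) a,
      0 < Real.cos θ * (deriv (deriv y) θ).1 + Real.sin θ * (deriv (deriv y) θ).2)
    (x₀ : ℝ × ℝ) (hx₀ : x₀ ≠ y 0)
    (hx1 : (y 0 - x₀).1 = 0) (hx2 : (y 0 - x₀).2 < 0) :
    ∃ a' ∈ Ioc 0 a, ∃ c₁ c₂ : ℝ, 0 < c₁ ∧ c₁ ≤ c₂ ∧
      ∀ θ ∈ Icc (-a') a', θ ≠ 0 →
        (c₁ ≤ critAngle y x₀ θ / θ ^ 2 ∧ critAngle y x₀ θ / θ ^ 2 ≤ c₂) ∧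
        (c₁ ≤ deriv (critAngle y x₀) θ / θ ∧ deriv (critAngle y x₀) θ / θ ≤ c₂) :=
  stmt10_general a ha y hy htang hcurv x₀ hx1 hx2
end

section
/- Assume the curve convention: a > 0 and y : [−a,a] → ℝ² is C⁴ with θ⃗·y′(θ) = 0, θ⃗⊥·y′(θ) < 0, θ⃗·y″(θ) > 0 for all θ ∈ [−a,a]. Let x₀ ∈ ℝ² with x₀ ≠ y(0), (1,0)·(y(0) − x₀) = 0, and (0,1)·(y(0) − x₀) < 0. Define A₁(θ) := arcsin( (1,0)·(y(θ) − x₀) / |y(θ) − x₀| ) and R₁(θ,α) := (cos α, sin α)·(y(θ) − x₀). Then there exist a′ ∈ (0,a] and constants c₂ ≥ c₁ > 0 such that for all θ ∈ [−a′,a′] and all α ∈ [−π/2, π/2]: (i) R₁(θ,α) = 0 if and only if α = A₁(θ), and if α ≠ A₁(θ) then c₁ ≤ R₁(θ,α)/(A₁(θ) − α) ≤ c₂; (ii) if θ ≠ α then c₁ ≤ ((cos α, sin α)·y′(θ))/(θ − α) ≤ c₂; (iii) |(−sin α, cos α)·(y(θ) − x₀)| ≤ c₂. -/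
open Real Set
set_option maxHeartbeats 1000000


lemma sinc_le_one (x : ℝ) : Real.sin x / x ≤ 1 := by
  rcases lt_trichotomy x 0 with h | h | h
  · rw [show Real.sin x / x = Real.sin (-x) / (-x) by rw [Real.sin_neg, neg_div_neg_eq]]
    rw [div_le_one (by linarith)]
    exact Real.sin_le (by linarith)
  · simp [h]
  · rw [div_le_one h]; exact Real.sin_le h.le

lemma sinc_lb_pos {x : ℝ} (h0 : 0 < x) (hx : x ≤ 3 * π / 4) :
    Real.sin (3 * π / 4) / (3 * π / 4) ≤ Real.sin x / x := by
  have hπ := Real.pi_pos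
  have hM : (0:ℝ) < 3 * π / 4 := by linarith
  have hconc : ConcaveOn ℝ (Icc 0 π) Real.sin := strictConcaveOn_sin_Icc.concaveOn
  have key := hconc.2
    (Set.mem_Icc.mpr ⟨le_refl (0:ℝ), hπ.le⟩)
    (Set.mem_Icc.mpr ⟨hM.le, by linarith⟩)
    (show (0:ℝ) ≤ 1 - x / (3 * π / 4) by
      rw [sub_nonneg]; exact div_le_one_of_le₀ hx hM.le)
    (show (0:ℝ) ≤ x / (3 * π / 4) by positivity) (by ring)
  simp only [smul_eq_mul, Real.sin_zero, mul_zero, zero_add] at key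
  rw [div_mul_cancel₀ _ hM.ne'] at key
  rw [div_le_div_iff₀ hM h0]
  have key2 := mul_le_mul_of_nonneg_right key hM.le
  calc Real.sin (3 * π / 4) * x = x / (3 * π / 4) * Real.sin (3 * π / 4) * (3 * π / 4) := by
        field_simp
    _ ≤ Real.sin x * (3 * π / 4) := key2

lemma sinc_lb {x : ℝ} (h0 : x ≠ 0) (hx : |x| ≤ 3 * π / 4) :
    Real.sin (3 * π / 4) / (3 * π / 4) ≤ Real.sin x / x := by
  rcases h0.lt_or_gt with h | h
  · rw [show Real.sin x / x = Real.sin (-x) / (-x) by rw [Real.sin_neg, neg_div_neg_eq]]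
    exact sinc_lb_pos (by linarith) (by rw [abs_of_neg h] at hx; linarith)
  · exact sinc_lb_pos h (by rwa [abs_of_pos h] at hx)

/-- Tangent-point case (Lemma 7.2(ii)): `R₁(θ,α) = (cos α, sin α)·(y(θ) - x₀)` is comparable
to `A₁(θ) - α`, `∂_θ R₁ ≍ θ - α`, and `∂_α R₁ = O(1)`, for `θ` near `0` and
`α ∈ [-π/2, π/2]`. -/
theorem stmt11 (a : ℝ) (ha : 0 < a) (y : ℝ → ℝ × ℝ) (hy : ContDiff ℝ 4 y)
    (htang : ∀ θ ∈ Icc (-a) a,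
      Real.cos θ * (deriv y θ).1 + Real.sin θ * (deriv y θ).2 = 0)
    (hperp : ∀ θ ∈ Icc (-a) a,
      -Real.sin θ * (deriv y θ).1 + Real.cos θ * (deriv y θ).2 < 0)
    (hcurv : ∀ θ ∈ Icc (-a) a,
      0 < Real.cos θ * (deriv (deriv y) θ).1 + Real.sin θ * (deriv (deriv y) θ).2)
    (x₀ : ℝ × ℝ) (hx₀ : x₀ ≠ y 0)
    (hx1 : (y 0 - x₀).1 = 0) (hx2 : (y 0 - x₀).2 < 0) :
    ∃ a' ∈ Ioc 0 a, ∃ c₁ c₂ : ℝ, 0 < c₁ ∧ c₁ ≤ c₂ ∧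
      ∀ θ ∈ Icc (-a') a', ∀ α ∈ Icc (-(π / 2)) (π / 2),
        ((Real.cos α * (y θ - x₀).1 + Real.sin α * (y θ - x₀).2 = 0 ↔
            α = critAngle y x₀ θ) ∧
          (α ≠ critAngle y x₀ θ →
            c₁ ≤ (Real.cos α * (y θ - x₀).1 + Real.sin α * (y θ - x₀).2) /
                (critAngle y x₀ θ - α) ∧
            (Real.cos α * (y θ - x₀).1 + Real.sin α * (y θ - x₀).2) /
                (critAngle y x₀ θ - α) ≤ c₂)) ∧
        (θ ≠ α →
          c₁ ≤ (Real.cos α * (deriv y θ).1 + Real.sin α * (deriv y θ).2) / (θ - α) ∧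
          (Real.cos α * (deriv y θ).1 + Real.sin α * (deriv y θ).2) / (θ - α) ≤ c₂) ∧
        |(-Real.sin α) * (y θ - x₀).1 + Real.cos α * (y θ - x₀).2| ≤ c₂ := by
  have hπ := Real.pi_pos
  set g0 : ℝ := (y 0 - x₀).2 with hg0def
  have hρ : (0:ℝ) < -g0 / 2 := by simp only [hg0def]; linarith
  have hycont : Continuous y := hy.continuous
  have hfcont : Continuous (fun θ => (y θ - x₀).1) := by fun_prop
  have hgcont : Continuous (fun θ => (y θ - x₀).2) := by fun_prop
  obtain ⟨δ₁, hδ₁pos, hδ₁⟩ := Metric.continuousAt_iff.mp (hfcont.continuousAt (x := 0))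
    (-g0 / 2) hρ
  obtain ⟨δ₂, hδ₂pos, hδ₂⟩ := Metric.continuousAt_iff.mp (hgcont.continuousAt (x := 0))
    (-g0 / 2) hρ
  set a' : ℝ := min (min a (π / 4)) (min δ₁ δ₂ / 2) with ha'def
  have ha'pos : 0 < a' := by
    apply lt_min (lt_min ha (by linarith)) (by positivity)
  have ha'a : a' ≤ a := le_trans (min_le_left _ _) (min_le_left _ _)
  have ha'π : a' ≤ π / 4 := le_trans (min_le_left _ _) (min_le_right _ _)
  have ha'δ : ∀ θ : ℝ, |θ| ≤ a' → |θ| < min δ₁ δ₂ := by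
    intro θ hθ
    have h1 : a' ≤ min δ₁ δ₂ / 2 := min_le_right _ _
    have h2 : (0:ℝ) < min δ₁ δ₂ := lt_min hδ₁pos hδ₂pos
    linarith
  -- pointwise smallness on [-a',a']
  have hfsmall : ∀ θ ∈ Icc (-a') a', |(y θ - x₀).1| < -g0 / 2 := by
    intro θ hθ
    have := hδ₁ (x := θ) (by
      rw [Real.dist_eq, sub_zero]
      exact lt_of_lt_of_le (ha'δ θ (abs_le.mpr hθ)) (min_le_left _ _))
    rwa [Real.dist_eq, hx1, sub_zero] at this
  have hgsmall : ∀ θ ∈ Icc (-a') a', (y θ - x₀).2 < g0 / 2 := by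
    intro θ hθ
    have := hδ₂ (x := θ) (by
      rw [Real.dist_eq, sub_zero]
      exact lt_of_lt_of_le (ha'δ θ (abs_le.mpr hθ)) (min_le_right _ _))
    rw [Real.dist_eq] at this
    have := abs_lt.mp this
    simp only [← hg0def] at this ⊢
    linarith [this.2]
  -- the radius function and its max
  set r : ℝ → ℝ := fun θ => Real.sqrt ((y θ - x₀).1 ^ 2 + (y θ - x₀).2 ^ 2) with hrdef
  have hrcont : Continuous r := by fun_prop
  have hne : (Icc (-a') a').Nonempty := ⟨0, by constructor <;> linarith⟩
  obtain ⟨θC, hθCmem, hθC⟩ := isCompact_Icc.exists_isMaxOn hne hrcont.continuousOn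
  set C : ℝ := r θC with hCdef
  -- the tangential speed and its min/max
  set s : ℝ → ℝ := fun θ => Real.sin θ * (deriv y θ).1 - Real.cos θ * (deriv y θ).2
    with hsdef
  have hdc : Continuous (deriv y) := hy.continuous_deriv (by norm_num)
  have hscont : Continuous s := by fun_prop
  obtain ⟨θm, hθmmem, hθm⟩ := isCompact_Icc.exists_isMinOn hne hscont.continuousOn
  obtain ⟨θM, hθMmem, hθM⟩ := isCompact_Icc.exists_isMaxOn hne hscont.continuousOn
  set m : ℝ := s θm with hmdef
  set M : ℝ := s θM with hMdef
  have hsub : Icc (-a') a' ⊆ Icc (-a) a := Icc_subset_Icc (by linarith) ha'a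
  have hspos : ∀ θ ∈ Icc (-a') a', 0 < s θ := by
    intro θ hθ
    have := hperp θ (hsub hθ)
    simp only [hsdef]
    linarith
  have hmpos : 0 < m := hspos θm hθmmem
  have hmM : m ≤ M := le_trans (hθm hθMmem) le_rfl
  -- sinc constant
  set κ : ℝ := Real.sin (3 * π / 4) / (3 * π / 4) with hκdef
  have hκpos : 0 < κ := by
    apply div_pos (Real.sin_pos_of_pos_of_lt_pi (by linarith) (by linarith)) (by linarith)
  have hκ1 : κ ≤ 1 := sinc_le_one _
  -- constants
  refine ⟨a', ⟨ha'pos, ha'a⟩, min (-g0 / 2 * κ) (m * κ), max C M, ?_, ?_, ?_⟩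
  · exact lt_min (by positivity) (by positivity)
  · calc min (-g0 / 2 * κ) (m * κ) ≤ m * κ := min_le_right _ _
      _ ≤ m * 1 := mul_le_mul_of_nonneg_left hκ1 hmpos.le
      _ = m := mul_one m
      _ ≤ M := hmM
      _ ≤ max C M := le_max_right _ _
  intro θ hθ α hα
  have hθa : θ ∈ Icc (-a) a := hsub hθ
  have hθ4 : |θ| ≤ π / 4 := le_trans (abs_le.mpr hθ) ha'π
  have hα2 : |α| ≤ π / 2 := abs_le.mpr ⟨by linarith [hα.1], hα.2⟩
  set f : ℝ := (y θ - x₀).1 with hfdef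
  set g : ℝ := (y θ - x₀).2 with hgdef
  have hf : |f| < -g0 / 2 := hfsmall θ hθ
  have hg : g < g0 / 2 := hgsmall θ hθ
  have hgneg : g < 0 := by linarith
  have hfg : |f| ≤ -g := by
    have : -g0 / 2 ≤ -g := by linarith
    linarith
  set R : ℝ := Real.sqrt (f ^ 2 + g ^ 2) with hRdef
  have hRr : R = r θ := rfl
  have hRsq : R ^ 2 = f ^ 2 + g ^ 2 := Real.sq_sqrt (by positivity)
  have hg2pos : 0 < g ^ 2 := by
    have := mul_pos_of_neg_of_neg hgneg hgneg
    calc (0:ℝ) < g * g := this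
      _ = g ^ 2 := by ring
  have hRpos : 0 < R := Real.sqrt_pos.mpr (by linarith [sq_nonneg f])
  have hgR : -g ≤ R := by
    rw [hRdef, show -g = |g| from (abs_of_neg hgneg).symm, ← Real.sqrt_sq_eq_abs]
    exact Real.sqrt_le_sqrt (by linarith [sq_nonneg f])
  have hfR : |f| ≤ R := le_trans hfg hgR
  have hRρ : -g0 / 2 ≤ R := le_trans (by linarith : -g0 / 2 ≤ -g) hgR
  have hRC : R ≤ C := hθC hθ
  -- the critical angle
  set A : ℝ := critAngle y x₀ θ with hAdef
  have hfR1 : -1 ≤ f / R ∧ f / R ≤ 1 := by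
    constructor
    · rw [neg_le, ← neg_div]
      exact div_le_one_of_le₀ (by cases abs_le.mp hfR with | intro h1 h2 => linarith) hRpos.le
    · exact div_le_one_of_le₀ (abs_le.mp hfR).2 hRpos.le
  have hsinA : Real.sin A = f / R := by
    rw [hAdef, critAngle, ← hfdef, ← hgdef, ← hRdef]
    exact Real.sin_arcsin hfR1.1 hfR1.2
  have hcosA : Real.cos A = -g / R := by
    rw [hAdef, critAngle, ← hfdef, ← hgdef, ← hRdef, Real.cos_arcsin]
    rw [show 1 - (f / R) ^ 2 = (-g / R) ^ 2 by
      field_simp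
      linarith [hRsq]]
    exact Real.sqrt_sq (div_nonneg (by linarith) hRpos.le)
  -- |A| ≤ π/4
  have hA4 : |A| ≤ π / 4 := by
    have hsq : (f / R) ^ 2 ≤ (Real.sqrt 2 / 2) ^ 2 := by
      have h2 : (Real.sqrt 2 / 2) ^ 2 = 1 / 2 := by
        rw [div_pow, Real.sq_sqrt (by norm_num : (0:ℝ) ≤ 2)]; norm_num
      rw [h2, div_pow, div_le_div_iff₀ (pow_pos hRpos 2) (by norm_num : (0:ℝ) < 2)]
      have hfg2 : f ^ 2 ≤ g ^ 2 := by
        have h := abs_le.mp hfg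
        have h2 := sq_le_sq' h.1 h.2
        calc f ^ 2 ≤ (-g) ^ 2 := h2
          _ = g ^ 2 := by ring
      linarith [hRsq]
    have habs : |f / R| ≤ Real.sqrt 2 / 2 := by
      calc |f / R| = Real.sqrt ((f / R) ^ 2) := (Real.sqrt_sq_eq_abs _).symm
        _ ≤ Real.sqrt ((Real.sqrt 2 / 2) ^ 2) := Real.sqrt_le_sqrt hsq
        _ = Real.sqrt 2 / 2 := Real.sqrt_sq (by positivity)
    have hsin4 : Real.sin (π / 4) = Real.sqrt 2 / 2 := Real.sin_pi_div_four
    rw [abs_le] at habs ⊢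
    constructor
    · rw [hAdef, critAngle, ← hfdef, ← hgdef, ← hRdef]
      calc -(π / 4) = Real.arcsin (-(Real.sqrt 2 / 2)) := by
            rw [← hsin4, ← Real.sin_neg, Real.arcsin_sin (by linarith) (by linarith)]
        _ ≤ Real.arcsin (f / R) := Real.monotone_arcsin (by linarith [habs.1])
    · rw [hAdef, critAngle, ← hfdef, ← hgdef, ← hRdef]
      calc Real.arcsin (f / R) ≤ Real.arcsin (Real.sqrt 2 / 2) :=
            Real.monotone_arcsin habs.2
        _ = π / 4 := by rw [← hsin4, Real.arcsin_sin (by linarith) (by linarith)]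
  have hAα : |A - α| ≤ 3 * π / 4 := by
    calc |A - α| ≤ |A| + |α| := abs_sub _ _
      _ ≤ 3 * π / 4 := by linarith
  -- key identity for (i)
  have hkey : Real.cos α * f + Real.sin α * g = R * Real.sin (A - α) := by
    rw [Real.sin_sub, hsinA, hcosA]
    field_simp
    ring
  refine ⟨⟨?_, ?_⟩, ?_, ?_⟩
  · -- the iff
    rw [hkey]
    constructor
    · intro h
      have hsin0 : Real.sin (A - α) = 0 := by
        rcases mul_eq_zero.mp h with h' | h'
        · exact absurd h' hRpos.ne'
        · exact h'
      have := (Real.sin_eq_zero_iff_of_lt_of_lt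
        (by cases abs_le.mp hAα with | intro h1 h2 => linarith)
        (by cases abs_le.mp hAα with | intro h1 h2 => linarith)).mp hsin0
      linarith [sub_eq_zero.mp this]
    · intro h
      rw [h, sub_self, Real.sin_zero, mul_zero]
  · -- the quotient bounds for (i)
    intro hne'
    have hx0 : A - α ≠ 0 := sub_ne_zero.mpr (Ne.symm hne')
    rw [hkey, mul_div_assoc]
    have hs1 : κ ≤ Real.sin (A - α) / (A - α) := sinc_lb hx0 hAα
    have hs2 : Real.sin (A - α) / (A - α) ≤ 1 := sinc_le_one _
    constructor
    · calc min (-g0 / 2 * κ) (m * κ) ≤ -g0 / 2 * κ := min_le_left _ _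
        _ ≤ R * (Real.sin (A - α) / (A - α)) :=
            mul_le_mul hRρ hs1 hκpos.le hRpos.le
    · calc R * (Real.sin (A - α) / (A - α)) ≤ C * 1 :=
            mul_le_mul hRC hs2 (le_trans hκpos.le hs1) (le_trans hRpos.le hRC)
        _ = C := mul_one C
        _ ≤ max C M := le_max_left _ _
  · -- part (ii)
    intro hne'
    have hx0 : θ - α ≠ 0 := sub_ne_zero.mpr hne'
    have hθα : |θ - α| ≤ 3 * π / 4 := by
      calc |θ - α| ≤ |θ| + |α| := abs_sub _ _
        _ ≤ 3 * π / 4 := by linarith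
    have hs0 := htang θ hθa
    have hpyth := Real.sin_sq_add_cos_sq θ
    have hid : Real.cos α * (deriv y θ).1 + Real.sin α * (deriv y θ).2 =
        s θ * Real.sin (θ - α) := by
      simp only [hsdef]
      rw [Real.sin_sub]
      linear_combination (Real.cos θ * Real.cos α + Real.sin θ * Real.sin α) * hs0 -
        (Real.cos α * (deriv y θ).1 + Real.sin α * (deriv y θ).2) * hpyth
    rw [hid, mul_div_assoc]
    have hs1 : κ ≤ Real.sin (θ - α) / (θ - α) := sinc_lb hx0 hθα
    have hs2 : Real.sin (θ - α) / (θ - α) ≤ 1 := sinc_le_one _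
    have hsθpos : 0 < s θ := hspos θ hθ
    have hmθ : m ≤ s θ := hθm hθ
    have hMθ : s θ ≤ M := hθM hθ
    constructor
    · calc min (-g0 / 2 * κ) (m * κ) ≤ m * κ := min_le_right _ _
        _ ≤ s θ * (Real.sin (θ - α) / (θ - α)) :=
            mul_le_mul hmθ hs1 hκpos.le hsθpos.le
    · calc s θ * (Real.sin (θ - α) / (θ - α)) ≤ M * 1 :=
            mul_le_mul hMθ hs2 (le_trans hκpos.le hs1) (le_trans hsθpos.le hMθ)
        _ = M := mul_one M
        _ ≤ max C M := le_max_right _ _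
  · -- part (iii)
    have hsq : (-Real.sin α * f + Real.cos α * g) ^ 2 ≤ R ^ 2 := by
      rw [hRsq]
      have hp := Real.sin_sq_add_cos_sq α
      have hq := sq_nonneg (Real.cos α * f + Real.sin α * g)
      have hiden : (-Real.sin α * f + Real.cos α * g) ^ 2 +
          (Real.cos α * f + Real.sin α * g) ^ 2 =
          (Real.sin α ^ 2 + Real.cos α ^ 2) * (f ^ 2 + g ^ 2) := by ring
      rw [hp, one_mul] at hiden
      linarith
    calc |(-Real.sin α) * f + Real.cos α * g|
        = Real.sqrt (((-Real.sin α) * f + Real.cos α * g) ^ 2) :=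
          (Real.sqrt_sq_eq_abs _).symm
      _ ≤ Real.sqrt (R ^ 2) := Real.sqrt_le_sqrt (by rw [neg_mul] at hsq ⊢; exact hsq)
      _ = R := Real.sqrt_sq hRpos.le
      _ ≤ max C M := le_trans hRC (le_max_left _ _)
end

section
/- There exists a constant C > 0 such that for all M ≥ 1 and all τ ≥ 0: ∫₀^M ( (1 + τ + M − r)² √r )^{-1} dr ≤ C ( M^{-3/2} + M^{-1/2} (1 + τ)^{-1} ). -/
open MeasureTheory Set

/-- Model integral bound for the contribution of sampling directions beyond the maximal
critical direction: `∫₀^M ((1+τ+M-r)² √r)⁻¹ dr ≤ C (M^{-3/2} + M^{-1/2}(1+τ)⁻¹)`. -/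
theorem stmt12 : ∃ C > 0, ∀ M : ℝ, 1 ≤ M → ∀ τ : ℝ, 0 ≤ τ →
    (∫ r in Icc (0 : ℝ) M, ((1 + τ + M - r) ^ 2 * Real.sqrt r)⁻¹) ≤
      C * (M ^ (-(3 / 2) : ℝ) + M ^ (-(1 / 2) : ℝ) * (1 + τ)⁻¹) := by
  refine ⟨6, by norm_num, fun M hM τ hτ => ?_⟩
  have hM0 : (0:ℝ) < M := lt_of_lt_of_le one_pos hM
  have h1τ : (0:ℝ) < 1 + τ := by linarith
  obtain ⟨a, ha⟩ : ∃ x : ℝ, x = 1 + τ + M := ⟨_, rfl⟩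
  have ha0 : 0 < a := by rw [ha]; positivity
  have hsM : 0 < Real.sqrt M := Real.sqrt_pos.mpr hM0
  -- pointwise bound
  have key : ∀ r ∈ Icc (0:ℝ) M, ((a - r)^2 * Real.sqrt r)⁻¹ ≤
      2 / (M * (1 + τ)) * (Real.sqrt r)⁻¹ + Real.sqrt 2 / Real.sqrt M * ((a - r)^2)⁻¹ := by
    intro r hr
    obtain ⟨hr0, hrM⟩ := hr
    have hsr : 0 ≤ Real.sqrt r := Real.sqrt_nonneg r
    have har : 1 + τ ≤ a - r := by rw [ha]; linarith
    have har0 : 0 < a - r := lt_of_lt_of_le h1τ har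
    have hg2nonneg : 0 ≤ Real.sqrt 2 / Real.sqrt M * ((a - r)^2)⁻¹ := by positivity
    have hg1nonneg : 0 ≤ 2 / (M * (1 + τ)) * (Real.sqrt r)⁻¹ := by positivity
    rcases le_or_gt r (M/2) with h | h
    · rcases eq_or_lt_of_le hr0 with rfl | hr0'
      · simp [Real.sqrt_zero]
        positivity
      · have hsr0 : 0 < Real.sqrt r := Real.sqrt_pos.mpr hr0'
        have hsq : (1 + τ) * (M/2) ≤ (a - r)^2 := by
          rw [ha]
          have hy : M/2 ≤ M - r := by linarith
          nlinarith [sq_nonneg (1 + τ - (M - r)), mul_le_mul_of_nonneg_left hy h1τ.le]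
        have h1 : ((a - r)^2 * Real.sqrt r)⁻¹ ≤ ((1 + τ) * (M/2) * Real.sqrt r)⁻¹ := by
          apply inv_anti₀ (by positivity)
          exact mul_le_mul_of_nonneg_right hsq hsr
        have h2 : ((1 + τ) * (M/2) * Real.sqrt r)⁻¹ = 2 / (M * (1 + τ)) * (Real.sqrt r)⁻¹ := by
          rw [mul_inv]
          congr 1
          rw [eq_div_iff (by positivity : M * (1 + τ) ≠ 0), inv_mul_eq_div,
            div_eq_iff (by positivity : (1 + τ) * (M/2) ≠ 0)]
          ring
        linarith [h1, h2.le]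
    · have hsrM : Real.sqrt M / Real.sqrt 2 ≤ Real.sqrt r := by
        have h' : Real.sqrt (M / 2) ≤ Real.sqrt r := Real.sqrt_le_sqrt (by linarith)
        rwa [Real.sqrt_div hM0.le 2] at h'
      have hs2 : 0 < Real.sqrt 2 := Real.sqrt_pos.mpr (by norm_num)
      have hsr0 : 0 < Real.sqrt r := lt_of_lt_of_le (by positivity) hsrM
      have hinv : (Real.sqrt r)⁻¹ ≤ Real.sqrt 2 / Real.sqrt M := by
        have h0 : 0 < Real.sqrt M / Real.sqrt 2 := by positivity
        have h1 := inv_anti₀ h0 hsrM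
        rwa [inv_div] at h1
      calc ((a - r)^2 * Real.sqrt r)⁻¹ = ((a - r)^2)⁻¹ * (Real.sqrt r)⁻¹ := by rw [mul_inv]
        _ ≤ ((a - r)^2)⁻¹ * (Real.sqrt 2 / Real.sqrt M) :=
            mul_le_mul_of_nonneg_left hinv (by positivity)
        _ = Real.sqrt 2 / Real.sqrt M * ((a - r)^2)⁻¹ := by ring
        _ ≤ 2 / (M * (1 + τ)) * (Real.sqrt r)⁻¹ + Real.sqrt 2 / Real.sqrt M * ((a - r)^2)⁻¹ := by
            linarith
  -- integrability of the sqrt part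
  have hg1i : IntegrableOn (fun r : ℝ => (Real.sqrt r)⁻¹) (Icc (0:ℝ) M) := by
    rw [integrableOn_Icc_iff_integrableOn_Ioc]
    have h : IntervalIntegrable (fun x : ℝ => x ^ (-(1/2) : ℝ)) volume 0 M :=
      intervalIntegral.intervalIntegrable_rpow' (by norm_num)
    have h' : IntegrableOn (fun x : ℝ => x ^ (-(1/2) : ℝ)) (Ioc (0:ℝ) M) := by
      rwa [intervalIntegrable_iff_integrableOn_Ioc_of_le hM0.le] at h
    apply h'.congr_fun ?_ measurableSet_Ioc
    intro x hx
    simp only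
    rw [Real.rpow_neg hx.1.le, Real.sqrt_eq_rpow]
  -- integrability of the (a-r)^{-2} part
  have hcont : ContinuousOn (fun r : ℝ => ((a - r)^2)⁻¹) (Icc (0:ℝ) M) := by
    apply ContinuousOn.inv₀
    · exact ((continuous_const.sub continuous_id).pow 2).continuousOn
    · intro r hr
      have h1 : 1 + τ ≤ a - r := by rw [ha]; linarith [hr.2]
      exact pow_ne_zero _ (ne_of_gt (lt_of_lt_of_le h1τ h1))
  have hg2i : IntegrableOn (fun r : ℝ => ((a - r)^2)⁻¹) (Icc (0:ℝ) M) :=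
    hcont.integrableOn_compact isCompact_Icc
  have hg1i' : IntegrableOn (fun r : ℝ => 2 / (M * (1 + τ)) * (Real.sqrt r)⁻¹) (Icc (0:ℝ) M) :=
    hg1i.const_mul _
  have hg2i' : IntegrableOn (fun r : ℝ => Real.sqrt 2 / Real.sqrt M * ((a - r)^2)⁻¹)
      (Icc (0:ℝ) M) := hg2i.const_mul _
  have hgi : IntegrableOn (fun r : ℝ => 2 / (M * (1 + τ)) * (Real.sqrt r)⁻¹ +
      Real.sqrt 2 / Real.sqrt M * ((a - r)^2)⁻¹) (Icc (0:ℝ) M) := hg1i'.add hg2i'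
  -- integrability of f
  have hfi : IntegrableOn (fun r : ℝ => ((a - r)^2 * Real.sqrt r)⁻¹) (Icc (0:ℝ) M) := by
    apply Integrable.mono' hgi
    · have hm : Measurable fun r : ℝ => ((a - r)^2 * Real.sqrt r)⁻¹ :=
        (((measurable_const.sub measurable_id).pow_const 2).mul Real.continuous_sqrt.measurable).inv
      exact hm.aestronglyMeasurable
    · filter_upwards [ae_restrict_mem measurableSet_Icc] with r hr
      rw [Real.norm_eq_abs, abs_of_nonneg (by positivity)]
      exact key r hr
  -- compute ∫ (√r)⁻¹
  have Ig1 : ∫ r in Icc (0:ℝ) M, (Real.sqrt r)⁻¹ = 2 * Real.sqrt M := by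
    rw [integral_Icc_eq_integral_Ioc, ← intervalIntegral.integral_of_le hM0.le]
    have hcg : EqOn (fun r : ℝ => (Real.sqrt r)⁻¹) (fun r : ℝ => r ^ (-(1/2) : ℝ))
        (uIcc (0:ℝ) M) := by
      intro x hx
      rw [uIcc_of_le hM0.le] at hx
      simp only
      rw [Real.rpow_neg hx.1, Real.sqrt_eq_rpow]
    rw [intervalIntegral.integral_congr hcg,
      integral_rpow (Or.inl (by norm_num : (-1:ℝ) < -(1/2)))]
    rw [Real.zero_rpow (by norm_num), Real.sqrt_eq_rpow]
    norm_num
    ring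
  -- compute ∫ ((a-r)^2)⁻¹
  have Ig2 : ∫ r in Icc (0:ℝ) M, ((a - r)^2)⁻¹ = (1 + τ)⁻¹ - a⁻¹ := by
    rw [integral_Icc_eq_integral_Ioc, ← intervalIntegral.integral_of_le hM0.le]
    have hsub := intervalIntegral.integral_comp_sub_left (a := 0) (b := M)
      (fun x : ℝ => (x^2)⁻¹) a
    rw [hsub]
    have hz : ∀ x : ℝ, (x^2)⁻¹ = x ^ (-2 : ℤ) := by
      intro x
      rw [zpow_neg, zpow_two, pow_two]
    simp_rw [hz]
    rw [integral_zpow (Or.inr ⟨by norm_num, by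
      rw [uIcc_of_le (by linarith : a - M ≤ a - 0)]
      intro hmem
      have h0 : a - M = 1 + τ := by rw [ha]; ring
      rw [h0] at hmem
      exact absurd hmem.1 (by linarith)⟩)]
    have haM : a - M = 1 + τ := by rw [ha]; ring
    rw [haM]
    norm_num
    ring
  -- put it together
  have hmono : (∫ r in Icc (0:ℝ) M, ((a - r)^2 * Real.sqrt r)⁻¹) ≤
      ∫ r in Icc (0:ℝ) M, (2 / (M * (1 + τ)) * (Real.sqrt r)⁻¹ +
        Real.sqrt 2 / Real.sqrt M * ((a - r)^2)⁻¹) :=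
    setIntegral_mono_on hfi hgi measurableSet_Icc key
  have hsplit : (∫ r in Icc (0:ℝ) M, (2 / (M * (1 + τ)) * (Real.sqrt r)⁻¹ +
      Real.sqrt 2 / Real.sqrt M * ((a - r)^2)⁻¹)) =
      2 / (M * (1 + τ)) * (2 * Real.sqrt M) +
        Real.sqrt 2 / Real.sqrt M * ((1 + τ)⁻¹ - a⁻¹) := by
    rw [integral_add hg1i' hg2i', integral_const_mul, integral_const_mul, Ig1, Ig2]
  -- final arithmetic
  have hM2 : Real.sqrt M * Real.sqrt M = M := Real.mul_self_sqrt hM0.le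
  have hrw : M ^ (-(1/2) : ℝ) = (Real.sqrt M)⁻¹ := by
    rw [Real.rpow_neg hM0.le, Real.sqrt_eq_rpow]
  have hsqrt2 : Real.sqrt 2 ≤ 2 := by
    nlinarith [Real.sq_sqrt (by norm_num : (0:ℝ) ≤ 2), Real.sqrt_nonneg 2]
  have h32 : 0 ≤ M ^ (-(3/2) : ℝ) := Real.rpow_nonneg hM0.le _
  have e1 : 2 / (M * (1 + τ)) * (2 * Real.sqrt M) = 4 * ((Real.sqrt M)⁻¹ * (1 + τ)⁻¹) := by
    field_simp
    set s := Real.sqrt M with hsdef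
    rw [← hM2]
    ring
  have e2 : Real.sqrt 2 / Real.sqrt M * ((1 + τ)⁻¹ - a⁻¹) ≤
      2 * ((Real.sqrt M)⁻¹ * (1 + τ)⁻¹) := by
    have hle : (1 + τ)⁻¹ - a⁻¹ ≤ (1 + τ)⁻¹ := by
      have : 0 ≤ a⁻¹ := by positivity
      linarith
    calc Real.sqrt 2 / Real.sqrt M * ((1 + τ)⁻¹ - a⁻¹)
        ≤ Real.sqrt 2 / Real.sqrt M * (1 + τ)⁻¹ :=
          mul_le_mul_of_nonneg_left hle (by positivity)
      _ ≤ 2 / Real.sqrt M * (1 + τ)⁻¹ := by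
          gcongr
      _ = 2 * ((Real.sqrt M)⁻¹ * (1 + τ)⁻¹) := by ring
  calc (∫ r in Icc (0:ℝ) M, ((1 + τ + M - r) ^ 2 * Real.sqrt r)⁻¹)
      = ∫ r in Icc (0:ℝ) M, ((a - r)^2 * Real.sqrt r)⁻¹ := by rw [ha]
    _ ≤ 2 / (M * (1 + τ)) * (2 * Real.sqrt M) +
        Real.sqrt 2 / Real.sqrt M * ((1 + τ)⁻¹ - a⁻¹) := hsplit ▸ hmono
    _ ≤ 6 * ((Real.sqrt M)⁻¹ * (1 + τ)⁻¹) := by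
        rw [e1]; linarith
    _ ≤ 6 * (M ^ (-(3/2) : ℝ) + M ^ (-(1/2) : ℝ) * (1 + τ)⁻¹) := by
        rw [hrw]
        have : 0 ≤ (1 + τ)⁻¹ := by positivity
        nlinarith
end

section
/- Let 0 < c₁ ≤ c₂ be constants. Let A : [0,∞) → [0,∞) be differentiable with A(0) = 0 and c₁ t ≤ A′(t) ≤ c₂ t for all t ≥ 0, and let (u_n)_{n ≥ 1} be an increasing sequence with u₁ ≥ c₁ and c₁ ≤ u_{n+1} − u_n ≤ c₂ for all n ≥ 1. Set v_n := A(u_n), v_{n+1/2} := (v_n + v_{n+1})/2, and V_n := [v_{n−1/2}, v_{n+1/2}] for n ≥ 2. Then there exist constants C₂ ≥ C₁ > 0 such that for every n ≥ 2: C₁ n² ≤ v_n ≤ C₂ n²; C₁ n ≤ v_{n+1/2} − v_{n−1/2} ≤ C₂ n; and for every α ∈ V_n: C₁ v_n ≤ α ≤ C₂ v_n and |v_n − α| = min_{m ≥ 1} |v_m − α|. -/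
/-!
Comparing `A` with `c₁ t² / 2` and `c₂ t² / 2` through their derivatives gives
`c₁ (t² - s²) / 2 ≤ A t - A s ≤ c₂ (t² - s²) / 2` for `0 ≤ s ≤ t`, while the gap conditions make
`u n` grow linearly. Hence `v n = A (u n)` is increasing with `v n ≍ n²`, and
`v (n + 1) - v (n - 1)`, controlled by `u (n + 1)² - u (n - 1)²`, is `≍ n`. Every point of
`V n` lies between `v (n - 1)` and `v (n + 1)`, both `≍ n² ≍ v n`; being between the two
midpoints around `v n` of an increasing sequence, it is closest to `v n`.
-/

open Set

section DerivativeComparison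

theorem monotoneOn_sub_of_hasDerivWithinAt_le {D : Set ℝ} (hD : Convex ℝ D)
    {f g f' g' : ℝ → ℝ} (hf : ∀ x ∈ D, HasDerivWithinAt f (f' x) D x)
    (hg : ∀ x ∈ D, HasDerivWithinAt g (g' x) D x) (hle : ∀ x ∈ interior D, f' x ≤ g' x) :
    MonotoneOn (fun x => g x - f x) D :=
  monotoneOn_of_hasDerivWithinAt_nonneg hD
    (fun x hx => ((hg x hx).sub (hf x hx)).continuousWithinAt)
    (fun x hx => ((hg x (interior_subset hx)).sub (hf x (interior_subset hx))).mono
      interior_subset)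
    (fun x hx => sub_nonneg.2 (hle x hx))

theorem hasDerivWithinAt_half_mul_sq (c x : ℝ) (s : Set ℝ) :
    HasDerivWithinAt (fun t => c / 2 * t ^ 2) (c * x) s x :=
  (((hasDerivAt_pow 2 x).const_mul (c / 2)).hasDerivWithinAt).congr_deriv (by ring)

variable {A A' : ℝ → ℝ} {c s t : ℝ}

theorem half_mul_sq_sub_sq_le_sub
    (hA : ∀ t ∈ Ici (0 : ℝ), HasDerivWithinAt A (A' t) (Ici 0) t)
    (hc : ∀ t : ℝ, 0 ≤ t → c * t ≤ A' t) (hs : 0 ≤ s) (hst : s ≤ t) :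
    c / 2 * (t ^ 2 - s ^ 2) ≤ A t - A s := by
  have := monotoneOn_sub_of_hasDerivWithinAt_le (convex_Ici 0)
    (fun x _ => hasDerivWithinAt_half_mul_sq c x _) hA
    (fun x hx => hc x (interior_subset hx)) hs (hs.trans hst : 0 ≤ t) hst
  linarith

theorem sub_le_half_mul_sq_sub_sq
    (hA : ∀ t ∈ Ici (0 : ℝ), HasDerivWithinAt A (A' t) (Ici 0) t)
    (hc : ∀ t : ℝ, 0 ≤ t → A' t ≤ c * t) (hs : 0 ≤ s) (hst : s ≤ t) :
    A t - A s ≤ c / 2 * (t ^ 2 - s ^ 2) := by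
  have := monotoneOn_sub_of_hasDerivWithinAt_le (convex_Ici 0) hA
    (fun x _ => hasDerivWithinAt_half_mul_sq c x _)
    (fun x hx => hc x (interior_subset hx)) hs (hs.trans hst : 0 ≤ t) hst
  linarith

end DerivativeComparison

section LinearGrowth

variable {u : ℕ → ℝ} {a : ℝ} {n : ℕ}

theorem mul_le_of_le_sub_succ (h1 : a ≤ u 1) (hgap : ∀ n : ℕ, 1 ≤ n → a ≤ u (n + 1) - u n)
    (hn : 1 ≤ n) : a * n ≤ u n := by
  induction n, hn using Nat.le_induction with
  | base => simpa using h1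
  | succ n hn ih => push_cast; linarith [hgap n hn]

theorem le_mul_of_sub_succ_le (h1 : u 1 ≤ a) (hgap : ∀ n : ℕ, 1 ≤ n → u (n + 1) - u n ≤ a)
    (hn : 1 ≤ n) : u n ≤ a * n := by
  induction n, hn using Nat.le_induction with
  | base => simpa using h1
  | succ n hn ih => push_cast; linarith [hgap n hn]

theorem sq_sub_sq_mem_Icc {b : ℝ} (ha : 0 ≤ a)
    (hu : ∀ n : ℕ, 1 ≤ n → a * n ≤ u n ∧ u n ≤ b * n)
    (hgap : ∀ n : ℕ, 1 ≤ n → a ≤ u (n + 1) - u n ∧ u (n + 1) - u n ≤ b) (hn : 2 ≤ n) :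
    4 * a ^ 2 * n ≤ u (n + 1) ^ 2 - u (n - 1) ^ 2 ∧
      u (n + 1) ^ 2 - u (n - 1) ^ 2 ≤ 4 * b ^ 2 * n := by
  obtain ⟨lo_pred, hi_pred⟩ := hu (n - 1) (by omega)
  obtain ⟨lo_succ, hi_succ⟩ := hu (n + 1) (by omega)
  obtain ⟨gap_pred, gap_pred'⟩ := hgap (n - 1) (by omega)
  obtain ⟨gap, gap'⟩ := hgap n (by omega)
  rw [Nat.sub_add_cancel (by omega)] at gap_pred gap_pred'
  rw [Nat.cast_pred (by omega)] at lo_pred hi_pred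
  push_cast at lo_succ hi_succ
  have hb : 0 ≤ b := by linarith
  have hsq : u (n + 1) ^ 2 - u (n - 1) ^ 2 =
      (u (n + 1) - u (n - 1)) * (u (n + 1) + u (n - 1)) := by ring
  rw [hsq]
  constructor
  · calc 4 * a ^ 2 * n = 2 * a * (2 * a * n) := by ring
      _ ≤ _ := mul_le_mul (by linarith) (by linarith) (by positivity) (by linarith)
  · calc _ ≤ 2 * b * (2 * b * n) :=
          mul_le_mul (by linarith) (by linarith) (by nlinarith) (by positivity)
      _ = 4 * b ^ 2 * n := by ring

end LinearGrowth

section Midpoints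

variable {v : ℕ → ℝ} {n : ℕ} {α : ℝ}

theorem Icc_midpoints_subset_Icc (hv : MonotoneOn v (Ici 1)) (hn : 2 ≤ n) :
    Icc ((v (n - 1) + v n) / 2) ((v n + v (n + 1)) / 2) ⊆ Icc (v (n - 1)) (v (n + 1)) := by
  have h₁ : v (n - 1) ≤ v n := hv (mem_Ici.2 (by omega)) (mem_Ici.2 (by omega)) (by omega)
  have h₂ : v n ≤ v (n + 1) := hv (mem_Ici.2 (by omega)) (mem_Ici.2 (by omega)) (by omega)
  exact Icc_subset_Icc (by linarith) (by linarith)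

theorem abs_sub_le_abs_sub_of_mem_Icc_midpoints (hv : MonotoneOn v (Ici 1)) (hn : 2 ≤ n)
    (hα : α ∈ Icc ((v (n - 1) + v n) / 2) ((v n + v (n + 1)) / 2)) {m : ℕ} (hm : 1 ≤ m) :
    |v n - α| ≤ |v m - α| := by
  obtain ⟨hlo, hhi⟩ := hα
  rcases lt_trichotomy m n with hmn | rfl | hnm
  · have h₁ : v m ≤ v (n - 1) := hv (mem_Ici.2 hm) (mem_Ici.2 (by omega)) (by omega)
    have h₂ : v m ≤ v n := hv (mem_Ici.2 hm) (mem_Ici.2 (by omega)) hmn.le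
    rw [abs_sub_comm (v m), abs_of_nonneg (by linarith : 0 ≤ α - v m)]
    exact abs_sub_le_iff.2 ⟨by linarith, by linarith⟩
  · exact le_rfl
  · have h₁ : v (n + 1) ≤ v m := hv (mem_Ici.2 (by omega)) (mem_Ici.2 hm) hnm
    have h₂ : v n ≤ v m := hv (mem_Ici.2 (by omega)) (mem_Ici.2 hm) hnm.le
    rw [abs_of_nonneg (by linarith : 0 ≤ v m - α)]
    exact abs_sub_le_iff.2 ⟨by linarith, by linarith⟩

theorem mul_le_and_le_mul_of_mem_Icc_pred_succ {a b : ℝ} (ha : 0 < a)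
    (hv : ∀ n : ℕ, 1 ≤ n → a * n ^ 2 ≤ v n ∧ v n ≤ b * n ^ 2) (hn : 2 ≤ n)
    (hα : α ∈ Icc (v (n - 1)) (v (n + 1))) :
    a / (4 * b) * v n ≤ α ∧ α ≤ 4 * b / a * v n := by
  obtain ⟨hlo, hhi⟩ := hα
  have hb : 0 < b := by
    have := hv 1 le_rfl
    norm_num at this
    linarith
  have hN : (2 : ℝ) ≤ n := by exact_mod_cast hn
  obtain ⟨hv_lo, hv_hi⟩ := hv n (by omega)
  have h_pred := (hv (n - 1) (by omega)).1
  have h_succ := (hv (n + 1) (by omega)).2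
  rw [Nat.cast_pred (by omega)] at h_pred
  push_cast at h_succ
  have hquarter : n ^ 2 / 4 ≤ ((n : ℝ) - 1) ^ 2 := by nlinarith
  constructor
  · calc a / (4 * b) * v n ≤ a / (4 * b) * (b * n ^ 2) := by gcongr
      _ = a * (n ^ 2 / 4) := by field_simp
      _ ≤ a * ((n : ℝ) - 1) ^ 2 := by gcongr
      _ ≤ α := h_pred.trans hlo
  · calc α ≤ b * ((n : ℝ) + 1) ^ 2 := hhi.trans h_succ
      _ ≤ b * (4 * n ^ 2) := by gcongr; nlinarith
      _ = 4 * b / a * (a * n ^ 2) := by field_simp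
      _ ≤ 4 * b / a * v n := by gcongr

theorem exists_bounds_of_quadratic_growth {v : ℕ → ℝ} {a b : ℝ} (ha : 0 < a)
    (hmono : MonotoneOn v (Ici 1))
    (hv : ∀ n : ℕ, 1 ≤ n → a * n ^ 2 ≤ v n ∧ v n ≤ b * n ^ 2)
    (hlen : ∀ n : ℕ, 2 ≤ n → 2 * a * n ≤ (v n + v (n + 1)) / 2 - (v (n - 1) + v n) / 2 ∧
      (v n + v (n + 1)) / 2 - (v (n - 1) + v n) / 2 ≤ 2 * b * n) :
    ∃ C₁ C₂ : ℝ, 0 < C₁ ∧ C₁ ≤ C₂ ∧ ∀ n : ℕ, 2 ≤ n →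
      (C₁ * (n : ℝ) ^ 2 ≤ v n ∧ v n ≤ C₂ * (n : ℝ) ^ 2) ∧
      (C₁ * (n : ℝ) ≤ (v n + v (n + 1)) / 2 - (v (n - 1) + v n) / 2 ∧
        (v n + v (n + 1)) / 2 - (v (n - 1) + v n) / 2 ≤ C₂ * (n : ℝ)) ∧
      ∀ α ∈ Icc ((v (n - 1) + v n) / 2) ((v n + v (n + 1)) / 2),
        (C₁ * v n ≤ α ∧ α ≤ C₂ * v n) ∧ ∀ m : ℕ, 1 ≤ m → |v n - α| ≤ |v m - α| := by
  have hab : a ≤ b := by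
    have := hv 1 le_rfl
    norm_num at this
    linarith
  have hb : 0 < b := ha.trans_le hab
  have hC₁ : min a (a / (4 * b)) ≤ a := min_le_left _ _
  have hC₂ : 2 * b ≤ max (2 * b) (4 * b / a) := le_max_left _ _
  refine ⟨min a (a / (4 * b)), max (2 * b) (4 * b / a), lt_min ha (by positivity),
    by linarith, fun n hn => ?_⟩
  obtain ⟨hv_lo, hv_hi⟩ := hv n (by omega)
  obtain ⟨hlen_lo, hlen_hi⟩ := hlen n hn
  have hvn : 0 ≤ v n := (mul_nonneg ha.le (sq_nonneg _)).trans hv_lo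
  refine ⟨⟨?_, ?_⟩, ⟨?_, ?_⟩, fun α hα => ⟨?_, fun m hm =>
    abs_sub_le_abs_sub_of_mem_Icc_midpoints hmono hn hα hm⟩⟩
  · exact (mul_le_mul_of_nonneg_right hC₁ (sq_nonneg _)).trans hv_lo
  · exact hv_hi.trans (mul_le_mul_of_nonneg_right (by linarith) (sq_nonneg _))
  · exact (mul_le_mul_of_nonneg_right (by linarith) n.cast_nonneg).trans hlen_lo
  · exact hlen_hi.trans (mul_le_mul_of_nonneg_right hC₂ n.cast_nonneg)
  · obtain ⟨h_lo, h_hi⟩ := mul_le_and_le_mul_of_mem_Icc_pred_succ ha hv hn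
      (Icc_midpoints_subset_Icc hmono hn hα)
    exact ⟨(mul_le_mul_of_nonneg_right (min_le_right _ _) hvn).trans h_lo,
      h_hi.trans (mul_le_mul_of_nonneg_right (le_max_right _ _) hvn)⟩

end Midpoints

section TangentPoint

variable {c₁ c₂ a b : ℝ} {A A' : ℝ → ℝ} {u : ℕ → ℝ}

theorem monotoneOn_comp_of_hasDerivWithinAt_nonneg
    (hA : ∀ t ∈ Ici (0 : ℝ), HasDerivWithinAt A (A' t) (Ici 0) t)
    (hA' : ∀ t : ℝ, 0 ≤ t → 0 ≤ A' t) (hu : MonotoneOn u (Ici 1))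
    (hu0 : ∀ n : ℕ, 1 ≤ n → 0 ≤ u n) : MonotoneOn (fun n => A (u n)) (Ici 1) :=
  (monotoneOn_of_hasDerivWithinAt_nonneg (convex_Ici 0)
    (fun x hx => (hA x hx).continuousWithinAt)
    (fun x hx => (hA x (interior_subset hx)).mono interior_subset)
    (fun x hx => hA' x (interior_subset hx))).comp hu (fun n hn => hu0 n hn)

theorem quadratic_bounds_of_linear_bounds
    (hA : ∀ t ∈ Ici (0 : ℝ), HasDerivWithinAt A (A' t) (Ici 0) t) (hA0 : A 0 = 0)
    (hA' : ∀ t : ℝ, 0 ≤ t → c₁ * t ≤ A' t ∧ A' t ≤ c₂ * t) (hc₁ : 0 ≤ c₁) (hc₂ : 0 ≤ c₂)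
    (ha : 0 ≤ a) (hu : ∀ n : ℕ, 1 ≤ n → a * n ≤ u n ∧ u n ≤ b * n) {n : ℕ} (hn : 1 ≤ n) :
    c₁ / 2 * a ^ 2 * n ^ 2 ≤ A (u n) ∧ A (u n) ≤ c₂ / 2 * b ^ 2 * n ^ 2 := by
  obtain ⟨hlo, hhi⟩ := hu n hn
  have hu0 : 0 ≤ u n := (by positivity : 0 ≤ a * n).trans hlo
  have h_lo := half_mul_sq_sub_sq_le_sub hA (fun t ht => (hA' t ht).1) le_rfl hu0
  have h_hi := sub_le_half_mul_sq_sub_sq hA (fun t ht => (hA' t ht).2) le_rfl hu0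
  rw [hA0] at h_lo h_hi
  constructor
  · calc c₁ / 2 * a ^ 2 * n ^ 2 = c₁ / 2 * ((a * n) ^ 2 - 0 ^ 2) := by ring
      _ ≤ c₁ / 2 * (u n ^ 2 - 0 ^ 2) := by gcongr
      _ ≤ A (u n) := by linarith
  · calc A (u n) ≤ c₂ / 2 * (u n ^ 2 - 0 ^ 2) := by linarith
      _ ≤ c₂ / 2 * ((b * n) ^ 2 - 0 ^ 2) := by gcongr
      _ = c₂ / 2 * b ^ 2 * n ^ 2 := by ring

theorem midpoint_sub_midpoint_bounds_of_linear_bounds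
    (hA : ∀ t ∈ Ici (0 : ℝ), HasDerivWithinAt A (A' t) (Ici 0) t)
    (hA' : ∀ t : ℝ, 0 ≤ t → c₁ * t ≤ A' t ∧ A' t ≤ c₂ * t) (hc₁ : 0 ≤ c₁) (hc₂ : 0 ≤ c₂)
    (ha : 0 ≤ a) (hu : ∀ n : ℕ, 1 ≤ n → a * n ≤ u n ∧ u n ≤ b * n)
    (hgap : ∀ n : ℕ, 1 ≤ n → a ≤ u (n + 1) - u n ∧ u (n + 1) - u n ≤ b)
    (hmono : MonotoneOn u (Ici 1)) {n : ℕ} (hn : 2 ≤ n) :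
    2 * (c₁ / 2 * a ^ 2) * n ≤
        (A (u n) + A (u (n + 1))) / 2 - (A (u (n - 1)) + A (u n)) / 2 ∧
      (A (u n) + A (u (n + 1))) / 2 - (A (u (n - 1)) + A (u n)) / 2 ≤
        2 * (c₂ / 2 * b ^ 2) * n := by
  have hu0 : 0 ≤ u (n - 1) :=
    (by positivity : 0 ≤ a * ((n - 1 : ℕ) : ℝ)).trans (hu (n - 1) (by omega)).1
  have hle : u (n - 1) ≤ u (n + 1) :=
    hmono (mem_Ici.2 (by omega)) (mem_Ici.2 (by omega)) (by omega)
  have h_lo := half_mul_sq_sub_sq_le_sub hA (fun t ht => (hA' t ht).1) hu0 hle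
  have h_hi := sub_le_half_mul_sq_sub_sq hA (fun t ht => (hA' t ht).2) hu0 hle
  obtain ⟨hsq_lo, hsq_hi⟩ := sq_sub_sq_mem_Icc ha hu hgap hn
  have hmid : (A (u n) + A (u (n + 1))) / 2 - (A (u (n - 1)) + A (u n)) / 2 =
      (A (u (n + 1)) - A (u (n - 1))) / 2 := by ring
  rw [hmid]
  constructor
  · nlinarith [mul_le_mul_of_nonneg_left hsq_lo hc₁]
  · nlinarith [mul_le_mul_of_nonneg_left hsq_hi hc₂]

end TangentPoint

theorem stmt15_general (c₁ c₂ : ℝ) (hc₁ : 0 < c₁) (hc : c₁ ≤ c₂)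
    (A A' : ℝ → ℝ) (hA0 : A 0 = 0)
    (hderiv : ∀ t ∈ Ici (0 : ℝ), HasDerivWithinAt A (A' t) (Ici 0) t)
    (hA' : ∀ t : ℝ, 0 ≤ t → c₁ * t ≤ A' t ∧ A' t ≤ c₂ * t)
    (u : ℕ → ℝ) (hu1 : c₁ ≤ u 1)
    (hgap : ∀ n : ℕ, 1 ≤ n → c₁ ≤ u (n + 1) - u n ∧ u (n + 1) - u n ≤ c₂) :
    ∃ C₁ C₂ : ℝ, 0 < C₁ ∧ C₁ ≤ C₂ ∧ ∀ n : ℕ, 2 ≤ n →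
      (C₁ * (n : ℝ) ^ 2 ≤ A (u n) ∧ A (u n) ≤ C₂ * (n : ℝ) ^ 2) ∧
      (C₁ * (n : ℝ) ≤ (A (u n) + A (u (n + 1))) / 2 - (A (u (n - 1)) + A (u n)) / 2 ∧
        (A (u n) + A (u (n + 1))) / 2 - (A (u (n - 1)) + A (u n)) / 2 ≤ C₂ * (n : ℝ)) ∧
      ∀ α ∈ Icc ((A (u (n - 1)) + A (u n)) / 2) ((A (u n) + A (u (n + 1))) / 2),
        (C₁ * A (u n) ≤ α ∧ α ≤ C₂ * A (u n)) ∧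
        ∀ m : ℕ, 1 ≤ m → |A (u n) - α| ≤ |A (u m) - α| := by
  set K := max (u 1) c₂
  have hgapK : ∀ n : ℕ, 1 ≤ n → c₁ ≤ u (n + 1) - u n ∧ u (n + 1) - u n ≤ K :=
    fun n hn => ⟨(hgap n hn).1, (hgap n hn).2.trans (le_max_right _ _)⟩
  have hlin : ∀ n : ℕ, 1 ≤ n → c₁ * n ≤ u n ∧ u n ≤ K * n := fun n hn =>
    ⟨mul_le_of_le_sub_succ hu1 (fun k hk => (hgapK k hk).1) hn,
      le_mul_of_sub_succ_le (le_max_left _ _) (fun k hk => (hgapK k hk).2) hn⟩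
  have hu_mono : MonotoneOn u (Ici 1) :=
    monotoneOn_nat_Ici_of_le_succ fun n hn => by linarith [(hgap n hn).1]
  have hc₂ : 0 ≤ c₂ := hc₁.le.trans hc
  exact exists_bounds_of_quadratic_growth (v := fun n => A (u n)) (by positivity)
    (monotoneOn_comp_of_hasDerivWithinAt_nonneg hderiv
      (fun t ht => (mul_nonneg hc₁.le ht).trans (hA' t ht).1) hu_mono
      (fun n hn => (by positivity : 0 ≤ c₁ * n).trans (hlin n hn).1))
    (fun n hn => quadratic_bounds_of_linear_bounds hderiv hA0 hA' hc₁.le hc₂ hc₁.le hlin hn)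
    (fun n hn =>
      midpoint_sub_midpoint_bounds_of_linear_bounds hderiv hA' hc₁.le hc₂ hc₁.le hlin hgapK
        hu_mono hn)

/-- Lemma 8.1 (properties of the intervals `V_n`): with `A(t) ≍ t²` (via `A' (t) ≍ t`,
`A(0) = 0`) and comparably spaced points `u_n` (`u₁ ≥ c₁`, gaps in `[c₁, c₂]`), the images
`v_n = A(u_n)` satisfy `v_n ≍ n²`, the intervals `V_n` between consecutive midpoints have
length `≍ n`, and for `α ∈ V_n` one has `α ≍ v_n` and `v_n` is the closest of the `v_m`. -/
theorem stmt15 (c₁ c₂ : ℝ) (hc₁ : 0 < c₁) (hc : c₁ ≤ c₂)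
    (A A' : ℝ → ℝ) (hA0 : A 0 = 0)
    (hrange : ∀ t : ℝ, 0 ≤ t → 0 ≤ A t)
    (hderiv : ∀ t ∈ Ici (0 : ℝ), HasDerivWithinAt A (A' t) (Ici 0) t)
    (hA' : ∀ t : ℝ, 0 ≤ t → c₁ * t ≤ A' t ∧ A' t ≤ c₂ * t)
    (u : ℕ → ℝ) (hu1 : c₁ ≤ u 1)
    (hgap : ∀ n : ℕ, 1 ≤ n → c₁ ≤ u (n + 1) - u n ∧ u (n + 1) - u n ≤ c₂) :
    ∃ C₁ C₂ : ℝ, 0 < C₁ ∧ C₁ ≤ C₂ ∧ ∀ n : ℕ, 2 ≤ n →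
      (C₁ * (n : ℝ) ^ 2 ≤ A (u n) ∧ A (u n) ≤ C₂ * (n : ℝ) ^ 2) ∧
      (C₁ * (n : ℝ) ≤ (A (u n) + A (u (n + 1))) / 2 - (A (u (n - 1)) + A (u n)) / 2 ∧
        (A (u n) + A (u (n + 1))) / 2 - (A (u (n - 1)) + A (u n)) / 2 ≤ C₂ * (n : ℝ)) ∧
      ∀ α ∈ Icc ((A (u (n - 1)) + A (u n)) / 2) ((A (u n) + A (u (n + 1))) / 2),
        (C₁ * A (u n) ≤ α ∧ α ≤ C₂ * A (u n)) ∧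
        ∀ m : ℕ, 1 ≤ m → |A (u n) - α| ≤ |A (u m) - α| :=
  stmt15_general c₁ c₂ hc₁ hc A A' hA0 hderiv hA' u hu1 hgap
end
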